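/- arXiv:math/9906175 — 6 statements merged into one kernel-verified Lean document; each statement's English description precedes it below -/
import Mathlib

section
/- Let K be a dyadic local field with 2O = p^m. A unit ε ∈ O^× generates the unramified quadratic extension of K upon adjoining its square root if and only if ε is not a square in K and the congruence ε ≡ a^2 (mod p^{2m}) is solvable in O. -/
/-!
Every integral element of `F = K(√ε)` lies in `½(O + O√ε)`, because its trace and norm lie in `O`.
Taking `w = (u₀ + v₀√ε)/2` integral with `v₀` generating the ideal of all second coordinates
`v` that occur, the integral closure is `O ⊕ O w` with `w² = u₀ w + c₀`, `4c₀ = v₀²ε - u₀²`.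
Such a quadratic `O`-algebra is unramified exactly when its discriminant `u₀² + 4c₀ = v₀²ε` is a
unit, i.e. when `v₀` is a unit, which amounts to `ε ≡ a² (mod 4)`; finally `4O = p^(2m)`.
-/

section QuadraticAlgebra

variable {R A : Type*} [CommRing R] [CommRing A] [Algebra R A] {w : A} {a c : R}

theorem Algebra.FormallyUnramified.of_isUnit_two_mul_sub
    (hw : w ^ 2 = algebraMap R A a * w + algebraMap R A c)
    (hrep : ∀ x : A, ∃ d e : R, x = algebraMap R A d + algebraMap R A e * w)
    (hu : IsUnit (2 * w - algebraMap R A a)) : Algebra.FormallyUnramified R A := by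
  have hDw : KaehlerDifferential.D R A w = 0 := by
    refine hu.smul_eq_zero.mp ?_
    have := congrArg (KaehlerDifferential.D R A) hw
    simp only [Derivation.leibniz_pow, map_add, Derivation.leibniz, Derivation.map_algebraMap,
      smul_zero, add_zero, pow_one, Nat.add_one_sub_one] at this
    rw [sub_smul, sub_eq_zero, ← this, mul_smul, two_smul, two_nsmul]
  refine ⟨(subsingleton_iff_forall_eq 0).mpr fun y ↦ ?_⟩
  suffices (⊤ : Submodule A Ω[A⁄R]) ≤ ⊥ from this trivial
  rw [← KaehlerDifferential.span_range_derivation, Submodule.span_le]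
  rintro _ ⟨x, rfl⟩
  obtain ⟨d, e, rfl⟩ := hrep x
  simp [hDw]

theorem Algebra.FormallyUnramified.isUnit_two_mul_sub [Algebra.FormallyUnramified R A]
    (hw : w ^ 2 = algebraMap R A a * w + algebraMap R A c)
    (hrep : ∀ x : A, ∃ d e : R, x = algebraMap R A d + algebraMap R A e * w)
    (huniq : ∀ d e : R, algebraMap R A d + algebraMap R A e * w = 0 → d = 0 ∧ e = 0) :
    IsUnit (2 * w - algebraMap R A a) := by
  by_contra hg
  set I := Ideal.span {2 * w - algebraMap R A a}
  have : Nontrivial (A ⧸ I) :=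
    Ideal.Quotient.nontrivial_iff.mpr (mt Ideal.span_singleton_eq_top.mp hg)
  let coords : R × R →ₗ[R] A :=
    (Algebra.linearMap R A).coprod ((Algebra.linearMap R A).smulRight w)
  have hcoords (p : R × R) : coords p = algebraMap R A p.1 + algebraMap R A p.2 * w := by
    simp [coords]
  have hbij : Function.Bijective coords := by
    refine ⟨(injective_iff_map_eq_zero coords).mpr fun p hp ↦ ?_, fun x ↦ ?_⟩
    · obtain ⟨h1, h2⟩ := huniq p.1 p.2 (by rwa [← hcoords])
      exact Prod.ext h1 h2
    · obtain ⟨d, e, rfl⟩ := hrep x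
      exact ⟨(d, e), hcoords _⟩
  let φ : A →ₗ[R] R := LinearMap.snd R R R ∘ₗ (LinearEquiv.ofBijective coords hbij).symm
  have hφ (d e : R) : φ (algebraMap R A d + algebraMap R A e * w) = e := by
    rw [← hcoords (d, e)]
    simp [φ]
  have hmul (d e d' e' : R) : (algebraMap R A d + algebraMap R A e * w) *
      (algebraMap R A d' + algebraMap R A e' * w) = algebraMap R A (d * d' + e * e' * c) +
        algebraMap R A (d * e' + d' * e + e * e' * a) * w := by
    simp only [map_add, map_mul]
    linear_combination (algebraMap R A e * algebraMap R A e') * hw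
  -- `d + e w ↦ e` satisfies the Leibniz rule modulo `2 w - a`, the derivative of `X² - a X - c`.
  let D : Derivation R A (A ⧸ I) :=
    { toLinearMap := Algebra.linearMap R (A ⧸ I) ∘ₗ φ
      map_one_eq_zero' := by
        simpa using congrArg (algebraMap R (A ⧸ I)) (hφ 1 0)
      leibniz' := by
        intro x y
        obtain ⟨d, e, rfl⟩ := hrep x
        obtain ⟨d', e', rfl⟩ := hrep y
        simp only [LinearMap.coe_comp, Function.comp_apply, Algebra.linearMap_apply, hmul, hφ,
          Algebra.smul_def, Ideal.Quotient.algebraMap_eq, ← Ideal.Quotient.mk_algebraMap,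
          ← map_mul, ← map_add, Ideal.Quotient.eq, I, Ideal.mem_span_singleton]
        exact ⟨-(algebraMap R A e * algebraMap R A e'), by simp only [map_add, map_mul]; ring⟩ }
  have hDw : D w = 1 := by
    change algebraMap R (A ⧸ I) (φ w) = 1
    simpa using congrArg (algebraMap R (A ⧸ I)) (hφ 0 1)
  have hDw' : D w = 0 := by
    rw [← D.liftKaehlerDifferential_comp_D, Subsingleton.elim (KaehlerDifferential.D R A w) 0,
      map_zero]
  exact one_ne_zero (hDw.symm.trans hDw')

theorem isUnit_of_isUnit_algebraMap_of_add_mul_eq_zero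
    (hrep : ∀ x : A, ∃ d e : R, x = algebraMap R A d + algebraMap R A e * w)
    (huniq : ∀ d e : R, algebraMap R A d + algebraMap R A e * w = 0 → d = 0 ∧ e = 0) {r : R}
    (hr : IsUnit (algebraMap R A r)) : IsUnit r := by
  obtain ⟨y, hy⟩ := isUnit_iff_exists_inv.mp hr
  obtain ⟨d, e, rfl⟩ := hrep y
  refine IsUnit.of_mul_eq_one d (sub_eq_zero.mp (huniq (r * d - 1) (r * e) ?_).1)
  simp only [map_sub, map_mul, map_one]
  linear_combination hy

theorem Algebra.formallyUnramified_iff_isUnit_discr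
    (hw : w ^ 2 = algebraMap R A a * w + algebraMap R A c)
    (hrep : ∀ x : A, ∃ d e : R, x = algebraMap R A d + algebraMap R A e * w)
    (huniq : ∀ d e : R, algebraMap R A d + algebraMap R A e * w = 0 → d = 0 ∧ e = 0) :
    Algebra.FormallyUnramified R A ↔ IsUnit (a ^ 2 + 4 * c) := by
  have hsq : (2 * w - algebraMap R A a) ^ 2 = algebraMap R A (a ^ 2 + 4 * c) := by
    simp only [map_add, map_mul, map_pow, map_ofNat]
    linear_combination 4 * hw
  constructor
  · intro _
    refine isUnit_of_isUnit_algebraMap_of_add_mul_eq_zero hrep huniq ?_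
    rw [← hsq]
    exact (Algebra.FormallyUnramified.isUnit_two_mul_sub hw hrep huniq).pow 2
  · intro h
    refine .of_isUnit_two_mul_sub hw hrep ((isUnit_pow_iff two_ne_zero).mp ?_)
    rw [hsq]
    exact h.map _

end QuadraticAlgebra

theorem Submodule.exists_mem_forall_snd_dvd {R : Type*} [CommRing R] [IsPrincipalIdealRing R]
    (N : Submodule R (R × R)) : ∃ p ∈ N, ∀ q ∈ N, p.2 ∣ q.2 := by
  let I : Ideal R := N.map (LinearMap.snd R R R)
  obtain ⟨p, hp, hp2⟩ := Submodule.mem_map.mp (Submodule.IsPrincipal.generator_mem I)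
  refine ⟨p, hp, fun q hq ↦ ?_⟩
  rw [LinearMap.snd_apply] at hp2
  rw [hp2, ← Submodule.IsPrincipal.mem_iff_generator_dvd]
  exact Submodule.mem_map_of_mem hq

theorem exists_isIntegral_half_forall_dvd {O F : Type*} [CommRing O] [IsPrincipalIdealRing O]
    [Field F] [Algebra O F] (s : F) :
    ∃ u₀ v₀ : O, IsIntegral O ((algebraMap O F u₀ + algebraMap O F v₀ * s) / 2) ∧
      ∀ u v : O, IsIntegral O ((algebraMap O F u + algebraMap O F v * s) / 2) → v₀ ∣ v := by
  let f : O × O →ₗ[O] F := ((Algebra.linearMap O F).smulRight (2⁻¹ : F)).coprod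
    ((Algebra.linearMap O F).smulRight (s / 2))
  have hf (p : O × O) : f p = (algebraMap O F p.1 + algebraMap O F p.2 * s) / 2 := by
    simp only [f, LinearMap.coprod_apply, LinearMap.coe_smulRight, Algebra.linearMap_apply,
      smul_eq_mul]
    ring
  obtain ⟨⟨u₀, v₀⟩, hp, hmin⟩ :=
    ((integralClosure O F).toSubmodule.comap f).exists_mem_forall_snd_dvd
  exact ⟨u₀, v₀, by simpa [hf, mem_integralClosure_iff] using hp,
    fun u v h ↦ hmin (u, v) (by simpa [hf, mem_integralClosure_iff] using h)⟩

section SquareRoot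

variable {K F : Type*} [Field K] [Field F] [Algebra K F] {s : F} {e : K}

theorem exists_eq_add_mul_of_adjoin_eq_top (hs : s ^ 2 = algebraMap K F e)
    (hgen : Algebra.adjoin K {s} = ⊤) (x : F) :
    ∃ α β : K, x = algebraMap K F α + algebraMap K F β * s := by
  have hx : x ∈ Algebra.adjoin K {s} := hgen ▸ Algebra.mem_top
  induction hx using Algebra.adjoin_induction with
  | mem x hx => exact ⟨0, 1, by rw [Set.mem_singleton_iff.mp hx]; simp⟩
  | algebraMap r => exact ⟨r, 0, by simp⟩
  | add x y _ _ hx hy =>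
    obtain ⟨α, β, rfl⟩ := hx
    obtain ⟨α', β', rfl⟩ := hy
    exact ⟨α + α', β + β', by simp only [map_add]; ring⟩
  | mul x y _ _ hx hy =>
    obtain ⟨α, β, rfl⟩ := hx
    obtain ⟨α', β', rfl⟩ := hy
    refine ⟨α * α' + β * β' * e, α * β' + α' * β, ?_⟩
    simp only [map_add, map_mul]
    linear_combination (algebraMap K F β * algebraMap K F β') * hs

theorem eq_zero_of_add_mul_eq_zero (hsK : s ∉ (algebraMap K F).range) {α β : K}
    (h : algebraMap K F α + algebraMap K F β * s = 0) : α = 0 ∧ β = 0 := by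
  have hβ : β = 0 := by
    by_contra hβ
    refine hsK ⟨-α / β, ?_⟩
    rw [map_div₀, map_neg, div_eq_iff (by simpa using hβ)]
    linear_combination -h
  subst hβ
  simpa using h

theorem mem_range_iff_exists_sq (hs : s ^ 2 = algebraMap K F e) :
    s ∈ (algebraMap K F).range ↔ ∃ b : K, b ^ 2 = e := by
  constructor
  · rintro ⟨b, rfl⟩
    exact ⟨b, (algebraMap K F).injective (by rw [map_pow, hs])⟩
  · rintro ⟨b, rfl⟩
    have : (s - algebraMap K F b) * (s + algebraMap K F b) = 0 := by
      rw [map_pow] at hs; linear_combination hs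
    rcases mul_eq_zero.mp this with h | h
    · exact ⟨b, by linear_combination -h⟩
    · exact ⟨-b, by rw [map_neg]; linear_combination -h⟩

open Polynomial in
theorem minpoly_eq_of_sq_eq {x : F} (hx : x ∉ (algebraMap K F).range) {t n : K}
    (h : x ^ 2 = algebraMap K F t * x + algebraMap K F n) :
    minpoly K x = X ^ 2 - C t * X - C n := by
  have hq : (X ^ 2 - C t * X - C n : K[X]).Monic := by
    monicity!
  have hqx : aeval x (X ^ 2 - C t * X - C n) = 0 := by
    simp [h]
  refine (Polynomial.eq_of_monic_of_dvd_of_natDegree_le (minpoly.monic ⟨_, hq, hqx⟩) hq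
    (minpoly.dvd K x hqx) ?_).symm
  rw [← minpoly.two_le_natDegree_iff ⟨_, hq, hqx⟩] at hx
  refine le_trans ?_ hx
  compute_degree

open Polynomial in
theorem finrank_eq_two_iff (hs : s ^ 2 = algebraMap K F e) (hgen : Algebra.adjoin K {s} = ⊤) :
    Module.finrank K F = 2 ↔ s ∉ (algebraMap K F).range := by
  have hint : IsIntegral K s := ⟨X ^ 2 - C e, monic_X_pow_sub_C e two_ne_zero, by simp [hs]⟩
  rw [(PowerBasis.ofAdjoinEqTop hint hgen).finrank, PowerBasis.ofAdjoinEqTop_dim]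
  by_cases hsK : s ∈ (algebraMap K F).range
  · simp [hsK, (minpoly.natDegree_eq_one_iff).mpr hsK]
  · rw [minpoly_eq_of_sq_eq hsK (t := 0) (n := e) (by simp [hs])]
    simp only [hsK, not_false_eq_true, iff_true]
    compute_degree!

end SquareRoot

theorem sq_half_eq {O F : Type*} [CommRing O] [Field F] [Algebra O F] [NeZero (2 : F)] {s : F}
    {ε : O} (hs : s ^ 2 = algebraMap O F ε) (u v : O) :
    ((algebraMap O F u + algebraMap O F v * s) / 2) ^ 2 =
      algebraMap O F u * ((algebraMap O F u + algebraMap O F v * s) / 2) +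
        algebraMap O F (v ^ 2 * ε - u ^ 2) / 4 := by
  have h4 : (4 : F) = 2 * 2 := by norm_num
  simp only [map_sub, map_mul, map_pow, h4]
  field_simp
  linear_combination algebraMap O F v ^ 2 * hs

open Polynomial in
theorem isIntegral_half_iff {O F : Type*} (K : Type*) [CommRing O] [IsIntegrallyClosed O]
    [Field K] [Algebra O K] [IsFractionRing O K] [Field F] [Algebra K F] [Algebra O F]
    [IsScalarTower O K F] [NeZero (2 : F)] {s : F} {ε : O}
    (hs : s ^ 2 = algebraMap O F ε) (u v : O) :
    IsIntegral O ((algebraMap O F u + algebraMap O F v * s) / 2) ↔ 4 ∣ v ^ 2 * ε - u ^ 2 := by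
  have h4 : (4 : F) ≠ 0 := by simpa [show (4 : F) = 2 * 2 by norm_num] using two_ne_zero
  have hsq := sq_half_eq hs u v
  set w := (algebraMap O F u + algebraMap O F v * s) / 2
  constructor
  · intro hint
    have hnorm : w ^ 2 - algebraMap O F u * w =
        algebraMap K F (algebraMap O K (v ^ 2 * ε - u ^ 2) / 4) := by
      rw [map_div₀, ← IsScalarTower.algebraMap_apply, map_ofNat, hsq, add_sub_cancel_left]
    have hint' : IsIntegral O (w ^ 2 - algebraMap O F u * w) :=
      (hint.pow 2).sub (isIntegral_algebraMap.mul hint)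
    rw [hnorm, isIntegral_algebraMap_iff (algebraMap K F).injective,
      IsIntegrallyClosed.isIntegral_iff] at hint'
    obtain ⟨c, hc⟩ := hint'
    refine ⟨c, IsFractionRing.injective O K ?_⟩
    rw [map_mul, hc, map_ofNat, mul_div_cancel₀]
    intro h
    exact h4 (by rw [← map_ofNat (algebraMap K F) 4, h, map_zero])
  · rintro ⟨c, hc⟩
    refine ⟨X ^ 2 - C u * X - C c, by monicity!, ?_⟩
    rw [hc, map_mul, map_ofNat, mul_div_cancel_left₀ _ h4] at hsq
    simp only [eval₂_sub, eval₂_X_pow, eval₂_mul, eval₂_C, eval₂_X]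
    linear_combination hsq

section IntegralClosure

variable {O K F : Type*} [CommRing O] [Field K] [Algebra O K] [IsFractionRing O K]
  [Field F] [Algebra K F] [Algebra O F] [IsScalarTower O K F]

theorem eq_zero_of_add_mul_half_eq_zero [IsDomain O] [NeZero (2 : F)] {s : F}
    (hsK : s ∉ (algebraMap K F).range) {u₀ v₀ : O} (hv₀ : v₀ ≠ 0) {d e : O}
    (h : algebraMap O F d +
      algebraMap O F e * ((algebraMap O F u₀ + algebraMap O F v₀ * s) / 2) = 0) :
    d = 0 ∧ e = 0 := by
  have h' : algebraMap K F (algebraMap O K (2 * d + e * u₀)) +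
      algebraMap K F (algebraMap O K (e * v₀)) * s = 0 := by
    simp only [← IsScalarTower.algebraMap_apply, map_add, map_mul, map_ofNat]
    field_simp at h
    linear_combination h
  obtain ⟨h1, h2⟩ := eq_zero_of_add_mul_eq_zero hsK h'
  rw [IsFractionRing.to_map_eq_zero_iff] at h1 h2
  obtain rfl : e = 0 := (mul_eq_zero.mp h2).resolve_right hv₀
  refine ⟨(mul_eq_zero.mp (by simpa using h1)).resolve_left fun h2O ↦ ?_, rfl⟩
  exact two_ne_zero (α := F) (by rw [← map_ofNat (algebraMap O F) 2, h2O, map_zero])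

variable [IsDomain O] [IsIntegrallyClosed O]

theorem mem_range_of_isIntegral_of_sq_eq {x : F} (hx : x ∉ (algebraMap K F).range) {t n : K}
    (h : x ^ 2 = algebraMap K F t * x + algebraMap K F n) (hint : IsIntegral O x) :
    t ∈ (algebraMap O K).range ∧ n ∈ (algebraMap O K).range := by
  have hmin := minpoly.isIntegrallyClosed_eq_field_fractions' K hint
  rw [minpoly_eq_of_sq_eq hx h] at hmin
  have h1 : -t = algebraMap O K ((minpoly O x).coeff 1) := by
    simpa using congrArg (Polynomial.coeff · 1) hmin
  have h0 : -n = algebraMap O K ((minpoly O x).coeff 0) := by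
    simpa using congrArg (Polynomial.coeff · 0) hmin
  exact ⟨⟨_, by rw [map_neg, ← h1, neg_neg]⟩, ⟨_, by rw [map_neg, ← h0, neg_neg]⟩⟩

theorem two_mul_mem_range_of_isIntegral {s : F} {ε : O} (hε : IsUnit ε)
    (hs : s ^ 2 = algebraMap O F ε) (hsK : s ∉ (algebraMap K F).range) {α β : K}
    (hint : IsIntegral O (algebraMap K F α + algebraMap K F β * s)) :
    2 * α ∈ (algebraMap O K).range ∧ 2 * β ∈ (algebraMap O K).range := by
  rcases eq_or_ne β 0 with rfl | hβ
  · rw [map_zero, zero_mul, add_zero, isIntegral_algebraMap_iff (algebraMap K F).injective,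
      IsIntegrallyClosed.isIntegral_iff] at hint
    obtain ⟨a, ha⟩ := hint
    exact ⟨⟨2 * a, by rw [map_mul, ha, map_ofNat]⟩, ⟨0, by simp⟩⟩
  have hx : algebraMap K F α + algebraMap K F β * s ∉ (algebraMap K F).range := by
    rintro ⟨γ, hγ⟩
    refine hβ (eq_zero_of_add_mul_eq_zero hsK (α := α - γ) ?_).2
    rw [map_sub]
    linear_combination -hγ
  have hs' : s ^ 2 = algebraMap K F (algebraMap O K ε) := by
    rw [hs, IsScalarTower.algebraMap_apply O K F]
  -- `2α` and `β²ε - α²` are the trace and minus the norm of `α + βs`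
  obtain ⟨⟨t, ht⟩, ⟨n, hn⟩⟩ := mem_range_of_isIntegral_of_sq_eq hx (t := 2 * α)
    (n := β ^ 2 * algebraMap O K ε - α ^ 2) (by
      simp only [map_mul, map_sub, map_pow, map_ofNat]
      linear_combination (algebraMap K F β) ^ 2 * hs') hint
  refine ⟨⟨t, ht⟩, IsIntegrallyClosed.isIntegral_iff.mp (IsIntegral.of_pow two_pos ?_)⟩
  obtain ⟨ε', hε'⟩ := hε.exists_right_inv
  have hsq : (2 * β) ^ 2 = algebraMap O K ((t ^ 2 + 4 * n) * ε') := by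
    have := congrArg (algebraMap O K) hε'
    simp only [map_mul, map_add, map_pow, map_ofNat, map_one, ht, hn] at this ⊢
    linear_combination (-(4 * β ^ 2)) * this
  rw [hsq]
  exact isIntegral_algebraMap

theorem exists_eq_add_mul_half_of_isIntegral [NeZero (2 : F)] {s : F} {ε : O} (hε : IsUnit ε)
    (hs : s ^ 2 = algebraMap O F ε) (hgen : Algebra.adjoin K {s} = ⊤)
    (hsK : s ∉ (algebraMap K F).range) {u₀ v₀ : O}
    (hw : IsIntegral O ((algebraMap O F u₀ + algebraMap O F v₀ * s) / 2))
    (hmin : ∀ u v : O, IsIntegral O ((algebraMap O F u + algebraMap O F v * s) / 2) → v₀ ∣ v)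
    {x : F} (hx : IsIntegral O x) : ∃ d e : O, x =
      algebraMap O F d + algebraMap O F e * ((algebraMap O F u₀ + algebraMap O F v₀ * s) / 2) := by
  have hs' : s ^ 2 = algebraMap K F (algebraMap O K ε) := by
    rw [hs, IsScalarTower.algebraMap_apply O K F]
  obtain ⟨α, β, rfl⟩ := exists_eq_add_mul_of_adjoin_eq_top hs' hgen x
  obtain ⟨⟨u, hu⟩, ⟨v, hv⟩⟩ := two_mul_mem_range_of_isIntegral hε hs hsK hx
  have hx' : algebraMap K F α + algebraMap K F β * s =
      (algebraMap O F u + algebraMap O F v * s) / 2 := by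
    simp only [IsScalarTower.algebraMap_apply O K F, hu, hv, map_mul, map_ofNat]
    field_simp
  rw [hx'] at hx ⊢
  obtain ⟨e, rfl⟩ := hmin u v hx
  have hd : (algebraMap O F u + algebraMap O F (v₀ * e) * s) / 2 -
      algebraMap O F e * ((algebraMap O F u₀ + algebraMap O F v₀ * s) / 2) =
      algebraMap K F (algebraMap O K (u - e * u₀) / 2) := by
    simp only [map_div₀, map_sub, map_mul, map_ofNat, ← IsScalarTower.algebraMap_apply]
    ring
  have hdint := hx.sub ((isIntegral_algebraMap (x := e)).mul hw)
  rw [hd, isIntegral_algebraMap_iff (algebraMap K F).injective,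
    IsIntegrallyClosed.isIntegral_iff] at hdint
  obtain ⟨d, hd'⟩ := hdint
  refine ⟨d, e, eq_add_of_sub_eq ?_⟩
  rw [hd, IsScalarTower.algebraMap_apply O K F, hd']

theorem formallyUnramified_integralClosure_iff [IsPrincipalIdealRing O] [NeZero (2 : F)] {s : F}
    {ε : O} (hε : IsUnit ε) (hs : s ^ 2 = algebraMap O F ε) (hgen : Algebra.adjoin K {s} = ⊤)
    (hsK : s ∉ (algebraMap K F).range) :
    Algebra.FormallyUnramified O (integralClosure O F) ↔ ∃ a : O, 4 ∣ ε - a ^ 2 := by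
  obtain ⟨u₀, v₀, hw, hmin⟩ := exists_isIntegral_half_forall_dvd (O := O) s
  obtain ⟨c₀, hc₀⟩ := (isIntegral_half_iff K hs u₀ v₀).mp hw
  have hv₀ : v₀ ≠ 0 := by
    rintro rfl
    have h2 := zero_dvd_iff.mp (hmin 0 2 ((isIntegral_half_iff K hs 0 2).mpr ⟨ε, by ring⟩))
    exact two_ne_zero (α := F) (by rw [← map_ofNat (algebraMap O F) 2, h2, map_zero])
  let w : integralClosure O F := ⟨_, hw⟩
  have hw2 : w ^ 2 = algebraMap O _ u₀ * w + algebraMap O _ c₀ := by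
    have := sq_half_eq hs u₀ v₀
    have h4 : (4 : F) ≠ 0 := by simpa [show (4 : F) = 2 * 2 by norm_num] using two_ne_zero
    rw [hc₀, map_mul, map_ofNat, mul_div_cancel_left₀ _ h4] at this
    exact Subtype.ext this
  have hrep (x : integralClosure O F) :
      ∃ d e : O, x = algebraMap O _ d + algebraMap O _ e * w := by
    obtain ⟨d, e, h⟩ := exists_eq_add_mul_half_of_isIntegral hε hs hgen hsK hw hmin x.2
    exact ⟨d, e, Subtype.ext h⟩
  have huniq (d e : O) (h : algebraMap O (integralClosure O F) d + algebraMap O _ e * w = 0) :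
      d = 0 ∧ e = 0 :=
    eq_zero_of_add_mul_half_eq_zero hsK hv₀ (congrArg Subtype.val h)
  rw [Algebra.formallyUnramified_iff_isUnit_discr hw2 hrep huniq,
    show u₀ ^ 2 + 4 * c₀ = v₀ ^ 2 * ε by linear_combination -hc₀, IsUnit.mul_iff,
    isUnit_pow_iff two_ne_zero, and_iff_left hε]
  constructor
  · rintro ⟨V, rfl⟩
    exact ⟨u₀ * ↑V⁻¹, c₀ * ↑V⁻¹ ^ 2, by
      linear_combination (↑V⁻¹ : O) ^ 2 * hc₀ - ε * (↑V * ↑V⁻¹ + 1 : O) * V.mul_inv⟩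
  · rintro ⟨a, c, hc⟩
    refine isUnit_of_dvd_one (hmin a 1 ((isIntegral_half_iff K hs a 1).mpr ⟨c, ?_⟩))
    linear_combination hc

end IntegralClosure

theorem sqrt_unit_unramified_iff_general
    (O : Type*) [CommRing O] [IsDomain O] [IsDiscreteValuationRing O]
    (K : Type*) [Field K] [Algebra O K] [IsFractionRing O K] [CharZero K]
    (m : ℕ)
    (hm : Ideal.span {(2 : O)} = (IsLocalRing.maximalIdeal O) ^ m)
    (F : Type*) [Field F] [Algebra K F] [Algebra O F] [IsScalarTower O K F]
    (ε : Oˣ) (s : F) (hs : s ^ 2 = algebraMap O F (ε : O))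
    (hgen : Algebra.adjoin K {s} = ⊤) :
    (Module.finrank K F = 2 ∧ Algebra.FormallyUnramified O (integralClosure O F)) ↔
      ((¬ ∃ b : K, b ^ 2 = algebraMap O K (ε : O)) ∧
        ∃ a : O, (ε : O) - a ^ 2 ∈ (IsLocalRing.maximalIdeal O) ^ (2 * m)) := by
  have : NeZero (2 : F) := by
    have := NeZero.of_injective (a := (2 : K)) (algebraMap K F).injective
    rwa [map_ofNat] at this
  have hs' : s ^ 2 = algebraMap K F (algebraMap O K ε) := by
    rw [hs, IsScalarTower.algebraMap_apply O K F]
  have h4 : IsLocalRing.maximalIdeal O ^ (2 * m) = Ideal.span {4} := by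
    rw [mul_comm, pow_mul, ← hm, Ideal.span_singleton_pow]
    norm_num
  simp_rw [h4, Ideal.mem_span_singleton, finrank_eq_two_iff hs' hgen,
    ← mem_range_iff_exists_sq hs']
  exact and_congr_right fun hsK ↦ formallyUnramified_integralClosure_iff ε.isUnit hs hgen hsK

/-- Let `K` be a dyadic local field with `2O = p^m`.  A unit `ε ∈ O^×`
generates the unramified quadratic extension of `K` upon adjoining its square root if and
only if `ε` is not a square in `K` and the congruence `ε ≡ a^2 (mod p^(2m))` is solvable
in `O`.  Here the extension `F = K(√ε)` being unramified quadratic is expressed as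
`[F : K] = 2` together with formal unramifiedness of the extension of integer rings. -/
theorem sqrt_unit_unramified_iff
    (O : Type*) [CommRing O] [IsDomain O] [IsDiscreteValuationRing O]
    [IsAdicComplete (IsLocalRing.maximalIdeal O) O]
    (K : Type*) [Field K] [Algebra O K] [IsFractionRing O K] [CharZero K]
    (m : ℕ) (hm1 : 1 ≤ m)
    (hm : Ideal.span {(2 : O)} = (IsLocalRing.maximalIdeal O) ^ m)
    (F : Type*) [Field F] [Algebra K F] [Algebra O F] [IsScalarTower O K F]
    (ε : Oˣ) (s : F) (hs : s ^ 2 = algebraMap O F (ε : O))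
    (hgen : Algebra.adjoin K {s} = ⊤) :
    (Module.finrank K F = 2 ∧ Algebra.FormallyUnramified O (integralClosure O F)) ↔
      ((¬ ∃ b : K, b ^ 2 = algebraMap O K (ε : O)) ∧
        ∃ a : O, (ε : O) - a ^ 2 ∈ (IsLocalRing.maximalIdeal O) ^ (2 * m)) :=
  sqrt_unit_unramified_iff_general O K m hm F ε s hs hgen
end

section
/- Let F/K be a ramified quadratic extension of dyadic local fields with relative discriminant Δ_{F/K} = p^{δ_F}, and let ℓ_F = ⌊(δ_F+1)/2⌋. If x ∈ F is an element of valuation 1 (a uniformizer of F), then Tr_{F/K}(x) ∈ p^{ℓ_F}; moreover, if ℓ_F ≤ m (where 2O_K = p^m), then ord_K(Tr_{F/K}(x)) = ℓ_F exactly. -/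
/-!
Write `v` for normalized valuations. As `F/K` is ramified quadratic, `v_F = 2 v_K` on `K`. The
uniformizer `x` satisfies `x² = t x - n`, so `n = x (t - x)`: if `t` were a unit, `v_F(n) = 1`
would be odd, hence `v_F(t) ≥ 2 > v_F(x)` and `v_K(n) = 1`. Then `v(t²) = 2 v(t)` is even and
`v(4n) = 2m + 1` is odd, so `δ = min (2 v(t)) (2m + 1)` and `ℓ = min (v(t)) (m + 1)`.
-/

open Polynomial in
theorem Algebra.sq_eq_trace_mul_sub_norm {R S : Type*} [CommRing R] [Nontrivial R] [CommRing S]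
    [Algebra R S] [Module.Free R S] (h : Module.finrank R S = 2) (s : S) :
    s ^ 2 = algebraMap R S (Algebra.trace R S s) * s - algebraMap R S (Algebra.norm R s) := by
  have : Module.Finite R S := Module.finite_of_finrank_pos (by omega)
  let b := Module.finBasisOfFinrankEq R S h
  have hchar : (Algebra.lmul R S s).charpoly =
      X ^ 2 - C (Algebra.trace R S s) * X + C (Algebra.norm R s) := by
    rw [← LinearMap.charpoly_toMatrix _ b, Matrix.charpoly_fin_two,
      Algebra.trace_eq_matrix_trace b, Algebra.norm_eq_matrix_det b]
    rfl
  have hCH := Algebra.aeval_self_charpoly_lmul (R := R) s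
  rw [hchar] at hCH
  simp only [map_add, map_sub, map_mul, map_pow, aeval_X, aeval_C] at hCH
  linear_combination hCH

namespace IsDiscreteValuationRing

variable {R : Type*} [CommRing R] [IsDomain R] [IsDiscreteValuationRing R]

theorem addVal_eq_of_span_eq_maximalIdeal_pow {a : R} {k : ℕ}
    (h : Ideal.span {a} = IsLocalRing.maximalIdeal R ^ k) : addVal R a = k := by
  obtain ⟨ϖ, hϖ⟩ := exists_irreducible R
  rw [hϖ.maximalIdeal_eq, Ideal.span_singleton_pow, Ideal.span_singleton_eq_span_singleton] at h
  rw [← hϖ.addVal_pow k, addVal_eq_iff_associated]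
  exact h

theorem mem_maximalIdeal_pow_iff_le_addVal {a : R} {k : ℕ} :
    a ∈ IsLocalRing.maximalIdeal R ^ k ↔ (k : ℕ∞) ≤ addVal R a := by
  obtain ⟨ϖ, hϖ⟩ := exists_irreducible R
  rw [hϖ.maximalIdeal_eq, Ideal.span_singleton_pow, Ideal.mem_span_singleton,
    ← addVal_le_iff_dvd, hϖ.addVal_pow]

theorem addVal_map_eq_mul_of_map_maximalIdeal_eq_pow {S : Type*} [CommRing S] [IsDomain S]
    [IsDiscreteValuationRing S] {f : R →+* S} {e : ℕ} (he : e ≠ 0)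
    (h : (IsLocalRing.maximalIdeal R).map f = IsLocalRing.maximalIdeal S ^ e) (a : R) :
    addVal S (f a) = e * addVal R a := by
  obtain ⟨ϖ, hϖ⟩ := exists_irreducible R
  have hfϖ : addVal S (f ϖ) = e := by
    apply addVal_eq_of_span_eq_maximalIdeal_pow
    rw [← h, hϖ.maximalIdeal_eq, Ideal.map_span, Set.image_singleton]
  rcases eq_or_ne a 0 with rfl | ha
  · simp [ENat.mul_top (Nat.cast_ne_zero.mpr he)]
  obtain ⟨k, u, rfl⟩ := eq_unit_mul_pow_irreducible ha hϖ
  rw [map_mul, map_pow, addVal_mul, addVal_mul, addVal_pow, hfϖ, hϖ.addVal_pow,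
    addVal_eq_zero_iff.mpr (u.isUnit.map f), addVal_eq_zero_of_unit]
  simp [mul_comm]

theorem addVal_eq_one_of_uniformizer_sq_eq {S : Type*} [CommRing S] [IsDomain S]
    [IsDiscreteValuationRing S] {f : R →+* S} (hf : ∀ a, addVal S (f a) = 2 * addVal R a)
    {x : S} (hx : Irreducible x) {t n : R} (h : x ^ 2 = f t * x - f n) :
    addVal R n = 1 := by
  have hx1 : addVal S x = 1 := addVal_uniformizer hx
  have hval : 2 * addVal R n = 1 + addVal S (f t - x) := by
    rw [← hf, ← hx1, ← addVal_mul]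
    congr 1
    linear_combination h
  rcases eq_or_ne (addVal R t) 0 with ht | ht
  · rw [(addVal S).map_sub_eq_of_lt_left (by simp [hf, ht, hx1]), hf, ht] at hval
    generalize addVal R n = e at hval
    induction e using ENat.recTopCoe <;> norm_cast at hval
    omega
  · have hlt : addVal S x < addVal S (f t) := by
      rw [hx1, hf]
      generalize addVal R t = e at ht ⊢
      induction e using ENat.recTopCoe <;> norm_cast at ht ⊢
      omega
    rw [(addVal S).map_sub_eq_of_lt_right hlt, hx1] at hval
    generalize addVal R n = e at hval ⊢
    induction e using ENat.recTopCoe <;> norm_cast at hval ⊢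
    omega

theorem addVal_sq_sub_four_mul_eq_min {m : ℕ} (h2 : addVal R 2 = m) {n : R} (hn : addVal R n = 1)
    (t : R) : addVal R (t ^ 2 - 4 * n) = min (2 * addVal R t) (2 * m + 1) := by
  have h4n : addVal R (4 * n) = 2 * m + 1 := by
    rw [show (4 : R) * n = 2 * 2 * n by ring, addVal_mul, addVal_mul, h2, hn]
    ring
  have ht2 : addVal R (t ^ 2) = 2 * addVal R t := by
    rw [addVal_pow]; simp
  have hne : addVal R (t ^ 2) ≠ addVal R (4 * n) := by
    rw [ht2, h4n]
    generalize addVal R t = e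
    induction e using ENat.recTopCoe with
    | top => simpa using ENat.top_ne_natCast (2 * m + 1)
    | coe a => norm_cast; omega
  rw [← h4n, ← ht2]
  rcases hne.lt_or_gt with hlt | hlt
  · rw [(addVal R).map_sub_eq_of_lt_left hlt, min_eq_left hlt.le]
  · rw [(addVal R).map_sub_eq_of_lt_right hlt, min_eq_right hlt.le]

end IsDiscreteValuationRing

theorem ENat.succ_div_two_le_of_eq_min_two_mul {e : ℕ∞} {m δ : ℕ}
    (h : (δ : ℕ∞) = min (2 * e) (2 * m + 1)) :
    (((δ + 1) / 2 : ℕ) : ℕ∞) ≤ e ∧ ((δ + 1) / 2 ≤ m → ¬ (((δ + 1) / 2 + 1 : ℕ) : ℕ∞) ≤ e) := by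
  induction e using ENat.recTopCoe with
  | top =>
    rw [ENat.mul_top two_ne_zero, min_eq_right le_top] at h
    norm_cast at h
    exact ⟨le_top, fun hle => absurd hle (by omega)⟩
  | coe a =>
    norm_cast at h ⊢
    rw [← Nat.mono_cast.map_min, Nat.cast_inj] at h
    omega

open IsDiscreteValuationRing in
theorem trace_of_uniformizer_mem_general
    (O : Type*) [CommRing O] [IsDomain O] [IsDiscreteValuationRing O]
    (K : Type*) [Field K] [Algebra O K]
    (m : ℕ)
    (hm : Ideal.span {(2 : O)} = (IsLocalRing.maximalIdeal O) ^ m)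
    (F : Type*) [Field F] [Algebra K F] [Algebra O F] [IsScalarTower O K F]
    (hquad : Module.finrank K F = 2)
    [IsDiscreteValuationRing ↥(integralClosure O F)]
    (hram : (IsLocalRing.maximalIdeal O).map (algebraMap O ↥(integralClosure O F)) =
      (IsLocalRing.maximalIdeal ↥(integralClosure O F)) ^ 2)
    (x : ↥(integralClosure O F)) (hx : Irreducible x)
    (t n : O)
    (ht : algebraMap O K t = Algebra.trace K F (x : F))
    (hn : algebraMap O K n = Algebra.norm K (x : F))
    (δ ℓ : ℕ) (hδ : Ideal.span {t ^ 2 - 4 * n} = (IsLocalRing.maximalIdeal O) ^ δ)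
    (hℓ : ℓ = (δ + 1) / 2) :
    t ∈ (IsLocalRing.maximalIdeal O) ^ ℓ ∧
      (ℓ ≤ m → t ∉ (IsLocalRing.maximalIdeal O) ^ (ℓ + 1)) := by
  have hrel : x ^ 2 = algebraMap O _ t * x - algebraMap O _ n := by
    apply Subtype.ext
    push_cast
    rw [IsScalarTower.algebraMap_apply O K F, IsScalarTower.algebraMap_apply O K F, ht, hn]
    exact Algebra.sq_eq_trace_mul_sub_norm hquad (x : F)
  have hn1 := addVal_eq_one_of_uniformizer_sq_eq
    (addVal_map_eq_mul_of_map_maximalIdeal_eq_pow two_ne_zero hram) hx hrel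
  have hdisc := addVal_sq_sub_four_mul_eq_min (addVal_eq_of_span_eq_maximalIdeal_pow hm) hn1 t
  rw [addVal_eq_of_span_eq_maximalIdeal_pow hδ] at hdisc
  simp only [mem_maximalIdeal_pow_iff_le_addVal, hℓ]
  exact_mod_cast ENat.succ_div_two_le_of_eq_min_two_mul hdisc

/-- Let `F/K` be a ramified quadratic extension of dyadic local fields with
relative discriminant `Δ_{F/K} = p^δ` and `ℓ = ⌊(δ+1)/2⌋`.  If `x ∈ F` is a uniformizer of
`F`, then `Tr_{F/K}(x) ∈ p^ℓ`; moreover if `ℓ ≤ m` (where `2O = p^m`) then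
`ord_K(Tr_{F/K}(x)) = ℓ` exactly.  The discriminant exponent is expressed through the
Eisenstein minimal polynomial `z^2 - t z + n` of the uniformizer `x`, whose discriminant
`t^2 - 4n` generates `Δ_{F/K} = p^δ`. -/
theorem trace_of_uniformizer_mem
    (O : Type*) [CommRing O] [IsDomain O] [IsDiscreteValuationRing O]
    (K : Type*) [Field K] [Algebra O K] [IsFractionRing O K] [CharZero K]
    (m : ℕ) (hm1 : 1 ≤ m)
    (hm : Ideal.span {(2 : O)} = (IsLocalRing.maximalIdeal O) ^ m)
    (F : Type*) [Field F] [Algebra K F] [Algebra O F] [IsScalarTower O K F]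
    (hquad : Module.finrank K F = 2)
    [IsDiscreteValuationRing ↥(integralClosure O F)]
    (hram : (IsLocalRing.maximalIdeal O).map (algebraMap O ↥(integralClosure O F)) =
      (IsLocalRing.maximalIdeal ↥(integralClosure O F)) ^ 2)
    (x : ↥(integralClosure O F)) (hx : Irreducible x)
    (t n : O)
    (ht : algebraMap O K t = Algebra.trace K F (x : F))
    (hn : algebraMap O K n = Algebra.norm K (x : F))
    (δ ℓ : ℕ) (hδ : Ideal.span {t ^ 2 - 4 * n} = (IsLocalRing.maximalIdeal O) ^ δ)
    (hℓ : ℓ = (δ + 1) / 2) :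
    t ∈ (IsLocalRing.maximalIdeal O) ^ ℓ ∧
      (ℓ ≤ m → t ∉ (IsLocalRing.maximalIdeal O) ^ (ℓ + 1)) :=
  trace_of_uniformizer_mem_general O K m hm F hquad hram x hx t n ht hn δ ℓ hδ hℓ
end

section
/- Let k_2/K be a ramified quadratic extension of dyadic local fields and let a_2 be the constant term of an Eisenstein polynomial over K. Suppose i ≥ 1 and η, η' ∈ O_{k_2} satisfy N_{k_2/K}(η) ≡ N_{k_2/K}(η') ≡ a_2 (mod p^{i+1}). Then there exist e, f ∈ O_K such that η' = eπ + (1 + fπ)η, where π is a uniformizer of K. -/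
/-!
`N` is multiplicative with `N(π) = π²`, and `π` is associated to the square of a uniformizer of
`O₂`, so an element of `O₂` whose norm is a uniformizer of `O` is itself a uniformizer; thus `η`
and `η'` are uniformizers, and `η ∉ K` because `N η` is not a square. Since
`v(a + bη) = min (2 v(a), 2 v(b) + 1)` for `a, b ∈ O`, clearing denominators in the `K`-basis
`1, η` gives `η' = a + bη` with `a, b ∈ O`. Then `η ∣ η'` forces `π ∣ a`, and
`η² - T(η) η + N(η) = 0` forces `π ∣ T(η)`, so `N(η') = a² + ab T(η) + b² N(η) ≡ b² N(η)` mod `π²`.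
As `N(η') ≡ N(η)` mod `π²` and `N(η)` is a uniformizer, `π ∣ b² - 1`, and since `π ∣ 2` this
gives `π ∣ (b - 1)²`.
-/

namespace Matrix

theorem mul_self_sub_trace_smul_add_det_smul_fin_two {R : Type*} [CommRing R]
    (M : Matrix (Fin 2) (Fin 2) R) : M * M - M.trace • M + M.det • 1 = 0 := by
  ext i j
  fin_cases i <;> fin_cases j <;>
    simp [mul_apply, trace_fin_two, det_fin_two] <;> ring

theorem det_smul_one_add_smul_fin_two {R : Type*} [CommRing R] (a b : R)
    (M : Matrix (Fin 2) (Fin 2) R) :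
    (a • 1 + b • M).det = a ^ 2 + a * b * M.trace + b ^ 2 * M.det := by
  simp [det_fin_two, trace_fin_two]; ring

end Matrix

namespace Algebra

variable {K L : Type*} [Field K] [CommRing L] [Algebra K L]

theorem sq_sub_trace_mul_add_norm_of_finrank_eq_two (h : Module.finrank K L = 2) (x : L) :
    x ^ 2 - algebraMap K L (trace K L x) * x + algebraMap K L (norm K x) = 0 := by
  have : Module.Finite K L := Module.finite_of_finrank_pos (by omega)
  let b := Module.finBasisOfFinrankEq K L h
  apply leftMulMatrix_injective b
  rw [trace_eq_matrix_trace b, norm_eq_matrix_det b]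
  simpa [sq, algebraMap_eq_smul_one] using
    (leftMulMatrix b x).mul_self_sub_trace_smul_add_det_smul_fin_two

theorem norm_algebraMap_add_algebraMap_mul_of_finrank_eq_two (h : Module.finrank K L = 2)
    (a b : K) (x : L) :
    norm K (algebraMap K L a + algebraMap K L b * x) =
      a ^ 2 + a * b * trace K L x + b ^ 2 * norm K x := by
  have : Module.Finite K L := Module.finite_of_finrank_pos (by omega)
  let B := Module.finBasisOfFinrankEq K L h
  rw [trace_eq_matrix_trace B, norm_eq_matrix_det B, norm_eq_matrix_det B,
    ← (leftMulMatrix B x).det_smul_one_add_smul_fin_two]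
  simp [algebraMap_eq_smul_one]

theorem exists_eq_algebraMap_add_algebraMap_mul_of_finrank_eq_two [Nontrivial L]
    (h : Module.finrank K L = 2) {x : L} (hx : x ∉ Set.range (algebraMap K L)) (y : L) :
    ∃ a b : K, y = algebraMap K L a + algebraMap K L b * x := by
  have hli : LinearIndependent K ![x, 1] := by
    rw [linearIndependent_fin2]
    refine ⟨by simp, fun a hax => hx ⟨a, ?_⟩⟩
    simpa [algebraMap_eq_smul_one] using hax
  have hy : y ∈ Submodule.span K (Set.range ![x, 1]) := by
    rw [hli.span_eq_top_of_card_eq_finrank (by simp [h])]; trivial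
  obtain ⟨c, rfl⟩ := (Submodule.mem_span_range_iff_exists_fun K).mp hy
  exact ⟨c 1, c 0, by simp [Fin.sum_univ_two, Algebra.smul_def, add_comm]⟩

end Algebra

open IsLocalRing

theorem dvd_of_sq_dvd_mul_of_associated {R : Type*} [CommRing R] [IsDomain R] {π n c : R}
    (hπ : π ≠ 0) (hn : Associated π n) (h : π ^ 2 ∣ c * n) : π ∣ c := by
  obtain ⟨u, rfl⟩ := hn
  rwa [sq, mul_left_comm, mul_dvd_mul_iff_left hπ, Units.dvd_mul_right] at h

theorem Prime.dvd_sub_one_of_dvd_sq_sub_one {R : Type*} [CommRing R] {p : R} (hp : Prime p)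
    (h2 : p ∣ 2) {b : R} (hb : p ∣ b ^ 2 - 1) : p ∣ b - 1 :=
  hp.dvd_of_dvd_pow (n := 2) <| by
    rw [show (b - 1) ^ 2 = (b ^ 2 - 1) - 2 * (b - 1) by ring]
    exact dvd_sub hb (dvd_mul_of_dvd_left h2 _)

section DiscreteValuationRing

variable {R : Type*} [CommRing R] [IsDomain R] [IsDiscreteValuationRing R]

theorem IsDiscreteValuationRing.irreducible_of_mem_maximalIdeal_of_notMem_sq {x : R}
    (hx : x ∈ IsLocalRing.maximalIdeal R) (hx2 : x ∉ IsLocalRing.maximalIdeal R ^ 2) :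
    Irreducible x := by
  obtain ⟨ϖ, hϖ⟩ := exists_irreducible R
  rw [hϖ.maximalIdeal_eq, Ideal.mem_span_singleton] at hx
  rw [hϖ.maximalIdeal_eq, Ideal.span_singleton_pow, Ideal.mem_span_singleton] at hx2
  obtain ⟨y, rfl⟩ := hx
  have hy : IsUnit y := by
    by_contra hy
    rw [← mem_nonunits_iff, ← IsLocalRing.mem_maximalIdeal, hϖ.maximalIdeal_eq,
      Ideal.mem_span_singleton] at hy
    exact hx2 (by rw [sq]; exact mul_dvd_mul_left ϖ hy)
  exact (irreducible_mul_isUnit hy).mpr hϖ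

theorem IsDiscreteValuationRing.irreducible_of_sub_mem_maximalIdeal_sq {x a : R}
    (ha : a ∈ IsLocalRing.maximalIdeal R) (ha2 : a ∉ IsLocalRing.maximalIdeal R ^ 2)
    (hxa : x - a ∈ IsLocalRing.maximalIdeal R ^ 2) : Irreducible x := by
  refine irreducible_of_mem_maximalIdeal_of_notMem_sq ?_ fun hx => ha2 ?_
  · simpa using add_mem (Ideal.pow_le_self two_ne_zero hxa) ha
  · simpa using sub_mem hx hxa

end DiscreteValuationRing

section Divisibility

variable {A B : Type*} [CommRing A] [IsDomain A] [IsDiscreteValuationRing A] [CommRing B]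
  [Algebra A B] {π : A}

theorem dvd_of_dvd_algebraMap (hπ : Irreducible π) {θ : B} (hθ : ¬IsUnit θ) {r : A}
    (h : θ ∣ algebraMap A B r) : π ∣ r := by
  rw [← Ideal.mem_span_singleton, ← hπ.maximalIdeal_eq, mem_maximalIdeal, mem_nonunits_iff]
  exact fun hr => hθ (isUnit_of_dvd_unit h (hr.map _))

variable [IsDomain B] {θ : B}

theorem dvd_and_dvd_of_sq_dvd_algebraMap_add_algebraMap_mul (hπ : Irreducible π)
    (hθ : Irreducible θ) (hπθ : Associated (algebraMap A B π) (θ ^ 2)) {a b : A}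
    (h : θ ^ 2 ∣ algebraMap A B a + algebraMap A B b * θ) : π ∣ a ∧ π ∣ b := by
  have ha : π ∣ a := dvd_of_dvd_algebraMap hπ hθ.not_isUnit <|
    (dvd_add_left (dvd_mul_left θ _)).mp ((dvd_pow_self θ two_ne_zero).trans h)
  refine ⟨ha, dvd_of_dvd_algebraMap hπ hθ.not_isUnit ?_⟩
  obtain ⟨c, rfl⟩ := ha
  have hθπ : θ ^ 2 ∣ algebraMap A B (π * c) := hπθ.symm.dvd.trans (map_dvd _ (dvd_mul_right _ _))
  rw [← mul_dvd_mul_iff_right hθ.ne_zero, ← sq]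
  exact (dvd_add_right hθπ).mp h

theorem pow_dvd_and_pow_dvd_of_algebraMap_pow_dvd (hπ : Irreducible π) (hθ : Irreducible θ)
    (hπθ : Associated (algebraMap A B π) (θ ^ 2)) (n : ℕ) {a b : A}
    (h : algebraMap A B (π ^ n) ∣ algebraMap A B a + algebraMap A B b * θ) :
    π ^ n ∣ a ∧ π ^ n ∣ b := by
  induction n generalizing a b with
  | zero => simp
  | succ n ih =>
    obtain ⟨⟨a, rfl⟩, ⟨b, rfl⟩⟩ := dvd_and_dvd_of_sq_dvd_algebraMap_add_algebraMap_mul hπ hθ hπθ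
      (hπθ.symm.dvd.trans ((map_dvd _ (dvd_pow_self π n.succ_ne_zero)).trans h))
    have hπ0 : algebraMap A B π ≠ 0 := hπθ.ne_zero_iff.mpr (pow_ne_zero 2 hθ.ne_zero)
    rw [pow_succ', map_mul, map_mul, map_mul, mul_assoc, ← mul_add,
      mul_dvd_mul_iff_left hπ0] at h
    rw [pow_succ']
    exact (ih h).imp (mul_dvd_mul_left π) (mul_dvd_mul_left π)

theorem dvd_and_dvd_of_algebraMap_dvd (hπ : Irreducible π) (hθ : Irreducible θ)
    (hπθ : Associated (algebraMap A B π) (θ ^ 2)) {d a b : A} (hd : d ≠ 0)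
    (h : algebraMap A B d ∣ algebraMap A B a + algebraMap A B b * θ) : d ∣ a ∧ d ∣ b := by
  obtain ⟨n, u, rfl⟩ := IsDiscreteValuationRing.eq_unit_mul_pow_irreducible hd hπ
  rw [map_mul, ((Units.isUnit u).map _).mul_left_dvd] at h
  simpa only [(Units.isUnit u).mul_left_dvd] using
    pow_dvd_and_pow_dvd_of_algebraMap_pow_dvd hπ hθ hπθ n h

theorem dvd_of_sq_sub_algebraMap_mul_add_algebraMap_eq_zero (hπ : Irreducible π)
    (hθ : Irreducible θ) (hπθ : Associated (algebraMap A B π) (θ ^ 2)) {t n : A} (hn : π ∣ n)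
    (hroot : θ ^ 2 - algebraMap A B t * θ + algebraMap A B n = 0) : π ∣ t := by
  refine dvd_of_dvd_algebraMap hπ hθ.not_isUnit ((mul_dvd_mul_iff_right hθ.ne_zero).mp ?_)
  rw [← sq, show algebraMap A B t * θ = θ ^ 2 + algebraMap A B n by linear_combination -hroot]
  exact dvd_add dvd_rfl (hπθ.symm.dvd.trans (map_dvd _ hn))

end Divisibility

section Norm

variable {A K B L : Type*} [CommRing A] [Field K] [Algebra A K]
  [CommRing B] [CommRing L] [Algebra B L] [Algebra K L]

@[simps]
def normMonoidHom [IsFractionRing A K] (N : B → A)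
    (hN : ∀ x, algebraMap A K (N x) = Algebra.norm K (algebraMap B L x)) : B →* A where
  toFun := N
  map_one' := IsFractionRing.injective A K (by rw [hN, map_one, map_one, map_one])
  map_mul' x y := IsFractionRing.injective A K (by rw [map_mul, hN, hN, hN, map_mul, map_mul])

theorem algebraMap_notMem_range_of_irreducible_norm [IsDomain A] [IsIntegrallyClosed A]
    [IsFractionRing A K] (h2 : Module.finrank K L = 2) {N : B → A}
    (hN : ∀ x, algebraMap A K (N x) = Algebra.norm K (algebraMap B L x)) {θ : B}
    (hNθ : Irreducible (N θ)) : algebraMap B L θ ∉ Set.range (algebraMap K L) := by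
  rintro ⟨c, hc⟩
  have hc2 : algebraMap A K (N θ) = c ^ 2 := by
    rw [hN, ← hc, Algebra.norm_algebraMap, h2]
  obtain ⟨d, rfl⟩ := IsIntegrallyClosed.exists_algebraMap_eq_of_isIntegral_pow (R := A)
    two_pos (hc2 ▸ isIntegral_algebraMap)
  rw [← map_pow] at hc2
  exact not_irreducible_pow (by norm_num) (IsFractionRing.injective A K hc2 ▸ hNθ)

variable [Algebra A B] [Algebra A L] [IsScalarTower A K L] [IsScalarTower A B L]

theorem norm_algebraMap_eq_sq [IsFractionRing A K] (h2 : Module.finrank K L = 2) {N : B → A}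
    (hN : ∀ x, algebraMap A K (N x) = Algebra.norm K (algebraMap B L x)) (r : A) :
    N (algebraMap A B r) = r ^ 2 :=
  IsFractionRing.injective A K <| by
    rw [hN, ← IsScalarTower.algebraMap_apply, IsScalarTower.algebraMap_apply A K L,
      Algebra.norm_algebraMap, h2, map_pow]

theorem norm_algebraMap_add_algebraMap_mul [IsFractionRing A K]
    (h2 : Module.finrank K L = 2) {N T : B → A}
    (hN : ∀ x, algebraMap A K (N x) = Algebra.norm K (algebraMap B L x))
    (hT : ∀ x, algebraMap A K (T x) = Algebra.trace K L (algebraMap B L x)) (a b : A) (x : B) :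
    N (algebraMap A B a + algebraMap A B b * x) = a ^ 2 + a * b * T x + b ^ 2 * N x :=
  IsFractionRing.injective A K <| by
    simp only [hN, hT, map_add, map_mul, ← IsScalarTower.algebraMap_apply A B L,
      IsScalarTower.algebraMap_apply A K L]
    rw [map_pow, map_pow]
    exact Algebra.norm_algebraMap_add_algebraMap_mul_of_finrank_eq_two h2 _ _ _

theorem sq_sub_algebraMap_trace_mul_add_algebraMap_norm [IsFractionRing B L]
    (h2 : Module.finrank K L = 2) {N T : B → A}
    (hN : ∀ x, algebraMap A K (N x) = Algebra.norm K (algebraMap B L x))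
    (hT : ∀ x, algebraMap A K (T x) = Algebra.trace K L (algebraMap B L x)) (x : B) :
    x ^ 2 - algebraMap A B (T x) * x + algebraMap A B (N x) = 0 :=
  IsFractionRing.injective B L <| by
    simp only [map_add, map_sub, map_mul, map_pow, map_zero, ← IsScalarTower.algebraMap_apply A B L,
      IsScalarTower.algebraMap_apply A K L, hT, hN]
    exact Algebra.sq_sub_trace_mul_add_norm_of_finrank_eq_two h2 _

theorem sq_dvd_norm_algebraMap_mul_add_algebraMap_mul_sub [IsFractionRing A K]
    (h2 : Module.finrank K L = 2) {N T : B → A}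
    (hN : ∀ x, algebraMap A K (N x) = Algebra.norm K (algebraMap B L x))
    (hT : ∀ x, algebraMap A K (T x) = Algebra.trace K L (algebraMap B L x)) {π : A} {x : B}
    (hπT : π ∣ T x) (e b : A) :
    π ^ 2 ∣ N (algebraMap A B (π * e) + algebraMap A B b * x) - b ^ 2 * N x := by
  obtain ⟨t, ht⟩ := hπT
  rw [norm_algebraMap_add_algebraMap_mul h2 hN hT, ht]
  exact ⟨e ^ 2 + e * b * t, by ring⟩

end Norm

section Ramified

variable {A K B L : Type*} [CommRing A] [IsDomain A] [IsDiscreteValuationRing A]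
  [CommRing B] [IsDomain B] [Algebra A B] [Field K] [Algebra A K] [IsFractionRing A K]
  [Field L] [Algebra B L] [Algebra K L] [Algebra A L] [IsScalarTower A K L] [IsScalarTower A B L]

theorem exists_eq_algebraMap_add_algebraMap_mul [IsFractionRing B L]
    (h2 : Module.finrank K L = 2) {π : A} (hπ : Irreducible π) {θ : B} (hθ : Irreducible θ)
    (hπθ : Associated (algebraMap A B π) (θ ^ 2))
    (hθK : algebraMap B L θ ∉ Set.range (algebraMap K L)) (x : B) :
    ∃ a b : A, x = algebraMap A B a + algebraMap A B b * θ := by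
  obtain ⟨α, β, hx⟩ :=
    Algebra.exists_eq_algebraMap_add_algebraMap_mul_of_finrank_eq_two h2 hθK (algebraMap B L x)
  obtain ⟨⟨d, hd⟩, hdαβ⟩ :=
    IsLocalization.exist_integer_multiples (nonZeroDivisors A) Finset.univ ![α, β]
  obtain ⟨a, ha⟩ := hdαβ 0 (Finset.mem_univ _)
  obtain ⟨b, hb⟩ := hdαβ 1 (Finset.mem_univ _)
  have hd0 : d ≠ 0 := nonZeroDivisors.ne_zero hd
  have hdx : algebraMap A B a + algebraMap A B b * θ = algebraMap A B d * x :=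
    IsFractionRing.injective B L <| by
      simp only [map_add, map_mul, ← IsScalarTower.algebraMap_apply A B L,
        IsScalarTower.algebraMap_apply A K L, ha, hb, hx]
      simp [Algebra.smul_def]
      ring
  obtain ⟨⟨a, rfl⟩, ⟨b, rfl⟩⟩ := dvd_and_dvd_of_algebraMap_dvd hπ hθ hπθ hd0 ⟨x, hdx⟩
  have hdB : algebraMap A B d ≠ 0 := fun h0 => hd0 <| IsFractionRing.injective A K <|
    (algebraMap K L).injective <| by
      rw [← IsScalarTower.algebraMap_apply, IsScalarTower.algebraMap_apply A B L, h0, map_zero,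
        map_zero, map_zero]
  exact ⟨a, b, mul_left_cancel₀ hdB (hdx.symm.trans (by simp only [map_mul]; ring))⟩

variable [IsDiscreteValuationRing B]

theorem associated_algebraMap_sq_of_map_maximalIdeal_eq_sq
    (hram : (maximalIdeal A).map (algebraMap A B) = maximalIdeal B ^ 2) {π : A}
    (hπ : Irreducible π) {θ : B} (hθ : Irreducible θ) :
    Associated (algebraMap A B π) (θ ^ 2) := by
  rw [← Ideal.span_singleton_eq_span_singleton, ← Ideal.span_singleton_pow,
    ← hθ.maximalIdeal_eq, ← hram, hπ.maximalIdeal_eq, Ideal.map_span, Set.image_singleton]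

theorem irreducible_of_irreducible_norm (h2 : Module.finrank K L = 2) {N : B → A}
    (hN : ∀ x, algebraMap A K (N x) = Algebra.norm K (algebraMap B L x))
    (hram : (maximalIdeal A).map (algebraMap A B) = maximalIdeal B ^ 2) {θ : B}
    (hNθ : Irreducible (N θ)) : Irreducible θ := by
  obtain ⟨π, hπ⟩ := IsDiscreteValuationRing.exists_irreducible A
  obtain ⟨ρ, hρ⟩ := IsDiscreteValuationRing.exists_irreducible B
  have hNρ : Associated (N ρ) π := by
    have := (associated_algebraMap_sq_of_map_maximalIdeal_eq_sq hram hπ hρ).map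
      (normMonoidHom N hN)
    rw [map_pow, normMonoidHom_apply, normMonoidHom_apply, norm_algebraMap_eq_sq h2 hN] at this
    exact ((Associated.pow_iff two_ne_zero).mp this).symm
  have hθ0 : θ ≠ 0 := by
    rintro rfl
    have hN0 : N 0 = 0 := by simpa using norm_algebraMap_eq_sq h2 hN (0 : A)
    exact not_irreducible_zero (hN0 ▸ hNθ)
  obtain ⟨n, hθρ⟩ := IsDiscreteValuationRing.associated_pow_irreducible hθ0 hρ
  have hNθπ : Associated (N θ) (π ^ n) := by
    have := hθρ.map (normMonoidHom N hN)
    rw [map_pow, normMonoidHom_apply, normMonoidHom_apply] at this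
    exact this.trans hNρ.pow_pow
  obtain rfl : n = 1 := by
    by_contra hn
    exact not_irreducible_pow hn (hNθπ.irreducible hNθ)
  exact hθρ.symm.irreducible (by simpa using hρ)

end Ramified

theorem norm_congruent_uniformizers_related_general
    (O : Type*) [CommRing O] [IsDomain O] [IsDiscreteValuationRing O]
    (K : Type*) [Field K] [Algebra O K] [IsFractionRing O K]
    (m : ℕ) (hm1 : 1 ≤ m)
    (hm : Ideal.span {(2 : O)} = (IsLocalRing.maximalIdeal O) ^ m)
    (p : Ideal O) (hp : p = IsLocalRing.maximalIdeal O)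
    (O₂ : Type*) [CommRing O₂] [IsDomain O₂] [IsDiscreteValuationRing O₂]
    (k₂ : Type*) [Field k₂] [Algebra O₂ k₂] [IsFractionRing O₂ k₂]
    [Algebra O O₂] [Algebra K k₂] [Algebra O k₂]
    [IsScalarTower O K k₂] [IsScalarTower O O₂ k₂]
    (hquad₂ : Module.finrank K k₂ = 2)
    (hram₂ : (IsLocalRing.maximalIdeal O).map (algebraMap O O₂) =
      (IsLocalRing.maximalIdeal O₂) ^ 2)
    (T N : O₂ → O)
    (hT : ∀ η : O₂, algebraMap O K (T η) = Algebra.trace K k₂ (algebraMap O₂ k₂ η))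
    (hN : ∀ η : O₂, algebraMap O K (N η) = Algebra.norm K (algebraMap O₂ k₂ η))
    (a₂ : O) (ha₂ : a₂ ∈ p) (ha₂' : a₂ ∉ p ^ 2)
    (π : O) (hπ : Irreducible π)
    (i : ℕ) (hi : 1 ≤ i)
    (η η' : O₂)
    (hη : N η - a₂ ∈ p ^ (i + 1)) (hη' : N η' - a₂ ∈ p ^ (i + 1))
    :
    ∃ e f : O, η' = algebraMap O O₂ (e * π) + algebraMap O O₂ (1 + f * π) * η := by
  subst hp
  have hsq : maximalIdeal O ^ (i + 1) ≤ maximalIdeal O ^ 2 := Ideal.pow_le_pow_right (by omega)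
  have hcong : π ^ 2 ∣ N η' - N η := by
    rw [← Ideal.mem_span_singleton, ← Ideal.span_singleton_pow, ← hπ.maximalIdeal_eq]
    simpa using sub_mem (hsq hη') (hsq hη)
  have hNη := IsDiscreteValuationRing.irreducible_of_sub_mem_maximalIdeal_sq ha₂ ha₂' (hsq hη)
  have hηirr := irreducible_of_irreducible_norm hquad₂ hN hram₂ hNη
  have hη'irr := irreducible_of_irreducible_norm hquad₂ hN hram₂
    (IsDiscreteValuationRing.irreducible_of_sub_mem_maximalIdeal_sq ha₂ ha₂' (hsq hη'))
  have hπη := associated_algebraMap_sq_of_map_maximalIdeal_eq_sq hram₂ hπ hηirr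
  have hπNη := IsDiscreteValuationRing.associated_of_irreducible O hπ hNη
  obtain ⟨a, b, rfl⟩ := exists_eq_algebraMap_add_algebraMap_mul hquad₂ hπ hηirr hπη
    (algebraMap_notMem_range_of_irreducible_norm hquad₂ hN hNη) η'
  obtain ⟨e, rfl⟩ : π ∣ a := dvd_of_dvd_algebraMap hπ hηirr.not_isUnit <|
    (dvd_add_left (dvd_mul_left η _)).mp
      (IsDiscreteValuationRing.associated_of_irreducible O₂ hηirr hη'irr).dvd
  have hπT : π ∣ T η := dvd_of_sq_sub_algebraMap_mul_add_algebraMap_eq_zero hπ hηirr hπη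
    hπNη.dvd (sq_sub_algebraMap_trace_mul_add_algebraMap_norm hquad₂ hN hT η)
  have hb : π ∣ b ^ 2 - 1 := dvd_of_sq_dvd_mul_of_associated hπ.ne_zero hπNη <| by
    convert dvd_sub hcong (sq_dvd_norm_algebraMap_mul_add_algebraMap_mul_sub hquad₂ hN hT hπT e b)
      using 1
    ring
  have h2 : π ∣ 2 := by
    rw [← Ideal.mem_span_singleton, ← hπ.maximalIdeal_eq]
    exact Ideal.pow_le_self (by omega) (hm ▸ Ideal.mem_span_singleton_self 2)
  obtain ⟨f, hf⟩ := hπ.prime.dvd_sub_one_of_dvd_sq_sub_one h2 hb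
  exact ⟨e, f, by rw [mul_comm e, show b = 1 + f * π by linear_combination hf]⟩

/-- Let `k₂/K` be a ramified quadratic extension of dyadic local fields
and let `a₂` be the constant term of an Eisenstein polynomial over `K`.  Suppose `i ≥ 1`
and `η, η' ∈ O_{k₂}` satisfy `N(η) ≡ N(η') ≡ a₂ (mod p^{i+1})`.  Then there exist
`e, f ∈ O_K` with `η' = eπ + (1 + fπ)η`, where `π` is a uniformizer of `K`. -/
theorem norm_congruent_uniformizers_related
    (O : Type*) [CommRing O] [IsDomain O] [IsDiscreteValuationRing O]
    (K : Type*) [Field K] [Algebra O K] [IsFractionRing O K] [CharZero K]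
    (m : ℕ) (hm1 : 1 ≤ m)
    (hm : Ideal.span {(2 : O)} = (IsLocalRing.maximalIdeal O) ^ m)
    (p : Ideal O) (hp : p = IsLocalRing.maximalIdeal O)
    (O₂ : Type*) [CommRing O₂] [IsDomain O₂] [IsDiscreteValuationRing O₂]
    (k₂ : Type*) [Field k₂] [Algebra O₂ k₂] [IsFractionRing O₂ k₂]
    [Algebra O O₂] [Algebra K k₂] [Algebra O k₂]
    [IsScalarTower O K k₂] [IsScalarTower O O₂ k₂]
    (hquad₂ : Module.finrank K k₂ = 2)
    (hram₂ : (IsLocalRing.maximalIdeal O).map (algebraMap O O₂) =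
      (IsLocalRing.maximalIdeal O₂) ^ 2)
    (T N : O₂ → O)
    (hT : ∀ η : O₂, algebraMap O K (T η) = Algebra.trace K k₂ (algebraMap O₂ k₂ η))
    (hN : ∀ η : O₂, algebraMap O K (N η) = Algebra.norm K (algebraMap O₂ k₂ η))
    (a₂ : O) (ha₂ : a₂ ∈ p) (ha₂' : a₂ ∉ p ^ 2)
    (π : O) (hπ : Irreducible π)
    (i : ℕ) (hi : 1 ≤ i)
    (η η' : O₂)
    (hη : N η - a₂ ∈ p ^ (i + 1)) (hη' : N η' - a₂ ∈ p ^ (i + 1))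
    :
    ∃ e f : O, η' = algebraMap O O₂ (e * π) + algebraMap O O₂ (1 + f * π) * η :=
  norm_congruent_uniformizers_related_general O K m hm1 hm p hp O₂ k₂ hquad₂ hram₂ T N hT hN a₂ ha₂
    ha₂' π hπ i hi η η' hη hη'
end

section
/- Let k_1 ≠ k_2 be ramified quadratic extensions of a dyadic local field K with ℓ_1 = ℓ_2 = ℓ, δ_1 = δ_2 = δ, and ℓ ≤ i < δ. Suppose η ∈ O_{k_2} satisfies ord_K(Tr_{k_2/K}(η) - a_1) = i exactly and N_{k_2/K}(η) ≡ a_2 (mod p^{i+1}). Then any η' ∈ O_{k_2} with Tr_{k_2/K}(η') ≡ a_1 (mod p^i) and N_{k_2/K}(η') ≡ a_2 (mod p^{i+1}) also satisfies ord_K(Tr_{k_2/K}(η') - a_1) = i exactly. -/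
/-!
Let `w` be the normalized valuation of `k₂`, so that `w = 2 · ord_K` on `K`, and put
`G(X) = X² - a₁X + a₂`. Since `η` is a root of `X² - Tr(η)X + N(η)`, we have
`G(η) = (Tr η - a₁)η - (N η - a₂)`. That polynomial is Eisenstein, so `w(η) = 1` and
`w(G η) = 2i + 1` exactly, whereas `w(G η') ≥ 2i + 2` if `Tr η' ≡ a₁ mod p^(i+1)`.
Then `(η - η')(η + η' - a₁) = G η - G η'` has odd valuation `2i + 1`, so its factors have
distinct valuations and the smaller one is `w(2η - a₁)`, giving `2 w(2η - a₁) < 2i + 1`.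
On the other hand `(2η - a₁)² = (a₁² - 4a₂) + 4 G(η)` and `δ ≤ 2 ord_K(2) + 1`, so the
discriminant term dominates and `w(2η - a₁) = δ`, contradicting `i < δ`.
-/

theorem ENat.two_mul_ne_two_mul_add_one (a : ℕ∞) (n : ℕ) : 2 * a ≠ 2 * n + 1 := by
  induction a using ENat.recTopCoe with
  | top => rw [ENat.mul_top two_ne_zero]; exact_mod_cast (ENat.natCast_ne_top _).symm
  | coe a => norm_cast; omega

theorem ENat.eq_of_two_mul_eq_two_mul {a : ℕ∞} {n : ℕ} (h : 2 * a = 2 * n) : a = n := by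
  induction a using ENat.recTopCoe with
  | top =>
    rw [ENat.mul_top two_ne_zero] at h
    exact absurd h.symm (mod_cast ENat.natCast_ne_top _)
  | coe a => norm_cast at h ⊢; omega

namespace AddValuation

variable {R : Type*} [CommRing R] (v : AddValuation R ℕ∞)

theorem map_add_le_of_add_eq_odd {x y : R} {n : ℕ} (h : v x + v y = 2 * n + 1) :
    v (x + y) ≤ n := by
  have hne : v x ≠ v y := fun he ↦
    ENat.two_mul_ne_two_mul_add_one (v y) n (by rwa [he, ← two_mul] at h)
  norm_cast at h
  obtain ⟨hx, hy⟩ := WithTop.add_ne_top.mp (h ▸ ENat.natCast_ne_top _)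
  rw [v.map_add_of_distinct_val hne, min_le_iff]
  lift v x to ℕ using hx with a
  lift v y to ℕ using hy with b
  norm_cast at h hne ⊢
  omega

theorem map_eq_one_of_map_mul_sub_eq_two {x t : R} (h : v (x * (t - x)) = 2) (ht : 2 ≤ v t) :
    v x = 1 := by
  rw [v.map_mul] at h
  have heq : v x = v (t - x) := by
    by_contra hne
    rw [← add_sub_cancel x t, v.map_add_of_distinct_val hne, le_min_iff] at ht
    have := add_le_add ht.1 ht.2
    rw [h] at this
    norm_num at this
  rw [← heq, ← two_mul] at h
  exact ENat.eq_of_two_mul_eq_two_mul (n := 1) (by simpa using h)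

theorem map_sq_sub_four_mul_le {a b : R} {m : ℕ} (h2 : v 2 = m) (hb : v b = 1) :
    v (a ^ 2 - 4 * b) ≤ 2 * m + 1 := by
  have h4b : v (4 * b) = 2 * m + 1 := by
    rw [show (4 : R) * b = 2 * 2 * b by norm_num, v.map_mul, v.map_mul, h2, hb, ← two_mul]
  have hne : v (a ^ 2) ≠ v (4 * b) := by
    rw [h4b, v.map_pow, two_nsmul, ← two_mul]
    exact ENat.two_mul_ne_two_mul_add_one _ _
  rw [sub_eq_add_neg, v.map_add_of_distinct_val (by rwa [v.map_neg]), v.map_neg, h4b]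
  exact min_le_right _ _

theorem two_mul_map_two_mul_sub {x c d : R}
    (h : v (c ^ 2 - 4 * d) < v (4 * (x ^ 2 - c * x + d))) :
    2 * v (2 * x - c) = v (c ^ 2 - 4 * d) := by
  rw [two_mul, ← two_nsmul, ← v.map_pow, ← v.map_add_eq_of_lt_left h]
  ring_nf

theorem le_of_map_quadratic_eq {x x' c d : R} {i δ : ℕ}
    (hx : v (x ^ 2 - c * x + d) = 2 * i + 1) (hx' : 2 * i + 2 ≤ v (x' ^ 2 - c * x' + d))
    (hs : v (2 * x - c) = δ) : δ ≤ i := by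
  have hlt : v (x ^ 2 - c * x + d) < v (x' ^ 2 - c * x' + d) := by
    rw [hx]; refine lt_of_lt_of_le ?_ hx'; norm_cast; omega
  have hprod : v (x - x') + v (x + x' - c) = 2 * i + 1 := by
    rw [← v.map_mul, ← hx, ← v.map_sub_eq_of_lt_left hlt]
    ring_nf
  have := v.map_add_le_of_add_eq_odd hprod
  rw [show x - x' + (x + x' - c) = 2 * x - c by ring, hs] at this
  exact_mod_cast this

end AddValuation

section RamifiedQuadratic

variable {R S : Type*} [CommRing R] [CommRing S] {v : AddValuation R ℕ∞} {w : AddValuation S ℕ∞}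
  {f : R →+* S}

theorem map_eq_one_of_eisenstein_root (hf : ∀ x, w (f x) = 2 * v x) {x : S} {t n : R}
    (hx : x ^ 2 - f t * x + f n = 0) (ht : 1 ≤ v t) (hn : v n = 1) : w x = 1 := by
  refine w.map_eq_one_of_map_mul_sub_eq_two (t := f t) ?_ ?_
  · rw [show x * (f t - x) = f n by linear_combination -hx, hf, hn, mul_one]
  · calc (2 : ℕ∞) = 2 * 1 := by norm_num
      _ ≤ 2 * v t := by gcongr
      _ = w (f t) := (hf t).symm

theorem map_approx_root_eq (hf : ∀ x, w (f x) = 2 * v x) {x : S} {t n a b : R} {i : ℕ}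
    (hx : x ^ 2 - f t * x + f n = 0) (hx1 : w x = 1)
    (ht : v (t - a) = i) (hn : i + 1 ≤ v (n - b)) :
    w (x ^ 2 - f a * x + f b) = 2 * i + 1 := by
  have hlt : w (f (t - a) * x) < w (f (n - b)) := by
    rw [w.map_mul, hf, hf, ht, hx1]
    calc ((2 * i + 1 : ℕ) : ℕ∞) < (2 * (i + 1) : ℕ) := by norm_cast; omega
      _ ≤ 2 * v (n - b) := by push_cast; gcongr
  rw [show x ^ 2 - f a * x + f b = f (t - a) * x - f (n - b) by
      simp only [map_sub]; linear_combination hx,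
    w.map_sub_eq_of_lt_left hlt, w.map_mul, hf, ht, hx1]

theorem le_map_approx_root (hf : ∀ x, w (f x) = 2 * v x) {x : S} {t n a b : R} {i : ℕ}
    (hx : x ^ 2 - f t * x + f n = 0)
    (ht : i + 1 ≤ v (t - a)) (hn : i + 1 ≤ v (n - b)) :
    2 * i + 2 ≤ w (x ^ 2 - f a * x + f b) := by
  have hle : ∀ y, i + 1 ≤ v y → 2 * i + 2 ≤ w (f y) := fun y hy ↦ by
    rw [hf]
    calc (2 * i + 2 : ℕ∞) = 2 * (i + 1 : ℕ) := by push_cast; ring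
      _ ≤ 2 * v y := by push_cast; gcongr
  rw [show x ^ 2 - f a * x + f b = f (t - a) * x - f (n - b) by
      simp only [map_sub]; linear_combination hx]
  refine w.map_le_sub ?_ (hle _ hn)
  rw [w.map_mul]
  exact le_add_right (hle _ ht)

theorem map_two_mul_sub_eq_of_approx_root (hf : ∀ x, w (f x) = 2 * v x) {x : S} {a b : R}
    {i m δ : ℕ} (hx : w (x ^ 2 - f a * x + f b) = 2 * i + 1) (hi : 1 ≤ i)
    (h2 : v 2 = m) (hD : v (a ^ 2 - 4 * b) = δ) (hδ : δ ≤ 2 * m + 1) :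
    w (2 * x - f a) = δ := by
  have hfD : w (f a ^ 2 - 4 * f b) = 2 * δ := by
    rw [show f a ^ 2 - 4 * f b = f (a ^ 2 - 4 * b) by
      rw [map_sub, map_mul, map_pow, map_ofNat], hf, hD]
  have hlt : w (f a ^ 2 - 4 * f b) < w (4 * (x ^ 2 - f a * x + f b)) := by
    rw [hfD, w.map_mul, show (4 : S) = f (2 * 2) by rw [map_mul, map_ofNat]; norm_num, hf,
      v.map_mul, h2, hx]
    norm_cast
    omega
  have := w.two_mul_map_two_mul_sub hlt
  rw [hfD] at this
  exact ENat.eq_of_two_mul_eq_two_mul this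

end RamifiedQuadratic

theorem Algebra.sq_sub_trace_mul_add_norm {K L : Type*} [Field K] [CommRing L] [Algebra K L]
    (h : Module.finrank K L = 2) (x : L) :
    x ^ 2 - algebraMap K L (trace K L x) * x + algebraMap K L (norm K x) = 0 := by
  have : Module.Finite K L := Module.finite_of_finrank_eq_succ h
  let b := Module.finBasisOfFinrankEq K L h
  apply leftMulMatrix_injective b
  have := (leftMulMatrix b x).aeval_self_charpoly
  rw [Matrix.charpoly_fin_two] at this
  simpa [trace_eq_matrix_trace b, norm_eq_matrix_det b, Algebra.algebraMap_eq_smul_one] using this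

namespace IsDiscreteValuationRing

variable {R : Type*} [CommRing R] [IsDomain R] [IsDiscreteValuationRing R]

theorem mem_maximalIdeal_pow_iff {x : R} {n : ℕ} :
    x ∈ IsLocalRing.maximalIdeal R ^ n ↔ (n : ℕ∞) ≤ addVal R x := by
  obtain ⟨ϖ, hϖ⟩ := exists_irreducible R
  rw [hϖ.maximalIdeal_eq, Ideal.span_singleton_pow, Ideal.mem_span_singleton,
    ← addVal_le_iff_dvd, hϖ.addVal_pow]

theorem addVal_eq_of_mem_of_notMem {x : R} {n : ℕ} (h : x ∈ IsLocalRing.maximalIdeal R ^ n)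
    (h' : x ∉ IsLocalRing.maximalIdeal R ^ (n + 1)) : addVal R x = n := by
  rw [mem_maximalIdeal_pow_iff] at h h'
  push_cast at h'
  exact le_antisymm (Order.le_of_lt_add_one (not_le.mp h')) h

theorem addVal_eq_of_span_eq {x : R} {n : ℕ}
    (h : Ideal.span {x} = IsLocalRing.maximalIdeal R ^ n) : addVal R x = n := by
  obtain ⟨ϖ, hϖ⟩ := exists_irreducible R
  rw [hϖ.maximalIdeal_eq, Ideal.span_singleton_pow, Ideal.span_singleton_eq_span_singleton,
    ← addVal_eq_iff_associated, hϖ.addVal_pow] at h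
  exact h

theorem addVal_algebraMap {S : Type*} [CommRing S] [IsDomain S] [IsDiscreteValuationRing S]
    [Algebra R S] {e : ℕ} (he : e ≠ 0)
    (h : (IsLocalRing.maximalIdeal R).map (algebraMap R S) = IsLocalRing.maximalIdeal S ^ e)
    (x : R) : addVal S (algebraMap R S x) = e * addVal R x := by
  rcases eq_or_ne x 0 with rfl | hx
  · simp [ENat.mul_top (Nat.cast_ne_zero.mpr he)]
  obtain ⟨ϖ, hϖ⟩ := exists_irreducible R
  obtain ⟨n, u, rfl⟩ := eq_unit_mul_pow_irreducible hx hϖ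
  have hfϖ : addVal S (algebraMap R S ϖ) = e := addVal_eq_of_span_eq <| by
    rw [← h, hϖ.maximalIdeal_eq, Ideal.map_span, Set.image_singleton]
  have hfu : addVal S (algebraMap R S u) = 0 := addVal_eq_zero_iff.mpr (u.isUnit.map _)
  rw [map_mul, map_pow, addVal_mul, addVal_pow, hfϖ, hfu, addVal_mul, hϖ.addVal_pow,
    addVal_eq_zero_of_unit]
  simp [mul_comm]

end IsDiscreteValuationRing

theorem sq_sub_algebraMap_mul_add_eq_zero {O K O₂ k₂ : Type*} [CommRing O] [Field K]
    [CommRing O₂] [Field k₂] [Algebra O K] [Algebra O₂ k₂] [Algebra O O₂] [Algebra K k₂]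
    [Algebra O k₂] [IsScalarTower O K k₂] [IsScalarTower O O₂ k₂]
    (hinj : Function.Injective (algebraMap O₂ k₂)) (hquad : Module.finrank K k₂ = 2)
    {T N : O₂ → O}
    (hT : ∀ η : O₂, algebraMap O K (T η) = Algebra.trace K k₂ (algebraMap O₂ k₂ η))
    (hN : ∀ η : O₂, algebraMap O K (N η) = Algebra.norm K (algebraMap O₂ k₂ η)) (ζ : O₂) :
    ζ ^ 2 - algebraMap O O₂ (T ζ) * ζ + algebraMap O O₂ (N ζ) = 0 := by
  apply hinj
  have := Algebra.sq_sub_trace_mul_add_norm hquad (algebraMap O₂ k₂ ζ)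
  rw [← hT, ← hN, ← IsScalarTower.algebraMap_apply, ← IsScalarTower.algebraMap_apply,
    IsScalarTower.algebraMap_apply O O₂ k₂, IsScalarTower.algebraMap_apply O O₂ k₂] at this
  simpa using this

open IsDiscreteValuationRing

theorem exact_trace_order_invariant_general
    (O : Type*) [CommRing O] [IsDomain O] [IsDiscreteValuationRing O]
    (K : Type*) [Field K] [Algebra O K]
    (m : ℕ)
    (hm : Ideal.span {(2 : O)} = (IsLocalRing.maximalIdeal O) ^ m)
    (p : Ideal O) (hp : p = IsLocalRing.maximalIdeal O)
    (O₂ : Type*) [CommRing O₂] [IsDomain O₂] [IsDiscreteValuationRing O₂]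
    (k₂ : Type*) [Field k₂] [Algebra O₂ k₂] [IsFractionRing O₂ k₂]
    [Algebra O O₂] [Algebra K k₂] [Algebra O k₂]
    [IsScalarTower O K k₂] [IsScalarTower O O₂ k₂]
    (hquad₂ : Module.finrank K k₂ = 2)
    (hram₂ : (IsLocalRing.maximalIdeal O).map (algebraMap O O₂) =
      (IsLocalRing.maximalIdeal O₂) ^ 2)
    (T N : O₂ → O)
    (hT : ∀ η : O₂, algebraMap O K (T η) = Algebra.trace K k₂ (algebraMap O₂ k₂ η))
    (hN : ∀ η : O₂, algebraMap O K (N η) = Algebra.norm K (algebraMap O₂ k₂ η))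
    (a₁ a₂ : O) (ha₁ : a₁ ∈ p) (ha₂ : a₂ ∈ p) (ha₂' : a₂ ∉ p ^ 2)
    (δ : ℕ) (hδ₁ : Ideal.span {a₁ ^ 2 - 4 * a₂} = p ^ δ)
    (i : ℕ) (hi₁ : (δ + 1) / 2 ≤ i) (hi₂ : i < δ)
    (η : O₂) (hηT : T η - a₁ ∈ p ^ i) (hηT' : T η - a₁ ∉ p ^ (i + 1))
    (hηN : N η - a₂ ∈ p ^ (i + 1))
    :
    ∀ η' : O₂, T η' - a₁ ∈ p ^ i → N η' - a₂ ∈ p ^ (i + 1) →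
      T η' - a₁ ∉ p ^ (i + 1) := by
  intro η' _ hη'N hη'T
  subst hp
  have hf : ∀ x, addVal O₂ (algebraMap O O₂ x) = 2 * addVal O x := by
    simpa using addVal_algebraMap two_ne_zero hram₂
  have hroot := sq_sub_algebraMap_mul_add_eq_zero (IsFractionRing.injective O₂ k₂) hquad₂ hT hN
  have hi : 1 ≤ i := by omega
  have hva₂ : addVal O a₂ = 1 := addVal_eq_of_mem_of_notMem (by simpa using ha₂) ha₂'
  have hv2 : addVal O 2 = m := addVal_eq_of_span_eq hm
  have hvD : addVal O (a₁ ^ 2 - 4 * a₂) = δ := addVal_eq_of_span_eq hδ₁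
  have hδ : δ ≤ 2 * m + 1 := by
    exact_mod_cast hvD ▸ (addVal O).map_sq_sub_four_mul_le hv2 hva₂
  have hvT : 1 ≤ addVal O (T η) := by
    have := Ideal.add_mem _ (Ideal.pow_le_self (by omega) hηT) ha₁
    simpa using mem_maximalIdeal_pow_iff (n := 1).mp (by simpa using this)
  have hvN : addVal O (N η) = 1 := by
    have hlt : addVal O a₂ < addVal O (N η - a₂) :=
      hva₂ ▸ lt_of_lt_of_le (by norm_cast; omega) (mem_maximalIdeal_pow_iff.mp hηN)
    rw [← add_sub_cancel a₂ (N η), (addVal O).map_add_eq_of_lt_left hlt, hva₂]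
  have hwη := map_eq_one_of_eisenstein_root hf (hroot η) hvT hvN
  have hGη := map_approx_root_eq hf (hroot η) hwη (addVal_eq_of_mem_of_notMem hηT hηT')
    (mem_maximalIdeal_pow_iff.mp hηN)
  have hGη' := le_map_approx_root hf (hroot η') (mem_maximalIdeal_pow_iff.mp hη'T)
    (mem_maximalIdeal_pow_iff.mp hη'N)
  have hs := map_two_mul_sub_eq_of_approx_root hf hGη hi hv2 hvD hδ
  exact absurd ((addVal O₂).le_of_map_quadratic_eq hGη hGη' hs) (by omega)

/-- Let `k₁ ≠ k₂` be ramified quadratic extensions of a dyadic local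
field `K` with `ℓ₁ = ℓ₂ = ℓ`, `δ₁ = δ₂ = δ`, and `ℓ ≤ i < δ`.  Suppose `η ∈ O_{k₂}`
satisfies `ord_K(Tr(η) - a₁) = i` exactly and `N(η) ≡ a₂ (mod p^{i+1})`.  Then any
`η' ∈ O_{k₂}` with `Tr(η') ≡ a₁ (mod p^i)` and `N(η') ≡ a₂ (mod p^{i+1})` also satisfies
`ord_K(Tr(η') - a₁) = i` exactly. -/
theorem exact_trace_order_invariant
    (O : Type*) [CommRing O] [IsDomain O] [IsDiscreteValuationRing O]
    (K : Type*) [Field K] [Algebra O K] [IsFractionRing O K] [CharZero K]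
    (m : ℕ) (hm1 : 1 ≤ m)
    (hm : Ideal.span {(2 : O)} = (IsLocalRing.maximalIdeal O) ^ m)
    (p : Ideal O) (hp : p = IsLocalRing.maximalIdeal O)
    (O₂ : Type*) [CommRing O₂] [IsDomain O₂] [IsDiscreteValuationRing O₂]
    (k₂ : Type*) [Field k₂] [Algebra O₂ k₂] [IsFractionRing O₂ k₂]
    [Algebra O O₂] [Algebra K k₂] [Algebra O k₂]
    [IsScalarTower O K k₂] [IsScalarTower O O₂ k₂]
    (hquad₂ : Module.finrank K k₂ = 2)
    (hram₂ : (IsLocalRing.maximalIdeal O).map (algebraMap O O₂) =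
      (IsLocalRing.maximalIdeal O₂) ^ 2)
    (T N : O₂ → O)
    (hT : ∀ η : O₂, algebraMap O K (T η) = Algebra.trace K k₂ (algebraMap O₂ k₂ η))
    (hN : ∀ η : O₂, algebraMap O K (N η) = Algebra.norm K (algebraMap O₂ k₂ η))
    (a₁ a₂ : O) (ha₁ : a₁ ∈ p) (ha₂ : a₂ ∈ p) (ha₂' : a₂ ∉ p ^ 2)
    (hdist : ∀ z : k₂, z ^ 2 + algebraMap O k₂ a₁ * z + algebraMap O k₂ a₂ ≠ 0)
    (δ : ℕ) (hδ₁ : Ideal.span {a₁ ^ 2 - 4 * a₂} = p ^ δ)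
    (π₂ : O₂) (hπ₂ : Irreducible π₂)
    (hδ₂ : Ideal.span {(T π₂) ^ 2 - 4 * N π₂} = p ^ δ)
    (i : ℕ) (hi₁ : (δ + 1) / 2 ≤ i) (hi₂ : i < δ)
    (η : O₂) (hηT : T η - a₁ ∈ p ^ i) (hηT' : T η - a₁ ∉ p ^ (i + 1))
    (hηN : N η - a₂ ∈ p ^ (i + 1))
    :
    ∀ η' : O₂, T η' - a₁ ∈ p ^ i → N η' - a₂ ∈ p ^ (i + 1) →
      T η' - a₁ ∉ p ^ (i + 1) :=
  exact_trace_order_invariant_general O K m hm p hp O₂ k₂ hquad₂ hram₂ T N hT hN a₁ a₂ ha₁ ha₂ ha₂'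
    δ hδ₁ i hi₁ hi₂ η hηT hηT' hηN
end

section
/- Let k_1 ≠ k_2 be ramified quadratic extensions of a dyadic local field K, with k_1 defined by Eisenstein polynomial z^2 + a_1 z + a_2. For 0 ≤ i_1 ≤ i_2 ≤ i_1 + 1, the set S_{i_1,i_2}(k_1,k_2) of classes η in O_{k_2}/π_2^{i_1+i_2}O_{k_2} satisfying Tr_{k_2/K}(η) ≡ a_1 (mod p^{i_1}) and N_{k_2/K}(η) ≡ a_2 (mod p^{i_2}) is well-defined: the two congruence conditions depend only on the class of η modulo π_2^{i_1+i_2}O_{k_2}. -/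
/-!
Since `𝔪₂ ^ 2 = 𝔪 O₂`, an element of `𝔪₂ ^ j` is `ϖ ^ ⌊j/2⌋` times an element of `𝔪₂ ^ (j mod 2)`,
so it suffices to know that `Tr` and `N` map `𝔪₂` into `𝔪`. For the norm this is
`N y = (Tr y - y) y ∈ 𝔪₂ ∩ O`; for the trace, `Tr y · y = y ^ 2 + N y ∈ 𝔪₂ ^ 2` shows that a unit trace
would force `y ∈ 𝔪 O₂`, whose trace lies in `𝔪`. Hence `Tr (𝔪₂ ^ j) ⊆ 𝔪 ^ ⌈j/2⌉` and
`N (𝔪₂ ^ j) ⊆ 𝔪 ^ j`. For `j = i₁ + i₂` we have `⌈j/2⌉ = i₂`, and the differences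
`Tr (η + u) - Tr η = Tr u` and `N (η + u) - N η = N u + Tr η Tr u - Tr (η u)` lie in `𝔪 ^ i₁`
and `𝔪 ^ i₂`.
-/

open Module

section QuadraticExtension

variable {K L : Type*} [Field K] [Field L] [Algebra K L]

theorem sq_sub_trace_mul_add_norm (h : finrank K L = 2) (z : L) :
    z ^ 2 - algebraMap K L (Algebra.trace K L z) * z + algebraMap K L (Algebra.norm K z) = 0 := by
  have : FiniteDimensional K L := .of_finrank_pos (by omega)
  let b := finBasisOfFinrankEq K L h
  apply Algebra.leftMulMatrix_injective b
  have h0 := (Algebra.leftMulMatrix b z).aeval_self_charpoly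
  rw [Matrix.charpoly_fin_two, ← Algebra.trace_eq_matrix_trace, ← Algebra.norm_eq_matrix_det] at h0
  simpa using h0

theorem norm_add_of_finrank_eq_two [NeZero (2 : K)] (h : finrank K L = 2) (x y : L) :
    Algebra.norm K (x + y) = Algebra.norm K x + Algebra.norm K y
      + Algebra.trace K L x * Algebra.trace K L y - Algebra.trace K L (x * y) := by
  have hxy := sq_sub_trace_mul_add_norm h (x + y)
  have hx := sq_sub_trace_mul_add_norm h x
  have hy := sq_sub_trace_mul_add_norm h y
  -- Cayley–Hamilton turns the defect `N (x + y) - N x - N y` into an element of `L`,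
  -- whose trace is twice the right-hand side.
  have key : algebraMap K L (Algebra.norm K (x + y) - Algebra.norm K x - Algebra.norm K y) =
      Algebra.trace K L x • y + Algebra.trace K L y • x - (2 : K) • (x * y) := by
    simp only [map_add, map_sub, Algebra.smul_def, map_ofNat] at hxy ⊢
    linear_combination hxy - hx - hy
  have := congrArg (Algebra.trace K L) key
  simp only [Algebra.trace_algebraMap, h, map_sub, map_add, map_smul, smul_eq_mul] at this
  apply mul_left_cancel₀ (two_ne_zero : (2 : K) ≠ 0)
  linear_combination this

end QuadraticExtension

open IsLocalRing

section RestrictedTraceAndNorm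

variable {O K O₂ k₂ : Type*} [CommRing O] [Field K] [Algebra O K]
  [CommRing O₂] [Field k₂] [Algebra O₂ k₂] [Algebra K k₂] {T N : O₂ → O}

theorem trace_restrict_add [FaithfulSMul O K]
    (hT : ∀ η, algebraMap O K (T η) = Algebra.trace K k₂ (algebraMap O₂ k₂ η)) (x y : O₂) :
    T (x + y) = T x + T y :=
  FaithfulSMul.algebraMap_injective O K <| by simp only [map_add, hT]

theorem norm_restrict_add [FaithfulSMul O K] [NeZero (2 : K)] (hquad : finrank K k₂ = 2)
    (hT : ∀ η, algebraMap O K (T η) = Algebra.trace K k₂ (algebraMap O₂ k₂ η))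
    (hN : ∀ η, algebraMap O K (N η) = Algebra.norm K (algebraMap O₂ k₂ η)) (x y : O₂) :
    N (x + y) = N x + N y + T x * T y - T (x * y) :=
  FaithfulSMul.algebraMap_injective O K <| by
    simp only [map_add, map_sub, map_mul, hT, hN]
    exact norm_add_of_finrank_eq_two hquad _ _

variable [Algebra O O₂] [Algebra O k₂] [IsScalarTower O K k₂] [IsScalarTower O O₂ k₂]

theorem trace_restrict_algebraMap_mul [FaithfulSMul O K]
    (hT : ∀ η, algebraMap O K (T η) = Algebra.trace K k₂ (algebraMap O₂ k₂ η)) (c : O) (x : O₂) :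
    T (algebraMap O O₂ c * x) = c * T x :=
  FaithfulSMul.algebraMap_injective O K <| by
    rw [hT, map_mul, ← IsScalarTower.algebraMap_apply, IsScalarTower.algebraMap_apply O K k₂,
      ← Algebra.smul_def, map_smul, smul_eq_mul, map_mul, hT]

theorem norm_restrict_algebraMap_mul [FaithfulSMul O K] (hquad : finrank K k₂ = 2)
    (hN : ∀ η, algebraMap O K (N η) = Algebra.norm K (algebraMap O₂ k₂ η)) (c : O) (x : O₂) :
    N (algebraMap O O₂ c * x) = c ^ 2 * N x :=
  FaithfulSMul.algebraMap_injective O K <| by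
    rw [hN, map_mul, ← IsScalarTower.algebraMap_apply, IsScalarTower.algebraMap_apply O K k₂,
      map_mul, Algebra.norm_algebraMap, hquad, map_mul, map_pow, hN]

theorem algebraMap_norm_restrict [FaithfulSMul O₂ k₂] (hquad : finrank K k₂ = 2)
    (hT : ∀ η, algebraMap O K (T η) = Algebra.trace K k₂ (algebraMap O₂ k₂ η))
    (hN : ∀ η, algebraMap O K (N η) = Algebra.norm K (algebraMap O₂ k₂ η)) (x : O₂) :
    algebraMap O O₂ (N x) = (algebraMap O O₂ (T x) - x) * x :=
  FaithfulSMul.algebraMap_injective O₂ k₂ <| by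
    simp only [map_mul, map_sub, ← IsScalarTower.algebraMap_apply,
      IsScalarTower.algebraMap_apply O K k₂, hT, hN]
    linear_combination sq_sub_trace_mul_add_norm hquad (algebraMap O₂ k₂ x)

end RestrictedTraceAndNorm

theorem exists_eq_algebraMap_pow_mul_of_mem_pow {O O₂ : Type*} [CommRing O] [IsDomain O]
    [IsDiscreteValuationRing O] [CommRing O₂] [IsLocalRing O₂] [Algebra O O₂]
    (hram : (maximalIdeal O).map (algebraMap O O₂) = maximalIdeal O₂ ^ 2)
    {ϖ : O} (hϖ : Irreducible ϖ) {s r : ℕ} {x : O₂} (hx : x ∈ maximalIdeal O₂ ^ (2 * s + r)) :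
    ∃ y ∈ maximalIdeal O₂ ^ r, x = algebraMap O O₂ (ϖ ^ s) * y := by
  rw [pow_add, pow_mul, ← hram, (IsDiscreteValuationRing.irreducible_iff_uniformizer ϖ).mp hϖ,
    Ideal.map_span, Set.image_singleton, Ideal.span_singleton_pow, Ideal.mem_span_singleton_mul]
    at hx
  obtain ⟨y, hy, rfl⟩ := hx
  exact ⟨y, hy, by rw [map_pow]⟩

section MaximalIdeal

variable {O K O₂ k₂ : Type*} [CommRing O] [Field K] [Algebra O K]
  [CommRing O₂] [IsLocalRing O₂] [Field k₂] [Algebra O₂ k₂] [FaithfulSMul O₂ k₂]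
  [Algebra O O₂] [Algebra K k₂] [Algebra O k₂] [IsScalarTower O K k₂] [IsScalarTower O O₂ k₂]
  {T N : O₂ → O}

theorem norm_restrict_mem_maximalIdeal [IsLocalRing O] (hquad : finrank K k₂ = 2)
    (hT : ∀ η, algebraMap O K (T η) = Algebra.trace K k₂ (algebraMap O₂ k₂ η))
    (hN : ∀ η, algebraMap O K (N η) = Algebra.norm K (algebraMap O₂ k₂ η))
    {y : O₂} (hy : y ∈ maximalIdeal O₂) : N y ∈ maximalIdeal O := by
  refine le_maximalIdeal
    (Ideal.comap_ne_top (algebraMap O O₂) (maximalIdeal.isMaximal O₂).ne_top) ?_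
  rw [Ideal.mem_comap, algebraMap_norm_restrict hquad hT hN]
  exact Ideal.mul_mem_left _ _ hy

variable [IsDomain O] [IsDiscreteValuationRing O] [FaithfulSMul O K]

theorem trace_restrict_mem_maximalIdeal (hquad : finrank K k₂ = 2)
    (hram : (maximalIdeal O).map (algebraMap O O₂) = maximalIdeal O₂ ^ 2)
    (hT : ∀ η, algebraMap O K (T η) = Algebra.trace K k₂ (algebraMap O₂ k₂ η))
    (hN : ∀ η, algebraMap O K (N η) = Algebra.norm K (algebraMap O₂ k₂ η))
    {y : O₂} (hy : y ∈ maximalIdeal O₂) : T y ∈ maximalIdeal O := by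
  by_contra hTy
  obtain ⟨ϖ, hϖ⟩ := IsDiscreteValuationRing.exists_irreducible O
  have hunit : IsUnit (algebraMap O O₂ (T y)) :=
    (not_not.mp ((mem_maximalIdeal _).not.mp hTy)).map (algebraMap O O₂)
  have hy2 : y ∈ maximalIdeal O₂ ^ 2 := by
    rw [← Ideal.unit_mul_mem_iff_mem _ hunit,
      show algebraMap O O₂ (T y) * y = y ^ 2 + algebraMap O O₂ (N y) by
        rw [algebraMap_norm_restrict hquad hT hN]; ring]
    refine Ideal.add_mem _ (Ideal.pow_mem_pow hy 2) ?_
    rw [← hram]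
    exact Ideal.mem_map_of_mem _ (norm_restrict_mem_maximalIdeal hquad hT hN hy)
  obtain ⟨z, -, rfl⟩ := exists_eq_algebraMap_pow_mul_of_mem_pow (s := 1) (r := 0) hram hϖ hy2
  rw [trace_restrict_algebraMap_mul hT, pow_one] at hTy
  exact hTy (Ideal.mul_mem_right _ _ hϖ.not_isUnit)

theorem trace_restrict_mem_pow (hquad : finrank K k₂ = 2)
    (hram : (maximalIdeal O).map (algebraMap O O₂) = maximalIdeal O₂ ^ 2)
    (hT : ∀ η, algebraMap O K (T η) = Algebra.trace K k₂ (algebraMap O₂ k₂ η))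
    (hN : ∀ η, algebraMap O K (N η) = Algebra.norm K (algebraMap O₂ k₂ η))
    {j : ℕ} {x : O₂} (hx : x ∈ maximalIdeal O₂ ^ j) : T x ∈ maximalIdeal O ^ ((j + 1) / 2) := by
  obtain ⟨ϖ, hϖ⟩ := IsDiscreteValuationRing.exists_irreducible O
  have hϖ_mem (s : ℕ) : ϖ ^ s ∈ maximalIdeal O ^ s := Ideal.pow_mem_pow hϖ.not_isUnit s
  obtain ⟨s, rfl | rfl⟩ := Nat.even_or_odd' j
  · obtain ⟨y, -, rfl⟩ := exists_eq_algebraMap_pow_mul_of_mem_pow (r := 0) hram hϖ hx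
    rw [trace_restrict_algebraMap_mul hT, show (2 * s + 1) / 2 = s by omega]
    exact Ideal.mul_mem_right _ _ (hϖ_mem s)
  · obtain ⟨y, hy, rfl⟩ := exists_eq_algebraMap_pow_mul_of_mem_pow (r := 1) hram hϖ hx
    rw [trace_restrict_algebraMap_mul hT, show (2 * s + 1 + 1) / 2 = s + 1 by omega, pow_succ]
    exact Ideal.mul_mem_mul (hϖ_mem s)
      (by simpa using trace_restrict_mem_maximalIdeal hquad hram hT hN (by simpa using hy))

theorem norm_restrict_mem_pow (hquad : finrank K k₂ = 2)
    (hram : (maximalIdeal O).map (algebraMap O O₂) = maximalIdeal O₂ ^ 2)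
    (hT : ∀ η, algebraMap O K (T η) = Algebra.trace K k₂ (algebraMap O₂ k₂ η))
    (hN : ∀ η, algebraMap O K (N η) = Algebra.norm K (algebraMap O₂ k₂ η))
    {j : ℕ} {x : O₂} (hx : x ∈ maximalIdeal O₂ ^ j) : N x ∈ maximalIdeal O ^ j := by
  obtain ⟨ϖ, hϖ⟩ := IsDiscreteValuationRing.exists_irreducible O
  have hϖ_mem (s : ℕ) : (ϖ ^ s) ^ 2 ∈ maximalIdeal O ^ (2 * s) := by
    rw [← pow_mul, mul_comm]
    exact Ideal.pow_mem_pow hϖ.not_isUnit _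
  obtain ⟨s, rfl | rfl⟩ := Nat.even_or_odd' j
  · obtain ⟨y, -, rfl⟩ := exists_eq_algebraMap_pow_mul_of_mem_pow (r := 0) hram hϖ hx
    rw [norm_restrict_algebraMap_mul hquad hN]
    exact Ideal.mul_mem_right _ _ (hϖ_mem s)
  · obtain ⟨y, hy, rfl⟩ := exists_eq_algebraMap_pow_mul_of_mem_pow (r := 1) hram hϖ hx
    rw [norm_restrict_algebraMap_mul hquad hN, pow_succ]
    exact Ideal.mul_mem_mul (hϖ_mem s)
      (norm_restrict_mem_maximalIdeal hquad hT hN (by simpa using hy))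

end MaximalIdeal

theorem S_well_defined_general
    (O : Type*) [CommRing O] [IsDomain O] [IsDiscreteValuationRing O]
    (K : Type*) [Field K] [Algebra O K] [IsFractionRing O K] [CharZero K]
    (p : Ideal O) (hp : p = IsLocalRing.maximalIdeal O)
    (O₂ : Type*) [CommRing O₂] [IsDomain O₂] [IsDiscreteValuationRing O₂]
    (k₂ : Type*) [Field k₂] [Algebra O₂ k₂] [IsFractionRing O₂ k₂]
    [Algebra O O₂] [Algebra K k₂] [Algebra O k₂]
    [IsScalarTower O K k₂] [IsScalarTower O O₂ k₂]
    (hquad₂ : Module.finrank K k₂ = 2)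
    (hram₂ : (IsLocalRing.maximalIdeal O).map (algebraMap O O₂) =
      (IsLocalRing.maximalIdeal O₂) ^ 2)
    (T N : O₂ → O)
    (hT : ∀ η : O₂, algebraMap O K (T η) = Algebra.trace K k₂ (algebraMap O₂ k₂ η))
    (hN : ∀ η : O₂, algebraMap O K (N η) = Algebra.norm K (algebraMap O₂ k₂ η))
    (a₁ a₂ : O)
    (i₁ i₂ : ℕ) (hi₁ : i₁ ≤ i₂) (hi₂ : i₂ ≤ i₁ + 1)
    (η u : O₂) (hu : u ∈ (IsLocalRing.maximalIdeal O₂) ^ (i₁ + i₂))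
    :
    ((T (η + u) - a₁ ∈ p ^ i₁ ↔ T η - a₁ ∈ p ^ i₁) ∧
      (N (η + u) - a₂ ∈ p ^ i₂ ↔ N η - a₂ ∈ p ^ i₂)) := by
  subst hp
  have hi : i₂ = (i₁ + i₂ + 1) / 2 := by omega
  have hTu : T u ∈ maximalIdeal O ^ i₂ := hi ▸ trace_restrict_mem_pow hquad₂ hram₂ hT hN hu
  have hTηu : T (η * u) ∈ maximalIdeal O ^ i₂ :=
    hi ▸ trace_restrict_mem_pow hquad₂ hram₂ hT hN (Ideal.mul_mem_left _ η hu)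
  have hNu : N u ∈ maximalIdeal O ^ i₂ :=
    Ideal.pow_le_pow_right (by omega) (norm_restrict_mem_pow hquad₂ hram₂ hT hN hu)
  constructor
  · rw [trace_restrict_add hT, add_sub_right_comm, Ideal.add_mem_iff_left]
    exact Ideal.pow_le_pow_right hi₁ hTu
  · rw [norm_restrict_add hquad₂ hT hN,
      show N η + N u + T η * T u - T (η * u) - a₂ = N η - a₂ + (N u + T η * T u - T (η * u)) by
        ring, Ideal.add_mem_iff_left]
    exact Ideal.sub_mem _ (Ideal.add_mem _ hNu (Ideal.mul_mem_left _ _ hTu)) hTηu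

/-- Let `k₁ ≠ k₂` be ramified quadratic extensions of a dyadic local
field `K`, with `k₁` defined by the Eisenstein polynomial `z² + a₁z + a₂`.  For
`0 ≤ i₁ ≤ i₂ ≤ i₁ + 1`, the congruence conditions `Tr(η) ≡ a₁ (mod p^{i₁})` and
`N(η) ≡ a₂ (mod p^{i₂})` depend only on the class of `η` modulo `π₂^{i₁+i₂}O₂`, i.e. they
are unchanged upon replacing `η` by `η + u` with `u ∈ p₂^{i₁+i₂}`. -/
theorem S_well_defined
    (O : Type*) [CommRing O] [IsDomain O] [IsDiscreteValuationRing O]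
    (K : Type*) [Field K] [Algebra O K] [IsFractionRing O K] [CharZero K]
    (m : ℕ) (hm1 : 1 ≤ m)
    (hm : Ideal.span {(2 : O)} = (IsLocalRing.maximalIdeal O) ^ m)
    (p : Ideal O) (hp : p = IsLocalRing.maximalIdeal O)
    (O₂ : Type*) [CommRing O₂] [IsDomain O₂] [IsDiscreteValuationRing O₂]
    (k₂ : Type*) [Field k₂] [Algebra O₂ k₂] [IsFractionRing O₂ k₂]
    [Algebra O O₂] [Algebra K k₂] [Algebra O k₂]
    [IsScalarTower O K k₂] [IsScalarTower O O₂ k₂]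
    (hquad₂ : Module.finrank K k₂ = 2)
    (hram₂ : (IsLocalRing.maximalIdeal O).map (algebraMap O O₂) =
      (IsLocalRing.maximalIdeal O₂) ^ 2)
    (T N : O₂ → O)
    (hT : ∀ η : O₂, algebraMap O K (T η) = Algebra.trace K k₂ (algebraMap O₂ k₂ η))
    (hN : ∀ η : O₂, algebraMap O K (N η) = Algebra.norm K (algebraMap O₂ k₂ η))
    (a₁ a₂ : O) (ha₁ : a₁ ∈ p) (ha₂ : a₂ ∈ p) (ha₂' : a₂ ∉ p ^ 2)
    (hdist : ∀ z : k₂, z ^ 2 + algebraMap O k₂ a₁ * z + algebraMap O k₂ a₂ ≠ 0)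
    (π₂ : O₂) (hπ₂ : Irreducible π₂)
    (δ₂ : ℕ) (hδ₂ : Ideal.span {(T π₂) ^ 2 - 4 * N π₂} = p ^ δ₂)
    (hδ₂2 : 2 ≤ δ₂)
    (i₁ i₂ : ℕ) (hi₁ : i₁ ≤ i₂) (hi₂ : i₂ ≤ i₁ + 1)
    (η u : O₂) (hu : u ∈ (IsLocalRing.maximalIdeal O₂) ^ (i₁ + i₂))
    :
    ((T (η + u) - a₁ ∈ p ^ i₁ ↔ T η - a₁ ∈ p ^ i₁) ∧
      (N (η + u) - a₂ ∈ p ^ i₂ ↔ N η - a₂ ∈ p ^ i₂)) :=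
  S_well_defined_general O K p hp O₂ k₂ hquad₂ hram₂ T N hT hN a₁ a₂ i₁ i₂ hi₁ hi₂ η u hu
end

section
/- Let k_1 ≠ k_2 be ramified quadratic extensions of a dyadic local field K and let 𝔫_j(k_1,k_2,i) denote the cardinality of S_{i,i}(k_1,k_2) for j=1 and of S_{i,i+1}(k_1,k_2) for j=2. Then for j = 1, 2 and all i ≥ 0, 𝔫_j(k_2,k_1,i) = 𝔫_j(k_1,k_2,i); moreover these cardinalities are independent of the choice of Eisenstein polynomial defining k_1 used in the definition of the sets S. -/
set_option synthInstance.maxHeartbeats 1000000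
set_option maxHeartbeats 1000000
set_option linter.unusedSectionVars false
set_option linter.unusedVariables false

open Module IsLocalRing

section QuadId
variable {K k : Type*} [Field K] [Field k] [Algebra K k]

lemma quadId (h2 : Module.finrank K k = 2) (x : k) :
    x ^ 2 - algebraMap K k (Algebra.trace K k x) * x + algebraMap K k (Algebra.norm K x) = 0 := by
  haveI : Module.Finite K k := Module.finite_of_finrank_eq_succ h2
  by_cases hx : ∃ y : K, algebraMap K k y = x
  · obtain ⟨y, rfl⟩ := hx
    rw [Algebra.trace_algebraMap, Algebra.norm_algebraMap, h2]
    simp only [two_smul, map_add, map_pow]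
    ring
  · have hx0 : x ≠ 0 := fun h => hx ⟨0, by simp [h]⟩
    have hli : LinearIndependent K ![(1 : k), x] := by
      rw [linearIndependent_fin2]
      refine ⟨by simpa using hx0, fun a ha => ?_⟩
      simp only [Matrix.cons_val_one, Matrix.head_cons, Matrix.cons_val_zero] at ha
      rcases eq_or_ne a 0 with rfl | ha0
      · simp at ha
      · refine hx ⟨a⁻¹, ?_⟩
        rw [Algebra.algebraMap_eq_smul_one, ← ha, smul_smul, inv_mul_cancel₀ ha0, one_smul]
    have hcard : Fintype.card (Fin 2) = Module.finrank K k := by simp [h2]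
    let B := basisOfLinearIndependentOfCardEqFinrank hli hcard
    have hB : ⇑B = ![(1 : k), x] := coe_basisOfLinearIndependentOfCardEqFinrank hli hcard
    have hB0 : B 0 = 1 := by rw [hB]; rfl
    have hB1 : B 1 = x := by rw [hB]; rfl
    set a := B.repr (x ^ 2) 0 with ha
    set b := B.repr (x ^ 2) 1 with hb
    have hx2 : x ^ 2 = a • (1 : k) + b • x := by
      have := B.sum_repr (x ^ 2)
      rw [Fin.sum_univ_two, hB0, hB1] at this
      rw [← this]
    have hreprx : B.repr x = Finsupp.single 1 1 := by rw [← hB1, B.repr_self]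
    have hM : ∀ i j, Algebra.leftMulMatrix B x i j = B.repr (x * B j) i :=
      fun i j => Algebra.leftMulMatrix_eq_repr_mul B x i j
    have h00 : Algebra.leftMulMatrix B x 0 0 = 0 := by
      rw [hM, hB0, mul_one, hreprx]; simp
    have h11 : Algebra.leftMulMatrix B x 1 1 = b := by
      rw [hM, hB1, ← pow_two]
    have h01 : Algebra.leftMulMatrix B x 0 1 = a := by
      rw [hM, hB1, ← pow_two]
    have h10 : Algebra.leftMulMatrix B x 1 0 = 1 := by
      rw [hM, hB0, mul_one, hreprx]; simp
    have htr : Algebra.trace K k x = b := by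
      rw [Algebra.trace_eq_matrix_trace B, Matrix.trace_fin_two, h00, h11, zero_add]
    have hnm : Algebra.norm K x = -a := by
      rw [Algebra.norm_eq_matrix_det B, Matrix.det_fin_two, h00, h11, h01, h10]
      ring
    rw [htr, hnm, hx2, map_neg]
    rw [Algebra.algebraMap_eq_smul_one (R := K) (A := k) b, Algebra.algebraMap_eq_smul_one (R := K) (A := k) a]
    rw [smul_mul_assoc, one_mul]
    ring

lemma traceAdd (h2 : Module.finrank K k = 2) (x : k) (c : K) :
    Algebra.trace K k (x + algebraMap K k c) = Algebra.trace K k x + 2 * c := by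
  rw [map_add (Algebra.trace K k), Algebra.trace_algebraMap, h2, two_smul, two_mul]

lemma traceMul (x : k) (c : K) :
    Algebra.trace K k (algebraMap K k c * x) = c * Algebra.trace K k x := by
  rw [← Algebra.smul_def, map_smul, smul_eq_mul]

lemma normMulC (h2 : Module.finrank K k = 2) (x : k) (c : K) :
    Algebra.norm K (algebraMap K k c * x) = c ^ 2 * Algebra.norm K x := by
  rw [map_mul (Algebra.norm K), Algebra.norm_algebraMap, h2]

lemma normAdd (h2 : Module.finrank K k = 2) (x : k) (c : K) :
    Algebra.norm K (x + algebraMap K k c)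
      = c ^ 2 + c * Algebra.trace K k x + Algebra.norm K x := by
  apply (algebraMap K k).injective
  have q1 := quadId h2 (x + algebraMap K k c)
  have q2 := quadId h2 x
  rw [traceAdd h2] at q1
  simp only [map_add, map_mul, map_pow, map_ofNat] at q1 q2 ⊢
  linear_combination q1 - q2
end QuadId

section Maps
variable {O K R k : Type*} [CommRing O]
  [Field K] [Algebra O K] [IsFractionRing O K]
  [CommRing R] [IsDomain R]
  [Field k] [Algebra R k] [IsFractionRing R k]
  [Algebra O R] [Algebra K k] [Algebra O k]
  [IsScalarTower O K k] [IsScalarTower O R k]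

lemma comm_alg (K : Type*) [Field K] [Algebra O K] [Algebra K k] [IsScalarTower O K k] (c : O) :
    algebraMap R k (algebraMap O R c) = algebraMap K k (algebraMap O K c) := by
  rw [← IsScalarTower.algebraMap_apply, ← IsScalarTower.algebraMap_apply]

lemma injOK : Function.Injective (algebraMap O K) := IsFractionRing.injective O K

lemma injOk (K : Type*) [Field K] [Algebra O K] [IsFractionRing O K] [Algebra K k]
    [IsScalarTower O K k] : Function.Injective (algebraMap O k) := by
  rw [IsScalarTower.algebraMap_eq O K k]
  exact (algebraMap K k).injective.comp (IsFractionRing.injective O K)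

lemma injOR (K k : Type*) [Field K] [Algebra O K] [IsFractionRing O K] [Field k] [Algebra R k]
    [Algebra K k] [Algebra O k] [IsScalarTower O K k] [IsScalarTower O R k] :
    Function.Injective (algebraMap O R) := by
  intro x y h
  apply injOk (k := k) K
  rw [IsScalarTower.algebraMap_apply O R k, h, ← IsScalarTower.algebraMap_apply]

variable (h2 : Module.finrank K k = 2) (T N : R → O)
  (hT : ∀ η : R, algebraMap O K (T η) = Algebra.trace K k (algebraMap R k η))
  (hN : ∀ η : R, algebraMap O K (N η) = Algebra.norm K (algebraMap R k η))

include h2 hT in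
lemma T_add_const (x : R) (c : O) : T (x + algebraMap O R c) = T x + 2 * c := by
  apply injOK (K := K)
  have h1 := hT (x + algebraMap O R c)
  rw [map_add (algebraMap R k), comm_alg K c, traceAdd h2, ← hT x] at h1
  rw [h1, map_add, map_mul, map_ofNat]

include h2 hT in
lemma T_zero : T 0 = 0 := by
  apply injOK (K := K)
  rw [hT, map_zero, map_zero, map_zero]

include h2 hT in
lemma T_algebraMap (c : O) : T (algebraMap O R c) = 2 * c := by
  have h := T_add_const h2 T hT 0 c
  rw [zero_add, T_zero h2 T hT, zero_add] at h
  exact h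

include hT in
lemma T_smul (x : R) (d : O) : T (algebraMap O R d * x) = d * T x := by
  apply injOK (K := K)
  have h1 := hT (algebraMap O R d * x)
  rw [map_mul (algebraMap R k), comm_alg K d, traceMul, ← hT x] at h1
  rw [h1, map_mul]

include h2 hT in
lemma T_neg (x : R) : T (-x) = - T x := by
  apply injOK (K := K)
  rw [hT, map_neg, map_neg, map_neg, hT]

include h2 hN in
lemma N_smul (x : R) (d : O) : N (algebraMap O R d * x) = d ^ 2 * N x := by
  apply injOK (K := K)
  have h1 := hN (algebraMap O R d * x)
  rw [map_mul (algebraMap R k), comm_alg K d, normMulC h2, ← hN x] at h1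
  rw [h1, map_mul, map_pow]

include h2 hT hN in
lemma N_add_const (x : R) (c : O) :
    N (x + algebraMap O R c) = c ^ 2 + c * T x + N x := by
  apply injOK (K := K)
  have h1 := hN (x + algebraMap O R c)
  rw [map_add (algebraMap R k), comm_alg K c, normAdd h2, ← hN x, ← hT x] at h1
  rw [h1]
  push_cast [map_add, map_mul, map_pow]
  ring

include h2 hT hN in
lemma R_quadId (x : R) :
    x ^ 2 = algebraMap O R (T x) * x - algebraMap O R (N x) := by
  apply IsFractionRing.injective R k
  rw [map_pow, map_sub, map_mul, comm_alg K (T x), comm_alg K (N x), hT, hN]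
  linear_combination quadId h2 (algebraMap R k x)

include h2 hN in
lemma N_mul (x y : R) : N (x * y) = N x * N y := by
  apply injOK (K := K)
  rw [hN, map_mul (algebraMap R k), map_mul (Algebra.norm K), map_mul, hN, hN]

include h2 hN in
lemma N_one : N 1 = 1 := by
  apply injOK (K := K)
  rw [hN, map_one, map_one, map_one]

include h2 hN in
lemma N_zero : N 0 = 0 := by
  haveI : Module.Finite K k := Module.finite_of_finrank_eq_succ h2
  apply injOK (K := K)
  rw [hN, map_zero, Algebra.norm_zero, map_zero]

include h2 hN in
lemma N_isUnit {x : R} (hx : IsUnit x) : IsUnit (N x) := by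
  obtain ⟨u, rfl⟩ := hx
  refine IsUnit.of_mul_eq_one (N ((u⁻¹ : Rˣ) : R)) ?_
  rw [← N_mul h2 N hN, Units.mul_inv, N_one h2 N hN]

include h2 hT hN in
lemma N_neg (x : R) : N (-x) = N x := by
  have h := N_smul h2 N hN x (-1)
  rw [map_neg, map_one, neg_one_mul] at h
  rw [h]; ring

include h2 hT hN in
lemma T_affine (u v : O) (x : R) :
    T (algebraMap O R u + algebraMap O R v * x) = 2 * u + v * T x := by
  rw [add_comm, T_add_const h2 T hT, T_smul T hT]; ring

include h2 hT hN in
lemma N_affine (u v : O) (x : R) :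
    N (algebraMap O R u + algebraMap O R v * x) = u ^ 2 + u * v * T x + v ^ 2 * N x := by
  rw [add_comm, N_add_const h2 T N hT hN, T_smul T hT, N_smul h2 N hN]
  ring
end Maps


section DVRLemmas

lemma isUnit_add_mem_max {A : Type*} [CommRing A] [IsLocalRing A] {a b : A}
    (ha : IsUnit a) (hb : b ∈ maximalIdeal A) : IsUnit (a + b) := by
  by_contra h
  have : a + b ∈ maximalIdeal A := by
    rwa [IsLocalRing.mem_maximalIdeal, mem_nonunits_iff]
  have : a ∈ maximalIdeal A := by
    have := Ideal.sub_mem _ this hb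
    simpa using this
  rw [IsLocalRing.mem_maximalIdeal, mem_nonunits_iff] at this
  exact this ha

lemma DVR_mem_pow {A : Type*} [CommRing A] [IsDomain A] [IsDiscreteValuationRing A]
    {γ : A} (hγ : Irreducible γ) {w : A} (hw : IsUnit w) (t n : ℕ) :
    γ ^ t * w ∈ (maximalIdeal A) ^ n ↔ n ≤ t := by
  rw [hγ.maximalIdeal_eq, Ideal.span_singleton_pow, Ideal.mem_span_singleton]
  rw [IsUnit.dvd_mul_right hw]
  exact pow_dvd_pow_iff hγ.ne_zero hγ.not_isUnit

lemma DVR_irred_not_sq {A : Type*} [CommRing A] [IsDomain A] [IsDiscreteValuationRing A]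
    {γ : A} (hγ : Irreducible γ) : γ ∉ (maximalIdeal A) ^ 2 := by
  intro h
  have : γ ^ 1 * 1 ∈ (maximalIdeal A) ^ 2 := by simpa using h
  rw [DVR_mem_pow hγ isUnit_one] at this
  omega

lemma DVR_mem_not_sq_irred {A : Type*} [CommRing A] [IsDomain A] [IsDiscreteValuationRing A]
    {x : A} (h1 : x ∈ maximalIdeal A) (h2 : x ∉ (maximalIdeal A) ^ 2) : Irreducible x := by
  obtain ⟨γ, hγ⟩ := IsDiscreteValuationRing.exists_irreducible A
  rw [hγ.maximalIdeal_eq, Ideal.mem_span_singleton] at h1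
  obtain ⟨y, rfl⟩ := h1
  have hy : IsUnit y := by
    by_contra hy
    apply h2
    rw [hγ.maximalIdeal_eq, Ideal.span_singleton_pow, Ideal.mem_span_singleton]
    have hy' : y ∈ maximalIdeal A := by rwa [IsLocalRing.mem_maximalIdeal, mem_nonunits_iff]
    rw [hγ.maximalIdeal_eq, Ideal.mem_span_singleton] at hy'
    obtain ⟨z, rfl⟩ := hy'
    exact ⟨z, by ring⟩
  exact (Associated.irreducible ⟨hy.unit, by simp [IsUnit.unit_spec]⟩ hγ : Irreducible (γ * y))

end DVRLemmas

section Ram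
variable {O R : Type*} [CommRing O] [IsDomain O] [IsDiscreteValuationRing O]
  [CommRing R] [IsDomain R] [IsDiscreteValuationRing R] [Algebra O R]

lemma alg_pi (hram : (maximalIdeal O).map (algebraMap O R) = (maximalIdeal R) ^ 2)
    {γ : R} (hγ : Irreducible γ) {ϖ : O} (hϖ : Irreducible ϖ) :
    ∃ w : R, IsUnit w ∧ algebraMap O R ϖ = γ ^ 2 * w := by
  have h1 : Ideal.span {algebraMap O R ϖ} = Ideal.span {γ ^ 2} := by
    rw [← Set.image_singleton, ← Ideal.map_span, ← hϖ.maximalIdeal_eq, hram,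
      hγ.maximalIdeal_eq, Ideal.span_singleton_pow]
  rw [Ideal.span_singleton_eq_span_singleton] at h1
  obtain ⟨u, hu⟩ := h1
  exact ⟨((u⁻¹ : Rˣ) : R), Units.isUnit _, by rw [← hu]; simp [mul_assoc]⟩

lemma shape (hram : (maximalIdeal O).map (algebraMap O R) = (maximalIdeal R) ^ 2)
    {γ : R} (hγ : Irreducible γ) {ϖ : O} (hϖ : Irreducible ϖ) {u : O} (hu : u ≠ 0) :
    ∃ (s : ℕ) (w : R), IsUnit w ∧ algebraMap O R u = γ ^ (2 * s) * w ∧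
      ∀ j, (u ∈ (maximalIdeal O) ^ j ↔ j ≤ s) := by
  obtain ⟨s, w0, hw0⟩ := IsDiscreteValuationRing.eq_unit_mul_pow_irreducible hu hϖ
  obtain ⟨wp, hwp, hpi⟩ := alg_pi hram hγ hϖ
  refine ⟨s, algebraMap O R w0 * wp ^ s, (w0.isUnit.map (algebraMap O R)).mul (hwp.pow s), ?_, ?_⟩
  · rw [hw0, map_mul, map_pow, hpi]; ring
  · intro j
    rw [hw0, mul_comm, DVR_mem_pow hϖ w0.isUnit]

lemma grading (hram : (maximalIdeal O).map (algebraMap O R) = (maximalIdeal R) ^ 2)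
    {γ : R} (hγ : Irreducible γ) (u v : O) (n : ℕ) :
    (algebraMap O R u + algebraMap O R v * γ ∈ (maximalIdeal R) ^ n) ↔
      (u ∈ (maximalIdeal O) ^ ((n+1)/2) ∧ v ∈ (maximalIdeal O) ^ (n/2)) := by
  obtain ⟨ϖ, hϖ⟩ := IsDiscreteValuationRing.exists_irreducible O
  rcases eq_or_ne u 0 with rfl | hu <;> rcases eq_or_ne v 0 with rfl | hv
  · simp
  · obtain ⟨t, w, hw, hv', hvmem⟩ := shape hram hγ hϖ hv
    have he : algebraMap O R 0 + algebraMap O R v * γ = γ ^ (2*t+1) * w := by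
      rw [map_zero, zero_add, hv']; ring
    rw [he, DVR_mem_pow hγ hw, hvmem]
    simp only [map_zero, Submodule.zero_mem, true_and]
    omega
  · obtain ⟨s, w, hw, hu', humem⟩ := shape hram hγ hϖ hu
    have he : algebraMap O R u + algebraMap O R 0 * γ = γ ^ (2*s) * w := by
      rw [map_zero, zero_mul, add_zero, hu']
    rw [he, DVR_mem_pow hγ hw, humem]
    simp only [map_zero, Submodule.zero_mem, and_true]
    omega
  · obtain ⟨s, wu, hwu, hu', humem⟩ := shape hram hγ hϖ hu
    obtain ⟨t, wv, hwv, hv', hvmem⟩ := shape hram hγ hϖ hv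
    have key : ∀ (a b : ℕ) (wa wb : R), IsUnit wa → IsUnit wb → a < b →
        ∃ w, IsUnit w ∧ γ ^ a * wa + γ ^ b * wb = γ ^ a * w := by
      intro a b wa wb hwa hwb hab
      refine ⟨wa + γ ^ (b-a) * wb, isUnit_add_mem_max hwa ?_, ?_⟩
      · rw [hγ.maximalIdeal_eq, Ideal.mem_span_singleton]
        exact dvd_mul_of_dvd_left (dvd_pow_self γ (by omega)) _
      · have hba : a + (b - a) = b := by omega
        rw [mul_add, ← mul_assoc, ← pow_add, hba]
    have he : algebraMap O R u + algebraMap O R v * γ = γ ^ (2*s) * wu + γ ^ (2*t+1) * wv := by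
      rw [hu', hv']; ring
    rcases lt_trichotomy (2*s) (2*t+1) with h | h | h
    · obtain ⟨w, hwun, hsum⟩ := key (2*s) (2*t+1) wu wv hwu hwv h
      rw [he, hsum, DVR_mem_pow hγ hwun, humem, hvmem]
      omega
    · omega
    · obtain ⟨w, hwun, hsum⟩ := key (2*t+1) (2*s) wv wu hwv hwu h
      rw [he, add_comm, hsum, DVR_mem_pow hγ hwun, humem, hvmem]
      omega

end Ram

section Together
variable {O K R k : Type*} [CommRing O] [IsDomain O] [IsDiscreteValuationRing O]
  [Field K] [Algebra O K] [IsFractionRing O K]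
  [CommRing R] [IsDomain R] [IsDiscreteValuationRing R]
  [Field k] [Algebra R k] [IsFractionRing R k]
  [Algebra O R] [Algebra K k] [Algebra O k]
  [IsScalarTower O K k] [IsScalarTower O R k]

lemma notinK (h2 : Module.finrank K k = 2) {γ : R}
    (hgen : Algebra.adjoin K {algebraMap R k γ} = ⊤) :
    algebraMap R k γ ∉ Set.range (algebraMap K k) := by
  rintro ⟨y, hy⟩
  have hle : Algebra.adjoin K {algebraMap R k γ} ≤ ⊥ := by
    rw [Algebra.adjoin_le_iff]
    intro z hz
    rw [Set.mem_singleton_iff] at hz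
    subst hz
    rw [SetLike.mem_coe, Algebra.mem_bot]
    exact ⟨y, hy⟩
  have hbt : (⊥ : Subalgebra K k) = ⊤ := le_antisymm bot_le (hgen ▸ hle)
  have h1 := Subalgebra.bot_eq_top_iff_finrank_eq_one.mp hbt
  rw [h2] at h1
  omega

lemma notinK_neg {γ : R} (h : algebraMap R k γ ∉ Set.range (algebraMap K k)) :
    algebraMap R k (-γ) ∉ Set.range (algebraMap K k) := by
  rintro ⟨y, hy⟩
  exact h ⟨-y, by rw [map_neg, hy, map_neg, neg_neg]⟩

lemma indep (h2 : Module.finrank K k = 2) {γ : R}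
    (hγK : algebraMap R k γ ∉ Set.range (algebraMap K k))
    {e f : O} (h : algebraMap O R e * γ + algebraMap O R f = 0) : e = 0 ∧ f = 0 := by
  rcases eq_or_ne e 0 with rfl | he
  · refine ⟨rfl, ?_⟩
    rw [map_zero, zero_mul, zero_add] at h
    exact injOR (R := R) K k (h.trans (map_zero _).symm)
  · exfalso
    apply hγK
    have hk : algebraMap K k (algebraMap O K e) * algebraMap R k γ
        + algebraMap K k (algebraMap O K f) = 0 := by
      have h' := congrArg (algebraMap R k) h
      rw [map_add, map_mul, map_zero, comm_alg K e, comm_alg K f] at h'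
      exact h'
    have he' : algebraMap O K e ≠ 0 := fun h0 => he (injOK (K := K) (by rw [h0, map_zero]))
    have he'' : algebraMap K k (algebraMap O K e) ≠ 0 :=
      fun h0 => he' ((algebraMap K k).injective (by rw [h0, map_zero]))
    refine ⟨-(algebraMap O K f) / (algebraMap O K e), ?_⟩
    rw [map_div₀, map_neg]
    field_simp
    linear_combination -hk

lemma rootData (h2 : Module.finrank K k = 2) (T N : R → O)
    (hT : ∀ η : R, algebraMap O K (T η) = Algebra.trace K k (algebraMap R k η))
    (hN : ∀ η : R, algebraMap O K (N η) = Algebra.norm K (algebraMap R k η))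
    {γ : R} (hγK : algebraMap R k γ ∉ Set.range (algebraMap K k)) {A₁ A₂ : O}
    (hroot : γ^2 + algebraMap O R A₁ * γ + algebraMap O R A₂ = 0) :
    T γ = -A₁ ∧ N γ = A₂ := by
  have hq := R_quadId h2 T N hT hN γ
  have hlin : algebraMap O R (A₁ + T γ) * γ + algebraMap O R (A₂ - N γ) = 0 := by
    rw [map_add, map_sub]
    linear_combination hroot - hq
  obtain ⟨h1, h2'⟩ := indep h2 hγK hlin
  exact ⟨by linear_combination h1, by linear_combination -h2'⟩

lemma relcoef (h2 : Module.finrank K k = 2) {β γ : R}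
    (hβK : algebraMap R k β ∉ Set.range (algebraMap K k)) {c d : O} (hd : d ≠ 0)
    (hγeq : γ = algebraMap O R c + algebraMap O R d * β)
    {A₁ A₂ B₁ B₂ : O}
    (hγroot : γ^2 + algebraMap O R A₁ * γ + algebraMap O R A₂ = 0)
    (hβroot : β^2 + algebraMap O R B₁ * β + algebraMap O R B₂ = 0) :
    d * B₁ = A₁ + 2*c ∧ d^2 * B₂ = A₂ + A₁*c + c^2 := by
  subst hγeq
  have hlin : algebraMap O R (2*c*d + A₁*d - d^2*B₁) * β
      + algebraMap O R (c^2 + A₁*c + A₂ - d^2*B₂) = 0 := by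
    simp only [map_add, map_sub, map_mul, map_pow, map_ofNat]
    linear_combination hγroot - (algebraMap O R d)^2 * hβroot
  obtain ⟨h1, h2'⟩ := indep h2 hβK hlin
  constructor
  · apply mul_left_cancel₀ hd
    linear_combination -h1
  · linear_combination -h2'


lemma div_induct (hram : (maximalIdeal O).map (algebraMap O R) = (maximalIdeal R) ^ 2)
    {β : R} (hβ : Irreducible β) (hinj : Function.Injective (algebraMap O R)) :
    ∀ (w : O), w ≠ 0 → ∀ x : R,
      (∃ u v : O, algebraMap O R w * x = algebraMap O R u + algebraMap O R v * β) →
      ∃ u v : O, x = algebraMap O R u + algebraMap O R v * β := by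
  obtain ⟨ϖ, hϖ⟩ := IsDiscreteValuationRing.exists_irreducible O
  have hπ0 : algebraMap O R ϖ ≠ 0 :=
    fun h0 => hϖ.ne_zero (hinj (by rw [h0, map_zero]))
  suffices H : ∀ (n : ℕ) (w0 : Oˣ) (x : R),
      (∃ u v : O, algebraMap O R ((w0 : O) * ϖ ^ n) * x
        = algebraMap O R u + algebraMap O R v * β) →
      ∃ u v : O, x = algebraMap O R u + algebraMap O R v * β by
    intro w hw x hx
    obtain ⟨n, w0, hww⟩ := IsDiscreteValuationRing.eq_unit_mul_pow_irreducible hw hϖ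
    rw [hww] at hx
    exact H n w0 x hx
  intro n
  induction n with
  | zero =>
    rintro w0 x ⟨u, v, h⟩
    refine ⟨(w0⁻¹ : Oˣ) * u, (w0⁻¹ : Oˣ) * v, ?_⟩
    have h' := congrArg (fun z => algebraMap O R ((w0⁻¹ : Oˣ) : O) * z) h
    simp only [pow_zero, mul_one] at h'
    rw [← mul_assoc, ← map_mul, Units.inv_mul, map_one, one_mul] at h'
    rw [h']
    simp only [map_mul]
    ring
  | succ n ih =>
    rintro w0 x ⟨u, v, h⟩
    have hsplit : (w0 : O) * ϖ ^ (n+1) = ϖ * ((w0 : O) * ϖ ^ n) := by ring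
    rw [hsplit, map_mul, mul_assoc] at h
    have hm2 : (maximalIdeal R)^2 = Ideal.span {algebraMap O R ϖ} := by
      rw [← hram, hϖ.maximalIdeal_eq, Ideal.map_span, Set.image_singleton]
    have hmem : algebraMap O R u + algebraMap O R v * β ∈ (maximalIdeal R)^2 := by
      rw [hm2, Ideal.mem_span_singleton]
      exact ⟨algebraMap O R ((w0 : O) * ϖ ^ n) * x, h.symm⟩
    rw [grading hram hβ u v 2] at hmem
    obtain ⟨hu, hv⟩ := hmem
    have hu' : ϖ ∣ u := by
      rw [← Ideal.mem_span_singleton, ← hϖ.maximalIdeal_eq]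
      exact Ideal.pow_le_self one_ne_zero (by exact hu)
    have hv' : ϖ ∣ v := by
      rw [← Ideal.mem_span_singleton, ← hϖ.maximalIdeal_eq]
      exact Ideal.pow_le_self one_ne_zero (by exact hv)
    obtain ⟨u1, rfl⟩ := hu'
    obtain ⟨v1, rfl⟩ := hv'
    apply ih w0 x
    refine ⟨u1, v1, ?_⟩
    apply mul_left_cancel₀ hπ0
    rw [h, map_mul, map_mul]
    ring

lemma decomp_base (h2 : Module.finrank K k = 2)
    (hram : (maximalIdeal O).map (algebraMap O R) = (maximalIdeal R) ^ 2)
    {β : R} (hβ : Irreducible β)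
    (hβK : algebraMap R k β ∉ Set.range (algebraMap K k)) (x : R) :
    ∃ u v : O, x = algebraMap O R u + algebraMap O R v * β := by
  have hβ0 : algebraMap R k β ≠ 0 :=
    fun h0 => hβ.ne_zero (IsFractionRing.injective R k (by rw [h0, map_zero]))
  have hli : LinearIndependent K ![(1 : k), algebraMap R k β] := by
    rw [linearIndependent_fin2]
    refine ⟨by simpa using hβ0, fun a ha => ?_⟩
    simp only [Matrix.cons_val_one, Matrix.head_cons, Matrix.cons_val_zero] at ha
    rcases eq_or_ne a 0 with rfl | ha0
    · simp at ha
    · exact hβK ⟨a⁻¹, by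
        rw [Algebra.algebraMap_eq_smul_one, ← ha, smul_smul, inv_mul_cancel₀ ha0, one_smul]⟩
  have hcard : Fintype.card (Fin 2) = Module.finrank K k := by simp [h2]
  let B := basisOfLinearIndependentOfCardEqFinrank hli hcard
  have hB : ⇑B = ![(1:k), algebraMap R k β] := coe_basisOfLinearIndependentOfCardEqFinrank hli hcard
  have hB0 : B 0 = 1 := by rw [hB]; rfl
  have hB1 : B 1 = algebraMap R k β := by rw [hB]; rfl
  have hsum := B.sum_repr (algebraMap R k x)
  rw [Fin.sum_univ_two, hB0, hB1] at hsum
  set r := B.repr (algebraMap R k x) 0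
  set s := B.repr (algebraMap R k x) 1
  have hy : algebraMap R k x = algebraMap K k r + algebraMap K k s * algebraMap R k β := by
    rw [← hsum, Algebra.smul_def, Algebra.smul_def, mul_one]
  obtain ⟨⟨r0, rd⟩, hr⟩ := IsLocalization.surj (nonZeroDivisors O) r
  obtain ⟨⟨s0, sd⟩, hs⟩ := IsLocalization.surj (nonZeroDivisors O) s
  have key : algebraMap O R ((rd:O)*(sd:O)) * x
      = algebraMap O R ((sd:O)*r0) + algebraMap O R ((rd:O)*s0) * β := by
    apply IsFractionRing.injective R k
    rw [map_mul, hy]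
    simp only [map_mul, map_add]
    rw [comm_alg K ((rd : O)), comm_alg K ((sd : O)), comm_alg K r0, comm_alg K s0]
    have hr' := congrArg (algebraMap K k) hr
    have hs' := congrArg (algebraMap K k) hs
    simp only [map_mul] at hr' hs'
    linear_combination (algebraMap K k (algebraMap O K ((sd:O)))) * hr'
      + (algebraMap K k (algebraMap O K ((rd:O)))) * (algebraMap R k β) * hs'
  -- divide
  have hw : (rd:O)*(sd:O) ≠ 0 :=
    mul_ne_zero (nonZeroDivisors.coe_ne_zero rd) (nonZeroDivisors.coe_ne_zero sd)
  exact div_induct hram hβ (injOR (R := R) K k) _ hw x ⟨_, _, key⟩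

end Together

section Together2
variable {O K R k : Type*} [CommRing O] [IsDomain O] [IsDiscreteValuationRing O]
  [Field K] [Algebra O K] [IsFractionRing O K]
  [CommRing R] [IsDomain R] [IsDiscreteValuationRing R]
  [Field k] [Algebra R k] [IsFractionRing R k]
  [Algebra O R] [Algebra K k] [Algebra O k]
  [IsScalarTower O K k] [IsScalarTower O R k]

lemma alg_mem_max_mpr (hram : (maximalIdeal O).map (algebraMap O R) = (maximalIdeal R) ^ 2)
    {u : O} (h : u ∈ maximalIdeal O) : algebraMap O R u ∈ (maximalIdeal R)^2 := by
  rw [← hram]; exact Ideal.mem_map_of_mem _ h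

lemma alg_mem_max (hram : (maximalIdeal O).map (algebraMap O R) = (maximalIdeal R) ^ 2)
    (u : O) : algebraMap O R u ∈ maximalIdeal R ↔ u ∈ maximalIdeal O := by
  constructor
  · intro h
    rw [IsLocalRing.mem_maximalIdeal, mem_nonunits_iff] at h ⊢
    intro hu
    exact h (hu.map (algebraMap O R))
  · intro h
    exact Ideal.pow_le_self two_ne_zero (alg_mem_max_mpr hram h)

lemma mem_p_shift {a b : O} (i : ℕ) (hi : 1 ≤ i) (h : a - b ∈ (maximalIdeal O)^i)
    (hb : b ∈ maximalIdeal O) : a ∈ maximalIdeal O := by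
  have h1 : a - b ∈ maximalIdeal O := Ideal.pow_le_self (by omega) h
  have h2 : a = (a - b) + b := by ring
  rw [h2]; exact Ideal.add_mem _ h1 hb

lemma unif_rel (h2 : Module.finrank K k = 2)
    (hram : (maximalIdeal O).map (algebraMap O R) = (maximalIdeal R) ^ 2)
    {β : R} (hβ : Irreducible β) (hβK : algebraMap R k β ∉ Set.range (algebraMap K k))
    {γ : R} (hγ : Irreducible γ) :
    ∃ c d : O, c ∈ maximalIdeal O ∧ IsUnit d ∧
      γ = algebraMap O R c + algebraMap O R d * β := by
  obtain ⟨c, d, hcd⟩ := decomp_base h2 hram hβ hβK γ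
  have hβm : β ∈ maximalIdeal R := by
    rw [IsLocalRing.mem_maximalIdeal, mem_nonunits_iff]; exact hβ.not_isUnit
  have hγm : γ ∈ maximalIdeal R := by
    rw [IsLocalRing.mem_maximalIdeal, mem_nonunits_iff]; exact hγ.not_isUnit
  have hc : c ∈ maximalIdeal O := by
    have h1 : algebraMap O R c ∈ maximalIdeal R := by
      have he : algebraMap O R c = γ - algebraMap O R d * β := by rw [hcd]; ring
      rw [he]
      exact Ideal.sub_mem _ hγm (Ideal.mul_mem_left _ _ hβm)
    exact (alg_mem_max hram c).mp h1
  have hd : IsUnit d := by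
    by_contra hdu
    have hdm : d ∈ maximalIdeal O := by rwa [IsLocalRing.mem_maximalIdeal, mem_nonunits_iff]
    have : γ ∈ (maximalIdeal R)^2 := by
      rw [hcd]
      exact Ideal.add_mem _ (alg_mem_max_mpr hram hc)
        (Ideal.mul_mem_right _ _ (alg_mem_max_mpr hram hdm))
    exact DVR_irred_not_sq hγ this
  exact ⟨c, d, hc, hd, hcd⟩

lemma unif_rel2 (h2 : Module.finrank K k = 2)
    (hram : (maximalIdeal O).map (algebraMap O R) = (maximalIdeal R) ^ 2)
    {β : R} (hβ : Irreducible β) (hβK : algebraMap R k β ∉ Set.range (algebraMap K k))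
    {γ γ' : R} (hγ : Irreducible γ) (hγ' : Irreducible γ') :
    ∃ C D : O, C ∈ maximalIdeal O ∧ IsUnit D ∧
      γ = algebraMap O R C + algebraMap O R D * γ' := by
  obtain ⟨c, d, hc, hd, h⟩ := unif_rel h2 hram hβ hβK hγ
  obtain ⟨c', d', hc', hd', h'⟩ := unif_rel h2 hram hβ hβK hγ'
  obtain ⟨d'u, hd'u⟩ := hd'
  set D := d * ((d'u⁻¹ : Oˣ) : O) with hD
  have hDd' : D * d' = d := by
    rw [hD, ← hd'u, mul_assoc, Units.inv_mul, mul_one]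
  refine ⟨c - D * c', D, Ideal.sub_mem _ hc (Ideal.mul_mem_left _ _ hc'),
    hd.mul (Units.isUnit _), ?_⟩
  rw [h, h']
  simp only [map_sub, map_mul]
  have hm : algebraMap O R D * algebraMap O R d' = algebraMap O R d := by
    rw [← map_mul, hDd']
  linear_combination (-β) * hm

lemma decomp_unif (h2 : Module.finrank K k = 2)
    (hram : (maximalIdeal O).map (algebraMap O R) = (maximalIdeal R) ^ 2)
    {β : R} (hβ : Irreducible β) (hβK : algebraMap R k β ∉ Set.range (algebraMap K k))
    {γ : R} (hγ : Irreducible γ) (x : R) :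
    ∃ u v : O, x = algebraMap O R u + algebraMap O R v * γ := by
  obtain ⟨c, d, hc, hd, hrel⟩ := unif_rel h2 hram hβ hβK hγ
  obtain ⟨u0, v0, h0⟩ := decomp_base h2 hram hβ hβK x
  obtain ⟨du, hdu⟩ := hd
  set e := ((du⁻¹ : Oˣ) : O) with he
  have hdd : e * d = 1 := by rw [he, ← hdu]; exact Units.inv_mul _
  refine ⟨u0 - v0 * e * c, v0 * e, ?_⟩
  rw [h0, hrel]
  simp only [map_sub, map_mul]
  have key : algebraMap O R e * algebraMap O R d = 1 := by rw [← map_mul, hdd, map_one]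
  linear_combination (-(algebraMap O R v0)) * β * key

lemma mem_m_of_TN (h2 : Module.finrank K k = 2) (T N : R → O)
    (hT : ∀ η : R, algebraMap O K (T η) = Algebra.trace K k (algebraMap R k η))
    (hN : ∀ η : R, algebraMap O K (N η) = Algebra.norm K (algebraMap R k η))
    (hram : (maximalIdeal O).map (algebraMap O R) = (maximalIdeal R) ^ 2)
    {x : R} (hTx : T x ∈ maximalIdeal O) (hNx : N x ∈ maximalIdeal O) :
    x ∈ maximalIdeal R := by
  have hq := R_quadId h2 T N hT hN x
  have hx2 : x^2 ∈ maximalIdeal R := by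
    rw [hq]
    exact Ideal.sub_mem _ (Ideal.mul_mem_right _ _ ((alg_mem_max hram _).mpr hTx))
      ((alg_mem_max hram _).mpr hNx)
  exact (IsLocalRing.maximalIdeal.isMaximal R).isPrime.mem_of_pow_mem 2 hx2

lemma unif_of_TN (h2 : Module.finrank K k = 2) (T N : R → O)
    (hT : ∀ η : R, algebraMap O K (T η) = Algebra.trace K k (algebraMap R k η))
    (hN : ∀ η : R, algebraMap O K (N η) = Algebra.norm K (algebraMap R k η))
    (hram : (maximalIdeal O).map (algebraMap O R) = (maximalIdeal R) ^ 2)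
    {x : R} (hTx : T x ∈ maximalIdeal O) (hNx : N x ∈ maximalIdeal O)
    (hN2 : N x ∉ (maximalIdeal O)^2) : Irreducible x := by
  have hm : x ∈ maximalIdeal R := mem_m_of_TN h2 T N hT hN hram hTx hNx
  have hsq : x ∉ (maximalIdeal R)^2 := by
    intro hx2
    apply hN2
    obtain ⟨ϖ, hϖ⟩ := IsDiscreteValuationRing.exists_irreducible O
    have hm2 : (maximalIdeal R)^2 = Ideal.span {algebraMap O R ϖ} := by
      rw [← hram, hϖ.maximalIdeal_eq, Ideal.map_span, Set.image_singleton]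
    rw [hm2, Ideal.mem_span_singleton] at hx2
    obtain ⟨y, rfl⟩ := hx2
    rw [N_smul h2 N hN y ϖ]
    rw [hϖ.maximalIdeal_eq, Ideal.span_singleton_pow, Ideal.mem_span_singleton]
    exact Dvd.intro _ rfl
  exact DVR_mem_not_sq_irred hm hsq

end Together2

section CardW
variable {O K R k : Type*} [CommRing O] [IsDomain O] [IsDiscreteValuationRing O]
  [Field K] [Algebra O K] [IsFractionRing O K]
  [CommRing R] [IsDomain R] [IsDiscreteValuationRing R]
  [Field k] [Algebra R k] [IsFractionRing R k]
  [Algebra O R] [Algebra K k] [Algebra O k]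
  [IsScalarTower O K k] [IsScalarTower O R k]

lemma cardW (h2 : Module.finrank K k = 2) (T N : R → O)
    (hT : ∀ η : R, algebraMap O K (T η) = Algebra.trace K k (algebraMap R k η))
    (hN : ∀ η : R, algebraMap O K (N η) = Algebra.norm K (algebraMap R k η))
    (i₁ i₂ n : ℕ) (h21 : i₂ ≤ i₁ + 1)
    {c d e : O} (hc : c ∈ maximalIdeal O) (hde : d * e = 1)
    {A₁ A₂ B₁ B₂ : O} (r₁ : d * B₁ = A₁ + 2*c) (r₂ : d^2 * B₂ = A₂ + A₁*c + c^2) :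
    Nat.card {x : R ⧸ (maximalIdeal R)^n // ∃ η : R,
        Ideal.Quotient.mk ((maximalIdeal R)^n) η = x ∧
        T η - A₁ ∈ (maximalIdeal O)^i₁ ∧ N η - A₂ ∈ (maximalIdeal O)^i₂}
    = Nat.card {x : R ⧸ (maximalIdeal R)^n // ∃ η : R,
        Ideal.Quotient.mk ((maximalIdeal R)^n) η = x ∧
        T η - B₁ ∈ (maximalIdeal O)^i₁ ∧ N η - B₂ ∈ (maximalIdeal O)^i₂} := by
  have key : algebraMap O R d * algebraMap O R e = 1 := by rw [← map_mul, hde, map_one]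
  have key' : algebraMap O R e * algebraMap O R d = 1 := by rw [mul_comm]; exact key
  have hcondF : ∀ η : R, T η - A₁ ∈ (maximalIdeal O)^i₁ → N η - A₂ ∈ (maximalIdeal O)^i₂ →
      (T (algebraMap O R e * (η + algebraMap O R c)) - B₁ ∈ (maximalIdeal O)^i₁ ∧
       N (algebraMap O R e * (η + algebraMap O R c)) - B₂ ∈ (maximalIdeal O)^i₂) := by
    intro η hTm hNm
    have hTe : T (algebraMap O R e * (η + algebraMap O R c)) - B₁ = e * (T η - A₁) := by
      rw [T_smul T hT, T_add_const h2 T hT]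
      linear_combination (-e) * r₁ + B₁ * hde
    have hNe : N (algebraMap O R e * (η + algebraMap O R c)) - B₂
        = e^2 * ((N η - A₂) + c * (T η - A₁)) := by
      rw [N_smul h2 N hN, N_add_const h2 T N hT hN]
      linear_combination (-(e^2)) * r₂ + B₂*(d*e+1)*hde
    constructor
    · rw [hTe]; exact Ideal.mul_mem_left _ _ hTm
    · rw [hNe]
      refine Ideal.mul_mem_left _ _ (Ideal.add_mem _ hNm ?_)
      refine Ideal.pow_le_pow_right h21 ?_
      rw [pow_succ, mul_comm c (T η - A₁)]
      exact Ideal.mul_mem_mul hTm hc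
  have hcondB : ∀ ξ : R, T ξ - B₁ ∈ (maximalIdeal O)^i₁ → N ξ - B₂ ∈ (maximalIdeal O)^i₂ →
      (T (algebraMap O R d * ξ - algebraMap O R c) - A₁ ∈ (maximalIdeal O)^i₁ ∧
       N (algebraMap O R d * ξ - algebraMap O R c) - A₂ ∈ (maximalIdeal O)^i₂) := by
    intro ξ hTm hNm
    have hrw : algebraMap O R d * ξ - algebraMap O R c
        = algebraMap O R d * ξ + algebraMap O R (-c) := by rw [map_neg]; ring
    have hTe : T (algebraMap O R d * ξ - algebraMap O R c) - A₁ = d * (T ξ - B₁) := by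
      rw [hrw, T_add_const h2 T hT, T_smul T hT]
      linear_combination r₁
    have hNe : N (algebraMap O R d * ξ - algebraMap O R c) - A₂
        = d^2 * (N ξ - B₂) - c * (d * (T ξ - B₁)) := by
      rw [hrw, N_add_const h2 T N hT hN, T_smul T hT, N_smul h2 N hN]
      linear_combination r₂ - c * r₁
    constructor
    · rw [hTe]; exact Ideal.mul_mem_left _ _ hTm
    · rw [hNe]
      refine Ideal.sub_mem _ (Ideal.mul_mem_left _ _ hNm) ?_
      refine Ideal.pow_le_pow_right h21 ?_
      rw [pow_succ, mul_comm c (d * (T ξ - B₁))]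
      exact Ideal.mul_mem_mul (Ideal.mul_mem_left _ _ hTm) hc
  refine Nat.card_eq_of_bijective
    (fun x => ⟨Ideal.Quotient.mk _ (algebraMap O R e * (x.2.choose + algebraMap O R c)),
      algebraMap O R e * (x.2.choose + algebraMap O R c), rfl,
      (hcondF _ x.2.choose_spec.2.1 x.2.choose_spec.2.2).1,
      (hcondF _ x.2.choose_spec.2.1 x.2.choose_spec.2.2).2⟩) ⟨?_, ?_⟩
  · intro x y hxy
    have h1 := congrArg Subtype.val hxy
    simp only at h1
    rw [Ideal.Quotient.eq] at h1
    have h3 : x.2.choose - y.2.choose ∈ (maximalIdeal R)^n := by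
      have h4 : x.2.choose - y.2.choose
          = algebraMap O R d * (algebraMap O R e * (x.2.choose + algebraMap O R c)
            - algebraMap O R e * (y.2.choose + algebraMap O R c)) := by
        rw [mul_sub, ← mul_assoc, ← mul_assoc, key]
        ring
      rw [h4]
      exact Ideal.mul_mem_left _ _ h1
    apply Subtype.ext
    rw [← x.2.choose_spec.1, ← y.2.choose_spec.1, Ideal.Quotient.eq]
    exact h3
  · intro y
    set ξ := y.2.choose with hξ
    obtain ⟨hy1, hyT, hyN⟩ := y.2.choose_spec
    set η := algebraMap O R d * ξ - algebraMap O R c with hη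
    obtain ⟨hηT, hηN⟩ := hcondB ξ hyT hyN
    refine ⟨⟨Ideal.Quotient.mk _ η, η, rfl, hηT, hηN⟩, ?_⟩
    apply Subtype.ext
    simp only
    have hspec := (⟨Ideal.Quotient.mk ((maximalIdeal R)^n) η, η, rfl, hηT, hηN⟩ :
      {x : R ⧸ (maximalIdeal R)^n // ∃ η : R,
        Ideal.Quotient.mk ((maximalIdeal R)^n) η = x ∧
        T η - A₁ ∈ (maximalIdeal O)^i₁ ∧ N η - A₂ ∈ (maximalIdeal O)^i₂}).2.choose_spec
    set η' := (⟨Ideal.Quotient.mk ((maximalIdeal R)^n) η, η, rfl, hηT, hηN⟩ :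
      {x : R ⧸ (maximalIdeal R)^n // ∃ η : R,
        Ideal.Quotient.mk ((maximalIdeal R)^n) η = x ∧
        T η - A₁ ∈ (maximalIdeal O)^i₁ ∧ N η - A₂ ∈ (maximalIdeal O)^i₂}).2.choose with hη'
    rw [← hy1]
    rw [Ideal.Quotient.eq]
    have hd1 : η' - η ∈ (maximalIdeal R)^n := by
      rw [← Ideal.Quotient.eq]
      exact hspec.1
    have he2 : algebraMap O R e * (η + algebraMap O R c) = ξ := by
      rw [hη, sub_add_cancel, ← mul_assoc, key', one_mul]
    have hfin : algebraMap O R e * (η' + algebraMap O R c) - ξ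
        = algebraMap O R e * (η' - η) := by
      rw [← he2]; ring
    rw [hfin]
    exact Ideal.mul_mem_left _ _ hd1
end CardW

section CardCore
variable {O K : Type*} [CommRing O] [IsDomain O] [IsDiscreteValuationRing O]
  [Field K] [Algebra O K] [IsFractionRing O K]
  {R k : Type*} [CommRing R] [IsDomain R] [IsDiscreteValuationRing R]
  [Field k] [Algebra R k] [IsFractionRing R k]
  [Algebra O R] [Algebra K k] [Algebra O k]
  [IsScalarTower O K k] [IsScalarTower O R k]
  {R' k' : Type*} [CommRing R'] [IsDomain R'] [IsDiscreteValuationRing R']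
  [Field k'] [Algebra R' k'] [IsFractionRing R' k']
  [Algebra O R'] [Algebra K k'] [Algebra O k']
  [IsScalarTower O K k'] [IsScalarTower O R' k']

lemma cardCore (h2 : Module.finrank K k = 2) (T N : R → O)
    (hT : ∀ η : R, algebraMap O K (T η) = Algebra.trace K k (algebraMap R k η))
    (hN : ∀ η : R, algebraMap O K (N η) = Algebra.norm K (algebraMap R k η))
    (hram : (maximalIdeal O).map (algebraMap O R) = (maximalIdeal R) ^ 2)
    {β : R} (hβ : Irreducible β) (hβK : algebraMap R k β ∉ Set.range (algebraMap K k))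
    (h2' : Module.finrank K k' = 2) (T' N' : R' → O)
    (hT' : ∀ η : R', algebraMap O K (T' η) = Algebra.trace K k' (algebraMap R' k' η))
    (hN' : ∀ η : R', algebraMap O K (N' η) = Algebra.norm K (algebraMap R' k' η))
    (hram' : (maximalIdeal O).map (algebraMap O R') = (maximalIdeal R') ^ 2)
    {β' : R'} (hβ' : Irreducible β')
    (hβ'K : algebraMap R' k' β' ∉ Set.range (algebraMap K k'))
    (i₁ i₂ n : ℕ) (hi1 : 1 ≤ i₁) (h12 : i₁ ≤ i₂) (h21 : i₂ ≤ i₁ + 1)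
    {A₁ A₂ : O} (hA₁ : A₁ ∈ maximalIdeal O) (hA₂ : A₂ ∈ maximalIdeal O)
    {γ' : R'} (hγ' : Irreducible γ') (hT'γ : T' γ' = A₁) (hN'γ : N' γ' = A₂)
    {η₀ : R} (hη₀ : Irreducible η₀)
    (h₀T : T η₀ - A₁ ∈ (maximalIdeal O)^i₁) (h₀N : N η₀ - A₂ ∈ (maximalIdeal O)^i₂) :
    Nat.card {x : R ⧸ (maximalIdeal R)^n // ∃ η : R,
        Ideal.Quotient.mk ((maximalIdeal R)^n) η = x ∧
        T η - A₁ ∈ (maximalIdeal O)^i₁ ∧ N η - A₂ ∈ (maximalIdeal O)^i₂}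
    = Nat.card {x : R' ⧸ (maximalIdeal R')^n // ∃ ξ : R',
        Ideal.Quotient.mk ((maximalIdeal R')^n) ξ = x ∧
        T' ξ - T η₀ ∈ (maximalIdeal O)^i₁ ∧ N' ξ - N η₀ ∈ (maximalIdeal O)^i₂} := by
  have hi2 : 1 ≤ i₂ := le_trans hi1 h12
  have hTη₀p : T η₀ ∈ maximalIdeal O := mem_p_shift i₁ hi1 h₀T hA₁
  have hNη₀p : N η₀ ∈ maximalIdeal O := mem_p_shift i₂ hi2 h₀N hA₂
  have hη₀m : η₀ ∈ maximalIdeal R := by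
    rw [IsLocalRing.mem_maximalIdeal, mem_nonunits_iff]; exact hη₀.not_isUnit
  have hγ'm : γ' ∈ maximalIdeal R' := by
    rw [IsLocalRing.mem_maximalIdeal, mem_nonunits_iff]; exact hγ'.not_isUnit
  have hdec : ∀ x : R, ∃ uv : O × O,
      x = algebraMap O R uv.1 + algebraMap O R uv.2 * η₀ := by
    intro x
    obtain ⟨u, v, h⟩ := decomp_unif h2 hram hβ hβK hη₀ x
    exact ⟨(u, v), h⟩
  have hdec' : ∀ x : R', ∃ uv : O × O,
      x = algebraMap O R' uv.1 + algebraMap O R' uv.2 * γ' := by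
    intro x
    obtain ⟨u, v, h⟩ := decomp_unif h2' hram' hβ' hβ'K hγ' x
    exact ⟨(u, v), h⟩
  have hcross : ∀ w z : O,
      (algebraMap O R w + algebraMap O R z * η₀ ∈ (maximalIdeal R)^n) →
      (algebraMap O R' w + algebraMap O R' z * γ' ∈ (maximalIdeal R')^n) := by
    intro w z h
    rw [grading hram hη₀] at h
    rw [grading hram' hγ']
    exact h
  have hcross' : ∀ w z : O,
      (algebraMap O R' w + algebraMap O R' z * γ' ∈ (maximalIdeal R')^n) →
      (algebraMap O R w + algebraMap O R z * η₀ ∈ (maximalIdeal R)^n) := by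
    intro w z h
    rw [grading hram' hγ'] at h
    rw [grading hram hη₀]
    exact h
  -- condition transfer, forward
  have hcondF : ∀ (η : R) (u v : O), η = algebraMap O R u + algebraMap O R v * η₀ →
      T η - A₁ ∈ (maximalIdeal O)^i₁ → N η - A₂ ∈ (maximalIdeal O)^i₂ →
      (T' (algebraMap O R' u + algebraMap O R' v * γ') - T η₀ ∈ (maximalIdeal O)^i₁ ∧
       N' (algebraMap O R' u + algebraMap O R' v * γ') - N η₀ ∈ (maximalIdeal O)^i₂) := by
    intro η u v hη hTc hNc
    have hTηp : T η ∈ maximalIdeal O := mem_p_shift i₁ hi1 hTc hA₁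
    have hNηp : N η ∈ maximalIdeal O := mem_p_shift i₂ hi2 hNc hA₂
    have hηm : η ∈ maximalIdeal R := mem_m_of_TN h2 T N hT hN hram hTηp hNηp
    have hup : u ∈ maximalIdeal O := by
      have hx : algebraMap O R u ∈ maximalIdeal R := by
        have he : algebraMap O R u = η - algebraMap O R v * η₀ := by rw [hη]; ring
        rw [he]
        exact Ideal.sub_mem _ hηm (Ideal.mul_mem_left _ _ hη₀m)
      exact (alg_mem_max hram u).mp hx
    have hTη : T η = 2*u + v * T η₀ := by rw [hη, T_affine h2 T N hT hN]
    have hNη : N η = u^2 + u*v*T η₀ + v^2 * N η₀ := by rw [hη, N_affine h2 T N hT hN]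
    have hT'ξ : T' (algebraMap O R' u + algebraMap O R' v * γ') = 2*u + v * A₁ := by
      rw [T_affine h2' T' N' hT' hN', hT'γ]
    have hN'ξ : N' (algebraMap O R' u + algebraMap O R' v * γ')
        = u^2 + u*v*A₁ + v^2 * A₂ := by
      rw [N_affine h2' T' N' hT' hN', hT'γ, hN'γ]
    constructor
    · have heq : T' (algebraMap O R' u + algebraMap O R' v * γ') - T η₀
          = (T η - A₁) + v * (A₁ - T η₀) + (A₁ - T η₀) := by
        rw [hT'ξ, hTη]; ring
      rw [heq]
      have hm1 : A₁ - T η₀ ∈ (maximalIdeal O)^i₁ := by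
        have := Submodule.neg_mem _ h₀T; simpa using this
      exact Ideal.add_mem _ (Ideal.add_mem _ hTc (Ideal.mul_mem_left _ _ hm1)) hm1
    · have heq : N' (algebraMap O R' u + algebraMap O R' v * γ') - N η₀
          = (N η - A₂) + u * (v * (A₁ - T η₀)) + v^2 * (A₂ - N η₀) + (A₂ - N η₀) := by
        rw [hN'ξ, hNη]; ring
      rw [heq]
      have hm1 : A₁ - T η₀ ∈ (maximalIdeal O)^i₁ := by
        have := Submodule.neg_mem _ h₀T; simpa using this
      have hm2 : A₂ - N η₀ ∈ (maximalIdeal O)^i₂ := by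
        have := Submodule.neg_mem _ h₀N; simpa using this
      have hmu : u * (v * (A₁ - T η₀)) ∈ (maximalIdeal O)^i₂ := by
        refine Ideal.pow_le_pow_right h21 ?_
        rw [pow_succ, mul_comm u (v * (A₁ - T η₀))]
        exact Ideal.mul_mem_mul (Ideal.mul_mem_left _ _ hm1) hup
      exact Ideal.add_mem _ (Ideal.add_mem _ (Ideal.add_mem _ hNc hmu)
        (Ideal.mul_mem_left _ _ hm2)) hm2
  -- condition transfer, backward
  have hcondB : ∀ (ξ : R') (u v : O), ξ = algebraMap O R' u + algebraMap O R' v * γ' →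
      T' ξ - T η₀ ∈ (maximalIdeal O)^i₁ → N' ξ - N η₀ ∈ (maximalIdeal O)^i₂ →
      (T (algebraMap O R u + algebraMap O R v * η₀) - A₁ ∈ (maximalIdeal O)^i₁ ∧
       N (algebraMap O R u + algebraMap O R v * η₀) - A₂ ∈ (maximalIdeal O)^i₂) := by
    intro ξ u v hξ hTc hNc
    have hTξp : T' ξ ∈ maximalIdeal O := mem_p_shift i₁ hi1 hTc hTη₀p
    have hNξp : N' ξ ∈ maximalIdeal O := mem_p_shift i₂ hi2 hNc hNη₀p
    have hξm : ξ ∈ maximalIdeal R' := mem_m_of_TN h2' T' N' hT' hN' hram' hTξp hNξp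
    have hup : u ∈ maximalIdeal O := by
      have hx : algebraMap O R' u ∈ maximalIdeal R' := by
        have he : algebraMap O R' u = ξ - algebraMap O R' v * γ' := by rw [hξ]; ring
        rw [he]
        exact Ideal.sub_mem _ hξm (Ideal.mul_mem_left _ _ hγ'm)
      exact (alg_mem_max hram' u).mp hx
    have hT'ξ : T' ξ = 2*u + v * A₁ := by rw [hξ, T_affine h2' T' N' hT' hN', hT'γ]
    have hN'ξ : N' ξ = u^2 + u*v*A₁ + v^2 * A₂ := by
      rw [hξ, N_affine h2' T' N' hT' hN', hT'γ, hN'γ]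
    have hTη : T (algebraMap O R u + algebraMap O R v * η₀) = 2*u + v * T η₀ := by
      rw [T_affine h2 T N hT hN]
    have hNη : N (algebraMap O R u + algebraMap O R v * η₀)
        = u^2 + u*v*T η₀ + v^2 * N η₀ := by rw [N_affine h2 T N hT hN]
    constructor
    · have heq : T (algebraMap O R u + algebraMap O R v * η₀) - A₁
          = (T' ξ - T η₀) + v * (T η₀ - A₁) + (T η₀ - A₁) := by
        rw [hT'ξ, hTη]; ring
      rw [heq]
      exact Ideal.add_mem _ (Ideal.add_mem _ hTc (Ideal.mul_mem_left _ _ h₀T)) h₀T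
    · have heq : N (algebraMap O R u + algebraMap O R v * η₀) - A₂
          = (N' ξ - N η₀) + u * (v * (T η₀ - A₁)) + v^2 * (N η₀ - A₂) + (N η₀ - A₂) := by
        rw [hN'ξ, hNη]; ring
      rw [heq]
      have hmu : u * (v * (T η₀ - A₁)) ∈ (maximalIdeal O)^i₂ := by
        refine Ideal.pow_le_pow_right h21 ?_
        rw [pow_succ, mul_comm u (v * (T η₀ - A₁))]
        exact Ideal.mul_mem_mul (Ideal.mul_mem_left _ _ h₀T) hup
      exact Ideal.add_mem _ (Ideal.add_mem _ (Ideal.add_mem _ hNc hmu)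
        (Ideal.mul_mem_left _ _ h₀N)) h₀N
  -- the bijection
  refine Nat.card_eq_of_bijective (fun x =>
    ⟨Ideal.Quotient.mk _ (algebraMap O R' (hdec x.2.choose).choose.1
        + algebraMap O R' (hdec x.2.choose).choose.2 * γ'),
      _, rfl,
      (hcondF x.2.choose _ _ (hdec x.2.choose).choose_spec
        x.2.choose_spec.2.1 x.2.choose_spec.2.2).1,
      (hcondF x.2.choose _ _ (hdec x.2.choose).choose_spec
        x.2.choose_spec.2.1 x.2.choose_spec.2.2).2⟩) ⟨?_, ?_⟩
  · intro x y hxy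
    have h1 := congrArg Subtype.val hxy
    simp only at h1
    rw [Ideal.Quotient.eq] at h1
    set ux := (hdec x.2.choose).choose.1
    set vx := (hdec x.2.choose).choose.2
    set uy := (hdec y.2.choose).choose.1
    set vy := (hdec y.2.choose).choose.2
    have h2d : algebraMap O R' (ux - uy) + algebraMap O R' (vx - vy) * γ'
        ∈ (maximalIdeal R')^n := by
      rw [map_sub, map_sub]
      have he : algebraMap O R' ux - algebraMap O R' uy
          + (algebraMap O R' vx - algebraMap O R' vy) * γ'
          = (algebraMap O R' ux + algebraMap O R' vx * γ')
            - (algebraMap O R' uy + algebraMap O R' vy * γ') := by ring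
      rw [he]
      exact h1
    have h3 := hcross' _ _ h2d
    have h4 : x.2.choose - y.2.choose ∈ (maximalIdeal R)^n := by
      have hex := (hdec x.2.choose).choose_spec
      have hey := (hdec y.2.choose).choose_spec
      have he : x.2.choose - y.2.choose
          = algebraMap O R (ux - uy) + algebraMap O R (vx - vy) * η₀ := by
        rw [map_sub, map_sub]
        calc x.2.choose - y.2.choose
            = (algebraMap O R ux + algebraMap O R vx * η₀)
              - (algebraMap O R uy + algebraMap O R vy * η₀) := by rw [← hex, ← hey]
          _ = _ := by ring
      rw [he]
      exact h3
    apply Subtype.ext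
    rw [← x.2.choose_spec.1, ← y.2.choose_spec.1, Ideal.Quotient.eq]
    exact h4
  · intro y
    obtain ⟨hy1, hyT, hyN⟩ := y.2.choose_spec
    set ξ := y.2.choose with hξdef
    obtain ⟨⟨u, v⟩, huv⟩ := hdec' ξ
    obtain ⟨hηT, hηN⟩ := hcondB ξ u v huv hyT hyN
    set η := algebraMap O R u + algebraMap O R v * η₀ with hηdef
    refine ⟨⟨Ideal.Quotient.mk _ η, η, rfl, hηT, hηN⟩, ?_⟩
    apply Subtype.ext
    simp only
    rw [← hy1, Ideal.Quotient.eq]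
    set x : {x : R ⧸ (maximalIdeal R)^n // ∃ η : R,
        Ideal.Quotient.mk ((maximalIdeal R)^n) η = x ∧
        T η - A₁ ∈ (maximalIdeal O)^i₁ ∧ N η - A₂ ∈ (maximalIdeal O)^i₂} :=
      ⟨Ideal.Quotient.mk _ η, η, rfl, hηT, hηN⟩ with hxdef
    have hspec1 : Ideal.Quotient.mk ((maximalIdeal R)^n) x.2.choose
        = Ideal.Quotient.mk ((maximalIdeal R)^n) η := x.2.choose_spec.1
    have hex := (hdec x.2.choose).choose_spec
    set ut := (hdec x.2.choose).choose.1
    set vt := (hdec x.2.choose).choose.2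
    -- x.2.choose - η ∈ m^n
    have hd1 : x.2.choose - η ∈ (maximalIdeal R)^n := by
      rw [← Ideal.Quotient.eq]; exact hspec1
    have hd2 : algebraMap O R (ut - u) + algebraMap O R (vt - v) * η₀
        ∈ (maximalIdeal R)^n := by
      rw [map_sub, map_sub]
      have he : algebraMap O R ut - algebraMap O R u
          + (algebraMap O R vt - algebraMap O R v) * η₀
          = x.2.choose - η := by
        rw [hex, hηdef]; ring
      rw [he]
      exact hd1
    have hd3 := hcross _ _ hd2
    have he2 : (algebraMap O R' ut + algebraMap O R' vt * γ') - ξ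
        = algebraMap O R' (ut - u) + algebraMap O R' (vt - v) * γ' := by
      rw [huv, map_sub, map_sub]; ring
    rw [he2]
    exact hd3
end CardCore

section Small
variable {O K R k : Type*} [CommRing O] [IsDomain O] [IsDiscreteValuationRing O]
  [Field K] [Algebra O K] [IsFractionRing O K]
  [CommRing R] [IsDomain R] [IsDiscreteValuationRing R]
  [Field k] [Algebra R k] [IsFractionRing R k]
  [Algebra O R] [Algebra K k] [Algebra O k]
  [IsScalarTower O K k] [IsScalarTower O R k]

lemma card0 (T N : R → O) (A₁ A₂ : O) :
    Nat.card {x : R ⧸ (maximalIdeal R)^0 // ∃ η : R,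
        Ideal.Quotient.mk ((maximalIdeal R)^0) η = x ∧
        T η - A₁ ∈ (maximalIdeal O)^0 ∧ N η - A₂ ∈ (maximalIdeal O)^0} = 1 := by
  rw [Nat.card_eq_one_iff_unique]
  constructor
  · haveI : Subsingleton (R ⧸ (maximalIdeal R)^0) :=
      Submodule.Quotient.subsingleton_iff.mpr (by simp)
    exact ⟨fun a b => Subtype.ext (Subsingleton.elim _ _)⟩
  · exact ⟨⟨Ideal.Quotient.mk _ 0, 0, rfl, by simp, by simp⟩⟩

lemma card01 (h2 : Module.finrank K k = 2) (T N : R → O)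
    (hT : ∀ η : R, algebraMap O K (T η) = Algebra.trace K k (algebraMap R k η))
    (hN : ∀ η : R, algebraMap O K (N η) = Algebra.norm K (algebraMap R k η))
    (A₁ A₂ : O) (hA₂ : A₂ ∈ maximalIdeal O) :
    Nat.card {x : R ⧸ (maximalIdeal R)^1 // ∃ η : R,
        Ideal.Quotient.mk ((maximalIdeal R)^1) η = x ∧
        T η - A₁ ∈ (maximalIdeal O)^0 ∧ N η - A₂ ∈ (maximalIdeal O)^1} = 1 := by
  rw [Nat.card_eq_one_iff_unique]
  have hz : ∀ η : R, N η - A₂ ∈ (maximalIdeal O)^1 →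
      Ideal.Quotient.mk ((maximalIdeal R)^1) η = 0 := by
    intro η hη
    rw [Ideal.Quotient.eq_zero_iff_mem, pow_one]
    have hNp : N η ∈ maximalIdeal O := mem_p_shift 1 le_rfl (by simpa using hη) hA₂
    have hnu : ¬ IsUnit η := by
      intro hu
      have h1 := N_isUnit h2 N hN hu
      rw [IsLocalRing.mem_maximalIdeal, mem_nonunits_iff] at hNp
      exact hNp h1
    rwa [IsLocalRing.mem_maximalIdeal, mem_nonunits_iff]
  constructor
  · refine ⟨fun a b => Subtype.ext ?_⟩
    have ha := a.2.choose_spec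
    have hb := b.2.choose_spec
    rw [← ha.1, ← hb.1, hz _ ha.2.2, hz _ hb.2.2]
  · refine ⟨⟨Ideal.Quotient.mk _ 0, 0, rfl, by simp, ?_⟩⟩
    rw [N_zero h2 N hN, pow_one, zero_sub]
    exact Submodule.neg_mem _ hA₂
end Small

section Mirror
variable {O K : Type*} [CommRing O] [IsDomain O] [IsDiscreteValuationRing O]
  [Field K] [Algebra O K] [IsFractionRing O K]
  {R k : Type*} [CommRing R] [IsDomain R] [IsDiscreteValuationRing R]
  [Field k] [Algebra R k] [IsFractionRing R k]
  [Algebra O R] [Algebra K k] [Algebra O k]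
  [IsScalarTower O K k] [IsScalarTower O R k]
  {R' k' : Type*} [CommRing R'] [IsDomain R'] [IsDiscreteValuationRing R']
  [Field k'] [Algebra R' k'] [IsFractionRing R' k']
  [Algebra O R'] [Algebra K k'] [Algebra O k']
  [IsScalarTower O K k'] [IsScalarTower O R' k']

/-- If the `(B₁, B₂)`-congruence system has a solution `ξ` in `R'`, then the
`(A₁, A₂)`-system has a solution in `R`, where `(A₁,A₂)` is the exact data of the
uniformizer `γ'` of `R'` and `(B₁,B₂)` is the exact data of a uniformizer `βs` of `R`. -/
lemma mirror (h2 : Module.finrank K k = 2) (T N : R → O)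
    (hT : ∀ η : R, algebraMap O K (T η) = Algebra.trace K k (algebraMap R k η))
    (hN : ∀ η : R, algebraMap O K (N η) = Algebra.norm K (algebraMap R k η))
    (h2' : Module.finrank K k' = 2) (T' N' : R' → O)
    (hT' : ∀ η : R', algebraMap O K (T' η) = Algebra.trace K k' (algebraMap R' k' η))
    (hN' : ∀ η : R', algebraMap O K (N' η) = Algebra.norm K (algebraMap R' k' η))
    (hram' : (maximalIdeal O).map (algebraMap O R') = (maximalIdeal R') ^ 2)
    {β' : R'} (hβ' : Irreducible β')
    (hβ'K : algebraMap R' k' β' ∉ Set.range (algebraMap K k'))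
    (i₁ i₂ : ℕ) (hi1 : 1 ≤ i₁) (hi2 : 2 ≤ i₂) (h21 : i₂ ≤ i₁ + 1)
    {B₁ B₂ : O} (hB₁ : B₁ ∈ maximalIdeal O) (hB₂ : B₂ ∈ maximalIdeal O)
    (hB₂2 : B₂ ∉ (maximalIdeal O)^2)
    {βs : R} (hTβs : T βs = B₁) (hNβs : N βs = B₂)
    {A₁ A₂ : O}
    {γ' : R'} (hγ' : Irreducible γ') (hT'γ : T' γ' = A₁) (hN'γ : N' γ' = A₂)
    {ξ : R'} (hTc : T' ξ - B₁ ∈ (maximalIdeal O)^i₁) (hNc : N' ξ - B₂ ∈ (maximalIdeal O)^i₂) :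
    ∃ η : R, T η - A₁ ∈ (maximalIdeal O)^i₁ ∧ N η - A₂ ∈ (maximalIdeal O)^i₂ := by
  have hTξp : T' ξ ∈ maximalIdeal O := mem_p_shift i₁ hi1 hTc hB₁
  have hNξp : N' ξ ∈ maximalIdeal O := mem_p_shift i₂ (by omega) hNc hB₂
  have hNξ2 : N' ξ ∉ (maximalIdeal O)^2 := by
    intro h
    apply hB₂2
    have h1 : N' ξ - B₂ ∈ (maximalIdeal O)^2 := Ideal.pow_le_pow_right hi2 hNc
    have h2'' : B₂ = N' ξ - (N' ξ - B₂) := by ring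
    rw [h2'']
    exact Submodule.sub_mem _ h h1
  have hξirr : Irreducible ξ := unif_of_TN h2' T' N' hT' hN' hram' hTξp hNξp hNξ2
  obtain ⟨C, D, hC, hD, hrel⟩ := unif_rel2 h2' hram' hβ' hβ'K hγ' hξirr
  refine ⟨algebraMap O R C + algebraMap O R D * βs, ?_, ?_⟩
  · have hA₁eq : A₁ = 2*C + D * T' ξ := by
      rw [← hT'γ, hrel, T_affine h2' T' N' hT' hN']
    have heq : T (algebraMap O R C + algebraMap O R D * βs) - A₁
        = -(D * (T' ξ - B₁)) := by
      rw [T_affine h2 T N hT hN, hTβs, hA₁eq]; ring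
    rw [heq]
    exact Submodule.neg_mem _ (Ideal.mul_mem_left _ _ hTc)
  · have hA₂eq : A₂ = C^2 + C*D*T' ξ + D^2*N' ξ := by
      rw [← hN'γ, hrel, N_affine h2' T' N' hT' hN']
    have heq : N (algebraMap O R C + algebraMap O R D * βs) - A₂
        = -(C * (D * (T' ξ - B₁))) - D^2 * (N' ξ - B₂) := by
      rw [N_affine h2 T N hT hN, hTβs, hNβs, hA₂eq]; ring
    rw [heq]
    have hmu : C * (D * (T' ξ - B₁)) ∈ (maximalIdeal O)^i₂ := by
      refine Ideal.pow_le_pow_right h21 ?_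
      rw [pow_succ, mul_comm C (D * (T' ξ - B₁))]
      exact Ideal.mul_mem_mul (Ideal.mul_mem_left _ _ hTc) hC
    exact Submodule.sub_mem _ (Submodule.neg_mem _ hmu) (Ideal.mul_mem_left _ _ hNc)
end Mirror

lemma irred_neg {A : Type*} [CommRing A] {x : A} (h : Irreducible x) : Irreducible (-x) :=
  (Associated.irreducible ⟨-1, by simp⟩ h : _)

/-- Let `k₁ ≠ k₂` be ramified quadratic extensions of a dyadic local
field `K` and let `𝔫_j(k₁,k₂,i)` be the cardinality of `S_{i,i}(k₁,k₂)` (for `j = 1`) or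
of `S_{i,i+1}(k₁,k₂)` (for `j = 2`), computed with a choice of Eisenstein polynomial
defining `k₁`.  Then these cardinalities are independent of the choice of Eisenstein
polynomial (here `z² + a₁z + a₂` and `z² + a₁'z + a₂'`, both with a root which is a
uniformizer of `k₁` generating `k₁/K`), and `𝔫_j(k₂,k₁,i) = 𝔫_j(k₁,k₂,i)` for `j = 1,2`
and all `i ≥ 0`, where `𝔫_j(k₂,k₁,i)` is computed with an Eisenstein polynomial
`z² + b₁z + b₂` defining `k₂`. -/
theorem S_card_symmetric_and_well_defined
    (O : Type*) [CommRing O] [IsDomain O] [IsDiscreteValuationRing O]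
    (K : Type*) [Field K] [Algebra O K] [IsFractionRing O K] [CharZero K]
    (m : ℕ) (hm1 : 1 ≤ m)
    (hm : Ideal.span {(2 : O)} = (IsLocalRing.maximalIdeal O) ^ m)
    (p : Ideal O) (hp : p = IsLocalRing.maximalIdeal O)
    (O₁ : Type*) [CommRing O₁] [IsDomain O₁] [IsDiscreteValuationRing O₁]
    (k₁ : Type*) [Field k₁] [Algebra O₁ k₁] [IsFractionRing O₁ k₁]
    [Algebra O O₁] [Algebra K k₁] [Algebra O k₁]
    [IsScalarTower O K k₁] [IsScalarTower O O₁ k₁]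
    (hquad₁ : Module.finrank K k₁ = 2)
    (hram₁ : (IsLocalRing.maximalIdeal O).map (algebraMap O O₁) =
      (IsLocalRing.maximalIdeal O₁) ^ 2)
    (T₁ N₁ : O₁ → O)
    (hT₁ : ∀ η : O₁, algebraMap O K (T₁ η) = Algebra.trace K k₁ (algebraMap O₁ k₁ η))
    (hN₁ : ∀ η : O₁, algebraMap O K (N₁ η) = Algebra.norm K (algebraMap O₁ k₁ η))
    (O₂ : Type*) [CommRing O₂] [IsDomain O₂] [IsDiscreteValuationRing O₂]
    (k₂ : Type*) [Field k₂] [Algebra O₂ k₂] [IsFractionRing O₂ k₂]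
    [Algebra O O₂] [Algebra K k₂] [Algebra O k₂]
    [IsScalarTower O K k₂] [IsScalarTower O O₂ k₂]
    (hquad₂ : Module.finrank K k₂ = 2)
    (hram₂ : (IsLocalRing.maximalIdeal O).map (algebraMap O O₂) =
      (IsLocalRing.maximalIdeal O₂) ^ 2)
    (T₂ N₂ : O₂ → O)
    (hT₂ : ∀ η : O₂, algebraMap O K (T₂ η) = Algebra.trace K k₂ (algebraMap O₂ k₂ η))
    (hN₂ : ∀ η : O₂, algebraMap O K (N₂ η) = Algebra.norm K (algebraMap O₂ k₂ η))
    (a₁ a₂ : O) (ha₁ : a₁ ∈ p) (ha₂ : a₂ ∈ p) (ha₂' : a₂ ∉ p ^ 2)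
    (α : O₁) (hαirr : Irreducible α)
    (hαroot : α ^ 2 + algebraMap O O₁ a₁ * α + algebraMap O O₁ a₂ = 0)
    (hαgen : Algebra.adjoin K {algebraMap O₁ k₁ α} = ⊤)
    (a₁' a₂' : O) (ha₁'' : a₁' ∈ p) (ha₂'' : a₂' ∈ p) (ha₂''' : a₂' ∉ p ^ 2)
    (α' : O₁) (hα'irr : Irreducible α')
    (hα'root : α' ^ 2 + algebraMap O O₁ a₁' * α' + algebraMap O O₁ a₂' = 0)
    (hα'gen : Algebra.adjoin K {algebraMap O₁ k₁ α'} = ⊤)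
    (b₁ b₂ : O) (hb₁ : b₁ ∈ p) (hb₂ : b₂ ∈ p) (hb₂' : b₂ ∉ p ^ 2)
    (β : O₂) (hβirr : Irreducible β)
    (hβroot : β ^ 2 + algebraMap O O₂ b₁ * β + algebraMap O O₂ b₂ = 0)
    (hβgen : Algebra.adjoin K {algebraMap O₂ k₂ β} = ⊤)
    (hdist : ∀ z : k₂, z ^ 2 + algebraMap O k₂ a₁ * z + algebraMap O k₂ a₂ ≠ 0)
    (i : ℕ)
    :
    Nat.card {c : O₂ ⧸ (IsLocalRing.maximalIdeal O₂) ^ (i + i) // ∃ η : O₂,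
        Ideal.Quotient.mk ((IsLocalRing.maximalIdeal O₂) ^ (i + i)) η = c ∧
        T₂ η - a₁ ∈ p ^ (i) ∧ N₂ η - a₂ ∈ p ^ (i)} =
      Nat.card {c : O₂ ⧸ (IsLocalRing.maximalIdeal O₂) ^ (i + i) // ∃ η : O₂,
        Ideal.Quotient.mk ((IsLocalRing.maximalIdeal O₂) ^ (i + i)) η = c ∧
        T₂ η - a₁' ∈ p ^ (i) ∧ N₂ η - a₂' ∈ p ^ (i)} ∧
    Nat.card {c : O₂ ⧸ (IsLocalRing.maximalIdeal O₂) ^ (i + i + 1) // ∃ η : O₂,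
        Ideal.Quotient.mk ((IsLocalRing.maximalIdeal O₂) ^ (i + i + 1)) η = c ∧
        T₂ η - a₁ ∈ p ^ (i) ∧ N₂ η - a₂ ∈ p ^ (i + 1)} =
      Nat.card {c : O₂ ⧸ (IsLocalRing.maximalIdeal O₂) ^ (i + i + 1) // ∃ η : O₂,
        Ideal.Quotient.mk ((IsLocalRing.maximalIdeal O₂) ^ (i + i + 1)) η = c ∧
        T₂ η - a₁' ∈ p ^ (i) ∧ N₂ η - a₂' ∈ p ^ (i + 1)} ∧
    Nat.card {c : O₂ ⧸ (IsLocalRing.maximalIdeal O₂) ^ (i + i) // ∃ η : O₂,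
        Ideal.Quotient.mk ((IsLocalRing.maximalIdeal O₂) ^ (i + i)) η = c ∧
        T₂ η - a₁ ∈ p ^ (i) ∧ N₂ η - a₂ ∈ p ^ (i)} =
      Nat.card {c : O₁ ⧸ (IsLocalRing.maximalIdeal O₁) ^ (i + i) // ∃ η : O₁,
        Ideal.Quotient.mk ((IsLocalRing.maximalIdeal O₁) ^ (i + i)) η = c ∧
        T₁ η - b₁ ∈ p ^ (i) ∧ N₁ η - b₂ ∈ p ^ (i)} ∧
    Nat.card {c : O₂ ⧸ (IsLocalRing.maximalIdeal O₂) ^ (i + i + 1) // ∃ η : O₂,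
        Ideal.Quotient.mk ((IsLocalRing.maximalIdeal O₂) ^ (i + i + 1)) η = c ∧
        T₂ η - a₁ ∈ p ^ (i) ∧ N₂ η - a₂ ∈ p ^ (i + 1)} =
      Nat.card {c : O₁ ⧸ (IsLocalRing.maximalIdeal O₁) ^ (i + i + 1) // ∃ η : O₁,
        Ideal.Quotient.mk ((IsLocalRing.maximalIdeal O₁) ^ (i + i + 1)) η = c ∧
        T₁ η - b₁ ∈ p ^ (i) ∧ N₁ η - b₂ ∈ p ^ (i + 1)} := by
  subst hp
  -- basic range facts
  have hαK : algebraMap O₁ k₁ α ∉ Set.range (algebraMap K k₁) := notinK hquad₁ hαgen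
  have hα'K : algebraMap O₁ k₁ α' ∉ Set.range (algebraMap K k₁) := notinK hquad₁ hα'gen
  have hβK : algebraMap O₂ k₂ β ∉ Set.range (algebraMap K k₂) := notinK hquad₂ hβgen
  -- data of -α and -β
  have hnegαroot : (-α) ^ 2 + algebraMap O O₁ (-a₁) * (-α) + algebraMap O O₁ a₂ = 0 := by
    rw [map_neg]; linear_combination hαroot
  have hdα := rootData hquad₁ T₁ N₁ hT₁ hN₁ (notinK_neg hαK) hnegαroot
  have hdαT : T₁ (-α) = a₁ := by rw [hdα.1, neg_neg]
  have hdαN : N₁ (-α) = a₂ := hdα.2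
  have hnegβroot : (-β) ^ 2 + algebraMap O O₂ (-b₁) * (-β) + algebraMap O O₂ b₂ = 0 := by
    rw [map_neg]; linear_combination hβroot
  have hdβ := rootData hquad₂ T₂ N₂ hT₂ hN₂ (notinK_neg hβK) hnegβroot
  have hdβT : T₂ (-β) = b₁ := by rw [hdβ.1, neg_neg]
  have hdβN : N₂ (-β) = b₂ := hdβ.2
  have hnegαirr : Irreducible (-α) := irred_neg hαirr
  have hnegβirr : Irreducible (-β) := irred_neg hβirr
  -- goals 1 and 2 : change of Eisenstein polynomial, W lemma
  obtain ⟨c, d, hc, hd, hrel⟩ := unif_rel hquad₁ hram₁ hα'irr hα'K hαirr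
  have hd0 : d ≠ 0 := hd.ne_zero
  obtain ⟨hr₁, hr₂⟩ := relcoef hquad₁ hα'K hd0 hrel hαroot hα'root
  obtain ⟨du, hdu⟩ := hd
  have hde : d * ((du⁻¹ : Oˣ) : O) = 1 := by rw [← hdu]; exact Units.mul_inv _
  refine ⟨cardW hquad₂ T₂ N₂ hT₂ hN₂ i i (i+i) (by omega) hc hde hr₁ hr₂,
    cardW hquad₂ T₂ N₂ hT₂ hN₂ i (i+1) (i+i+1) (by omega) hc hde hr₁ hr₂, ?_, ?_⟩
  -- goal 3 : symmetry for (i, i)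
  · rcases Nat.eq_zero_or_pos i with rfl | hi
    · exact (card0 T₂ N₂ a₁ a₂).trans (card0 T₁ N₁ b₁ b₂).symm
    · by_cases hex : ∃ η₀ : O₂, Irreducible η₀ ∧
          T₂ η₀ - a₁ ∈ (maximalIdeal O) ^ i ∧ N₂ η₀ - a₂ ∈ (maximalIdeal O) ^ i
      · obtain ⟨η₀, hη₀irr, h₀T, h₀N⟩ := hex
        have step1 := cardCore hquad₂ T₂ N₂ hT₂ hN₂ hram₂ hβirr hβK
          hquad₁ T₁ N₁ hT₁ hN₁ hram₁ hαirr hαK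
          i i (i+i) hi le_rfl (by omega) ha₁ ha₂ hnegαirr hdαT hdαN hη₀irr h₀T h₀N
        have hnegη₀irr : Irreducible (-η₀) := irred_neg hη₀irr
        obtain ⟨c₀, d₀, hc₀, hd₀, hrel₀⟩ := unif_rel hquad₂ hram₂ hβirr hβK hnegη₀irr
        have hd₀0 : d₀ ≠ 0 := hd₀.ne_zero
        have hquadη₀ := R_quadId hquad₂ T₂ N₂ hT₂ hN₂ η₀
        have hγroot : (-η₀) ^ 2 + algebraMap O O₂ (T₂ η₀) * (-η₀)
            + algebraMap O O₂ (N₂ η₀) = 0 := by linear_combination hquadη₀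
        obtain ⟨hs₁, hs₂⟩ := relcoef hquad₂ hβK hd₀0 hrel₀ hγroot hβroot
        obtain ⟨d₀u, hd₀u⟩ := hd₀
        have hd₀e : d₀ * ((d₀u⁻¹ : Oˣ) : O) = 1 := by rw [← hd₀u]; exact Units.mul_inv _
        exact step1.trans
          (cardW hquad₁ T₁ N₁ hT₁ hN₁ i i (i+i) (by omega) hc₀ hd₀e hs₁ hs₂)
      · have hi2 : 2 ≤ i := by
          by_contra h
          have hieq : i = 1 := by omega
          subst hieq
          refine hex ⟨β, hβirr, ?_, ?_⟩
          · rw [hdβT] at *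
            rw [pow_one]
            have : T₂ β = -b₁ := by
              have := rootData hquad₂ T₂ N₂ hT₂ hN₂ hβK hβroot
              exact this.1
            rw [this]
            exact Submodule.sub_mem _ (Submodule.neg_mem _ hb₁) ha₁
          · have : N₂ β = b₂ := (rootData hquad₂ T₂ N₂ hT₂ hN₂ hβK hβroot).2
            rw [this, pow_one]
            exact Submodule.sub_mem _ hb₂ ha₂
        haveI e1 : IsEmpty {c : O₂ ⧸ (IsLocalRing.maximalIdeal O₂) ^ (i + i) // ∃ η : O₂,
            Ideal.Quotient.mk ((IsLocalRing.maximalIdeal O₂) ^ (i + i)) η = c ∧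
            T₂ η - a₁ ∈ (maximalIdeal O) ^ (i) ∧ N₂ η - a₂ ∈ (maximalIdeal O) ^ (i)} := by
          refine ⟨fun x => hex ?_⟩
          obtain ⟨η, hmk, hTc, hNc⟩ := x.2
          refine ⟨η, ?_, hTc, hNc⟩
          refine unif_of_TN hquad₂ T₂ N₂ hT₂ hN₂ hram₂
            (mem_p_shift i hi hTc ha₁) (mem_p_shift i hi hNc ha₂) ?_
          intro hsq
          apply ha₂'
          have h1 : N₂ η - a₂ ∈ (maximalIdeal O) ^ 2 := Ideal.pow_le_pow_right hi2 hNc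
          have h2'' : a₂ = N₂ η - (N₂ η - a₂) := by ring
          rw [h2'']
          exact Submodule.sub_mem _ hsq h1
        haveI e2 : IsEmpty {c : O₁ ⧸ (IsLocalRing.maximalIdeal O₁) ^ (i + i) // ∃ η : O₁,
            Ideal.Quotient.mk ((IsLocalRing.maximalIdeal O₁) ^ (i + i)) η = c ∧
            T₁ η - b₁ ∈ (maximalIdeal O) ^ (i) ∧ N₁ η - b₂ ∈ (maximalIdeal O) ^ (i)} := by
          refine ⟨fun x => hex ?_⟩
          obtain ⟨ξ, hmk, hTc, hNc⟩ := x.2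
          obtain ⟨η, hT', hN'⟩ := mirror hquad₂ T₂ N₂ hT₂ hN₂
            hquad₁ T₁ N₁ hT₁ hN₁ hram₁ hαirr hαK i i hi hi2 (by omega)
            hb₁ hb₂ hb₂' hdβT hdβN hnegαirr hdαT hdαN hTc hNc
          refine ⟨η, ?_, hT', hN'⟩
          refine unif_of_TN hquad₂ T₂ N₂ hT₂ hN₂ hram₂
            (mem_p_shift i hi hT' ha₁) (mem_p_shift i hi hN' ha₂) ?_
          intro hsq
          apply ha₂'
          have h1 : N₂ η - a₂ ∈ (maximalIdeal O) ^ 2 := Ideal.pow_le_pow_right hi2 hN'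
          have h2'' : a₂ = N₂ η - (N₂ η - a₂) := by ring
          rw [h2'']
          exact Submodule.sub_mem _ hsq h1
        rw [Nat.card_of_isEmpty, Nat.card_of_isEmpty]
  -- goal 4 : symmetry for (i, i+1)
  · rcases Nat.eq_zero_or_pos i with rfl | hi
    · exact (card01 hquad₂ T₂ N₂ hT₂ hN₂ a₁ a₂ ha₂).trans
        (card01 hquad₁ T₁ N₁ hT₁ hN₁ b₁ b₂ hb₂).symm
    · by_cases hex : ∃ η₀ : O₂, Irreducible η₀ ∧
          T₂ η₀ - a₁ ∈ (maximalIdeal O) ^ i ∧ N₂ η₀ - a₂ ∈ (maximalIdeal O) ^ (i+1)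
      · obtain ⟨η₀, hη₀irr, h₀T, h₀N⟩ := hex
        have step1 := cardCore hquad₂ T₂ N₂ hT₂ hN₂ hram₂ hβirr hβK
          hquad₁ T₁ N₁ hT₁ hN₁ hram₁ hαirr hαK
          i (i+1) (i+i+1) hi (by omega) (by omega) ha₁ ha₂ hnegαirr hdαT hdαN hη₀irr h₀T h₀N
        have hnegη₀irr : Irreducible (-η₀) := irred_neg hη₀irr
        obtain ⟨c₀, d₀, hc₀, hd₀, hrel₀⟩ := unif_rel hquad₂ hram₂ hβirr hβK hnegη₀irr
        have hd₀0 : d₀ ≠ 0 := hd₀.ne_zero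
        have hquadη₀ := R_quadId hquad₂ T₂ N₂ hT₂ hN₂ η₀
        have hγroot : (-η₀) ^ 2 + algebraMap O O₂ (T₂ η₀) * (-η₀)
            + algebraMap O O₂ (N₂ η₀) = 0 := by linear_combination hquadη₀
        obtain ⟨hs₁, hs₂⟩ := relcoef hquad₂ hβK hd₀0 hrel₀ hγroot hβroot
        obtain ⟨d₀u, hd₀u⟩ := hd₀
        have hd₀e : d₀ * ((d₀u⁻¹ : Oˣ) : O) = 1 := by rw [← hd₀u]; exact Units.mul_inv _
        exact step1.trans
          (cardW hquad₁ T₁ N₁ hT₁ hN₁ i (i+1) (i+i+1) (by omega) hc₀ hd₀e hs₁ hs₂)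
      · haveI e1 : IsEmpty {c : O₂ ⧸ (IsLocalRing.maximalIdeal O₂) ^ (i + i + 1) // ∃ η : O₂,
            Ideal.Quotient.mk ((IsLocalRing.maximalIdeal O₂) ^ (i + i + 1)) η = c ∧
            T₂ η - a₁ ∈ (maximalIdeal O) ^ (i) ∧ N₂ η - a₂ ∈ (maximalIdeal O) ^ (i+1)} := by
          refine ⟨fun x => hex ?_⟩
          obtain ⟨η, hmk, hTc, hNc⟩ := x.2
          refine ⟨η, ?_, hTc, hNc⟩
          refine unif_of_TN hquad₂ T₂ N₂ hT₂ hN₂ hram₂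
            (mem_p_shift i hi hTc ha₁) (mem_p_shift (i+1) (by omega) hNc ha₂) ?_
          intro hsq
          apply ha₂'
          have h1 : N₂ η - a₂ ∈ (maximalIdeal O) ^ 2 :=
            Ideal.pow_le_pow_right (by omega) hNc
          have h2'' : a₂ = N₂ η - (N₂ η - a₂) := by ring
          rw [h2'']
          exact Submodule.sub_mem _ hsq h1
        haveI e2 : IsEmpty {c : O₁ ⧸ (IsLocalRing.maximalIdeal O₁) ^ (i + i + 1) // ∃ η : O₁,
            Ideal.Quotient.mk ((IsLocalRing.maximalIdeal O₁) ^ (i + i + 1)) η = c ∧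
            T₁ η - b₁ ∈ (maximalIdeal O) ^ (i) ∧ N₁ η - b₂ ∈ (maximalIdeal O) ^ (i+1)} := by
          refine ⟨fun x => hex ?_⟩
          obtain ⟨ξ, hmk, hTc, hNc⟩ := x.2
          obtain ⟨η, hT', hN'⟩ := mirror hquad₂ T₂ N₂ hT₂ hN₂
            hquad₁ T₁ N₁ hT₁ hN₁ hram₁ hαirr hαK i (i+1) hi (by omega) (by omega)
            hb₁ hb₂ hb₂' hdβT hdβN hnegαirr hdαT hdαN hTc hNc
          refine ⟨η, ?_, hT', hN'⟩
          refine unif_of_TN hquad₂ T₂ N₂ hT₂ hN₂ hram₂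
            (mem_p_shift i hi hT' ha₁) (mem_p_shift (i+1) (by omega) hN' ha₂) ?_
          intro hsq
          apply ha₂'
          have h1 : N₂ η - a₂ ∈ (maximalIdeal O) ^ 2 :=
            Ideal.pow_le_pow_right (by omega) hN'
          have h2'' : a₂ = N₂ η - (N₂ η - a₂) := by ring
          rw [h2'']
          exact Submodule.sub_mem _ hsq h1
        rw [Nat.card_of_isEmpty, Nat.card_of_isEmpty]
end
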